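/- arXiv:1208.3395 — 7 statements merged into one kernel-verified Lean document; each statement's English description precedes it below -/
import Mathlib

section
/- Let G be a finite simple graph, let H be a set of vertices of G, let c be a (1,1,0)-coloring of the induced subgraph G−H, and let v ∈ H. If either (i) v has exactly three neighbors in G−H, at least two of which are properly colored, or (ii) v has exactly four neighbors in G−H, all of which are properly colored, then c can be extended (keeping the colors of all vertices of G−H unchanged and assigning a color to v) to a (1,1,0)-coloring of the induced subgraph G−(H∖{v}). -/
/-- A coloring `f` (with colors `0,1,2` standing for `1,2,3`) of the subgraph of `G`
induced on the set `s` is a partial coloring with deficiency vector `d` if every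
vertex of `s` colored `i` has at most `d i` neighbors in `s` of the same color.
With `d = ![1,1,0]` this is a `(1,1,0)`-coloring of the induced subgraph `G[s]`. -/
def IsPartialCol {V : Type*} (G : SimpleGraph V) (s : Set V) (d : Fin 3 → ℕ)
    (f : V → Fin 3) : Prop :=
  ∀ v ∈ s, {u | u ∈ s ∧ G.Adj v u ∧ f u = f v}.ncard ≤ d (f v)

/-- A vertex `v` is properly colored (relative to the colored set `s`) if no colored
neighbor of `v` has the same color as `v`. -/
def ProperlyCol {V : Type*} (G : SimpleGraph V) (s : Set V) (f : V → Fin 3)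
    (v : V) : Prop :=
  ∀ u ∈ s, G.Adj v u → f u ≠ f v

/-!
Give `v` a color `i` such that every neighbour of `v` colored `i` is properly colored and `v`
has at most `d i` neighbours of color `i`: each such neighbour then gains `v` as its only
neighbour of its own color. With four properly colored neighbours such an `i` exists by
pigeonhole, as `4 < 2 + 2 + 1`. With three neighbours, either some color is missing among them,
or each color occurs exactly once and `v` may take the color of whichever of the two properly
colored neighbours is not colored `2`, the color with deficiency `0`.
-/

section

variable {V : Type*} {G : SimpleGraph V}

theorem Finset.exists_card_filter_le_of_card_lt_sum {ι : Type*} [Fintype ι] [DecidableEq ι]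
    (N : Finset V) (f : V → ι) (d : ι → ℕ) (hN : N.card < ∑ i, (d i + 1)) :
    ∃ i, (N.filter (f · = i)).card ≤ d i := by
  by_contra! h
  have hsum : N.card = ∑ i, (N.filter (f · = i)).card :=
    Finset.card_eq_sum_card_fiberwise fun u _ => Finset.mem_univ (f u)
  have : ∑ i, (d i + 1) ≤ ∑ i, (N.filter (f · = i)).card :=
    Finset.sum_le_sum fun i _ => h i
  omega

theorem Finset.exists_color_of_card_eq_three (N : Finset V) (f : V → Fin 3) (P : V → Prop)
    (hN : N.card = 3) {a b : V} (hab : a ≠ b) (ha : a ∈ N) (hb : b ∈ N) (hPa : P a) (hPb : P b) :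
    ∃ i, (∀ u ∈ N, f u = i → P u) ∧ (N.filter (f · = i)).card ≤ ![1, 1, 0] i := by
  by_cases hmiss : ∃ i, N.filter (f · = i) = ∅
  · obtain ⟨i, hi⟩ := hmiss
    refine ⟨i, fun u hu hfu => ?_, by simp [hi]⟩
    have : u ∈ N.filter (f · = i) := Finset.mem_filter.2 ⟨hu, hfu⟩
    simp [hi] at this
  -- every color occurs, hence exactly once among the three neighbours
  push Not at hmiss
  have hone : ∀ i, (N.filter (f · = i)).card = 1 := by
    have hsum : N.card = ∑ i, (N.filter (f · = i)).card :=
      Finset.card_eq_sum_card_fiberwise fun u _ => Finset.mem_univ (f u)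
    have hpos : ∀ i, 0 < (N.filter (f · = i)).card := fun i =>
      Finset.card_pos.2 (hmiss i)
    rw [Fin.sum_univ_three] at hsum
    have := hpos 0
    have := hpos 1
    have := hpos 2
    intro i
    fin_cases i <;> simp only [Fin.zero_eta, Fin.mk_one, Fin.reduceFinMk] <;> omega
  have hfab : f a ≠ f b := fun h => by
    have : 1 < (N.filter (f · = f a)).card := Finset.one_lt_card.2
      ⟨a, Finset.mem_filter.2 ⟨ha, rfl⟩, b, Finset.mem_filter.2 ⟨hb, h.symm⟩, hab⟩
    rw [hone] at this
    omega
  obtain ⟨x, hx, hPx, hfx⟩ : ∃ x ∈ N, P x ∧ f x ≠ 2 := by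
    by_cases hfa : f a = 2
    · exact ⟨b, hb, hPb, fun h => hfab (hfa.trans h.symm)⟩
    · exact ⟨a, ha, hPa, hfa⟩
  obtain ⟨y, hy⟩ := Finset.card_eq_one.1 (hone (f x))
  have hxy : x = y := by
    simpa [hy] using (Finset.mem_filter.2 ⟨hx, rfl⟩ : x ∈ N.filter (f · = f x))
  refine ⟨f x, fun u hu hfu => ?_, ?_⟩
  · have : u ∈ N.filter (f · = f x) := Finset.mem_filter.2 ⟨hu, hfu⟩
    rw [hy, Finset.mem_singleton] at this
    rwa [this, ← hxy]
  · have hd : ∀ i : Fin 3, i ≠ 2 → 1 ≤ ![1, 1, 0] i := by decide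
    exact (hone (f x)).trans_le (hd _ hfx)

theorem IsPartialCol.update [DecidableEq V] {s : Set V} {d : Fin 3 → ℕ} {c : V → Fin 3}
    (hc : IsPartialCol G s d c) {v : V} (hv : v ∉ s) {i : Fin 3}
    (hfin : {u | u ∈ s ∧ G.Adj v u}.Finite)
    (hprop : ∀ u ∈ s, G.Adj v u → c u = i → ProperlyCol G s c u)
    (hcard : {u | u ∈ s ∧ G.Adj v u ∧ c u = i}.ncard ≤ d i) :
    IsPartialCol G (s ∪ {v}) d (Function.update c v i) := by
  have hupd : ∀ w ∈ s, Function.update c v i w = c w := fun w hw =>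
    Function.update_of_ne (ne_of_mem_of_not_mem hw hv) _ _
  rintro u (hu | rfl)
  · rw [hupd u hu]
    by_cases huv : G.Adj u v ∧ c u = i
    · -- `u` is properly colored, so `v` is its only neighbour of its color
      have hsub : {w | w ∈ s ∪ {v} ∧ G.Adj u w ∧ Function.update c v i w = c u} ⊆ {v} := by
        rintro w ⟨hw | hw, hadj, hcw⟩
        · exact absurd (by rwa [hupd w hw] at hcw) (hprop u hu huv.1.symm huv.2 w hw hadj)
        · exact hw
      have hpos : 0 < {u | u ∈ s ∧ G.Adj v u ∧ c u = i}.ncard :=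
        (Set.ncard_pos (hfin.subset fun w hw => ⟨hw.1, hw.2.1⟩)).2 ⟨u, hu, huv.1.symm, huv.2⟩
      calc _ ≤ ({v} : Set V).ncard := Set.ncard_le_ncard hsub
        _ = 1 := Set.ncard_singleton v
        _ ≤ d (c u) := huv.2 ▸ hpos.trans_le hcard
    · have hsame : {w | w ∈ s ∪ {v} ∧ G.Adj u w ∧ Function.update c v i w = c u} =
          {w | w ∈ s ∧ G.Adj u w ∧ c w = c u} := by
        ext w
        constructor
        · rintro ⟨hw | rfl, hadj, hcw⟩
          · exact ⟨hw, hadj, by rwa [hupd w hw] at hcw⟩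
          · exact absurd ⟨hadj, by simpa using hcw.symm⟩ huv
        · rintro ⟨hw, hadj, hcw⟩
          exact ⟨Or.inl hw, hadj, by rwa [hupd w hw]⟩
      rw [hsame]
      exact hc u hu
  · have hsame : {w | w ∈ s ∪ {u} ∧ G.Adj u w ∧ Function.update c u i w = Function.update c u i u}
        = {w | w ∈ s ∧ G.Adj u w ∧ c w = i} := by
      ext w
      constructor
      · rintro ⟨hw | rfl, hadj, hcw⟩
        · exact ⟨hw, hadj, by rwa [hupd w hw, Function.update_self] at hcw⟩
        · exact absurd hadj (G.loopless.irrefl w)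
      · rintro ⟨hw, hadj, hcw⟩
        exact ⟨Or.inl hw, hadj, by rwa [hupd w hw, Function.update_self]⟩
    rw [hsame, Function.update_self]
    exact hcard

end

theorem stmt1_general {V : Type*} (G : SimpleGraph V) (H : Set V)
    (c : V → Fin 3) (hc : IsPartialCol G Hᶜ ![1, 1, 0] c)
    (v : V) (hv : v ∈ H)
    (hcase :
      ({u | u ∈ Hᶜ ∧ G.Adj v u}.ncard = 3 ∧
        ∃ a b, a ≠ b ∧ a ∈ Hᶜ ∧ G.Adj v a ∧ b ∈ Hᶜ ∧ G.Adj v b ∧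
          ProperlyCol G Hᶜ c a ∧ ProperlyCol G Hᶜ c b) ∨
      ({u | u ∈ Hᶜ ∧ G.Adj v u}.ncard = 4 ∧
        ∀ u ∈ Hᶜ, G.Adj v u → ProperlyCol G Hᶜ c u)) :
    ∃ c' : V → Fin 3,
      IsPartialCol G (Hᶜ ∪ {v}) ![1, 1, 0] c' ∧ ∀ u ∈ Hᶜ, c' u = c u := by
  classical
  have hvH : v ∉ Hᶜ := fun h => h hv
  have hfin : {u | u ∈ Hᶜ ∧ G.Adj v u}.Finite :=
    Set.finite_of_ncard_ne_zero (by rcases hcase with h | h <;> omega)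
  set N := hfin.toFinset
  have hfiber : ∀ i, {u | u ∈ Hᶜ ∧ G.Adj v u ∧ c u = i}.ncard = (N.filter (c · = i)).card := by
    intro i
    rw [← Set.ncard_coe_finset]
    congr 1
    ext u
    simp [N, and_assoc]
  have hmem : ∀ {u}, u ∈ N ↔ u ∈ Hᶜ ∧ G.Adj v u := by simp [N]
  obtain ⟨i, hprop, hcard⟩ : ∃ i, (∀ u ∈ N, c u = i → ProperlyCol G Hᶜ c u) ∧
      (N.filter (c · = i)).card ≤ ![1, 1, 0] i := by
    rcases hcase with ⟨h3, a, b, hab, ha, hva, hb, hvb, hPa, hPb⟩ | ⟨h4, hall⟩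
    · exact N.exists_color_of_card_eq_three c _ (by rw [← Set.ncard_eq_toFinset_card _ hfin, h3])
        hab (hmem.2 ⟨ha, hva⟩) (hmem.2 ⟨hb, hvb⟩) hPa hPb
    · obtain ⟨i, hi⟩ := N.exists_card_filter_le_of_card_lt_sum c ![1, 1, 0]
        (by rw [← Set.ncard_eq_toFinset_card _ hfin, h4]; decide)
      exact ⟨i, fun u hu _ => hall u (hmem.1 hu).1 (hmem.1 hu).2, hi⟩
  refine ⟨Function.update c v i, hc.update hvH hfin (fun u hu hvu => hprop u (hmem.2 ⟨hu, hvu⟩))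
    (by rw [hfiber]; exact hcard), fun u hu => Function.update_of_ne (ne_of_mem_of_not_mem hu hvH) _ _⟩

/-- Let `H` be a set of vertices of a finite simple graph `G`, let `c` be a
`(1,1,0)`-coloring of `G − H`, and let `v ∈ H`.  If either (i) `v` has exactly three
neighbors in `G − H`, at least two of which are properly colored, or (ii) `v` has
exactly four neighbors in `G − H`, all properly colored, then `c` extends (keeping all
colors on `G − H` and coloring `v`) to a `(1,1,0)`-coloring of `G − (H \ {v})`. -/
theorem stmt1 {V : Type*} [Fintype V] (G : SimpleGraph V) (H : Set V)
    (c : V → Fin 3) (hc : IsPartialCol G Hᶜ ![1, 1, 0] c)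
    (v : V) (hv : v ∈ H)
    (hcase :
      ({u | u ∈ Hᶜ ∧ G.Adj v u}.ncard = 3 ∧
        ∃ a b, a ≠ b ∧ a ∈ Hᶜ ∧ G.Adj v a ∧ b ∈ Hᶜ ∧ G.Adj v b ∧
          ProperlyCol G Hᶜ c a ∧ ProperlyCol G Hᶜ c b) ∨
      ({u | u ∈ Hᶜ ∧ G.Adj v u}.ncard = 4 ∧
        ∀ u ∈ Hᶜ, G.Adj v u → ProperlyCol G Hᶜ c u)) :
    ∃ c' : V → Fin 3,
      IsPartialCol G (Hᶜ ∪ {v}) ![1, 1, 0] c' ∧ ∀ u ∈ Hᶜ, c' u = c u :=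
  stmt1_general G H c hc v hv hcase
end

section
/- G contains no triangle whose vertices u, v, w satisfy d(u) = d(v) = 3 and d(w) ≤ 4. -/
/-- A graph is `(c 0, c 1, c 2)`-colorable if its vertices can be colored with
colors `0, 1, 2` so that every vertex colored `i` has at most `c i` neighbors of its
own color.  With `c = ![1,1,0]` this is a `(1,1,0)`-coloring. -/
def Colorable3 {α : Type*} (G : SimpleGraph α) (c : Fin 3 → ℕ) : Prop :=
  ∃ f : α → Fin 3, ∀ v, {u | G.Adj v u ∧ f u = f v}.ncard ≤ c (f v)

/-- `G` contains no cycle of length 4 and no cycle of length 5. -/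
def NoC45 {V : Type*} (G : SimpleGraph V) : Prop :=
  ∀ (v : V) (w : G.Walk v v), w.IsCycle → w.length ≠ 4 ∧ w.length ≠ 5

/-- `G` is a minimal counterexample: `G` is not `(c 0, c 1, c 2)`-colorable, but every
proper subgraph of `G` is. -/
def MinCE {V : Type*} (G : SimpleGraph V) (c : Fin 3 → ℕ) : Prop :=
  ¬ Colorable3 G c ∧ ∀ H : G.Subgraph, H ≠ ⊤ → Colorable3 H.coe c

/-- `u`, `v`, `w` form a triangle of `G`. -/
def TriOn {V : Type*} (G : SimpleGraph V) (u v w : V) : Prop :=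
  G.Adj u v ∧ G.Adj v w ∧ G.Adj u w

open SimpleGraph Walk in
lemma noC4 {V : Type*} {G : SimpleGraph V} (hG : NoC45 G) {a b c d : V}
    (h1 : G.Adj a b) (h2 : G.Adj b c) (h3 : G.Adj c d) (h4 : G.Adj d a)
    (n1 : a ≠ c) (n2 : b ≠ d) : False := by
  have hcyc : (Walk.cons h1 (Walk.cons h2 (Walk.cons h3 (Walk.cons h4 Walk.nil)))).IsCycle := by
    have := h1.ne; have := h2.ne; have := h3.ne; have := h4.ne
    simp_all [Walk.isCycle_def, Walk.isTrail_def, Sym2.eq_iff, ne_comm]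
  exact (hG a _ hcyc).1 rfl

open SimpleGraph Walk in
lemma noC5 {V : Type*} {G : SimpleGraph V} (hG : NoC45 G) {a b c d e : V}
    (h1 : G.Adj a b) (h2 : G.Adj b c) (h3 : G.Adj c d) (h4 : G.Adj d e) (h5 : G.Adj e a)
    (n1 : a ≠ c) (n2 : a ≠ d) (n3 : b ≠ d) (n4 : b ≠ e) (n5 : c ≠ e) : False := by
  have hcyc : (Walk.cons h1 (Walk.cons h2 (Walk.cons h3 (Walk.cons h4
      (Walk.cons h5 Walk.nil))))).IsCycle := by
    have := h1.ne; have := h2.ne; have := h3.ne; have := h4.ne; have := h5.ne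
    simp_all [Walk.isCycle_def, Walk.isTrail_def, Sym2.eq_iff, ne_comm]
  exact (hG a _ hcyc).2 rfl

open Finset in
lemma third_nbr {V : Type*} [Fintype V] (G : SimpleGraph V) [DecidableRel G.Adj] {x p q : V}
    (hd : G.degree x = 3) (hp : G.Adj x p) (hq : G.Adj x q) (hpq : p ≠ q) :
    ∃ r, G.Adj x r ∧ r ≠ p ∧ r ≠ q ∧ ∀ y, G.Adj x y → y = p ∨ y = q ∨ y = r := by
  classical
  set nf := G.neighborFinset x with hnf
  have hcard : nf.card = 3 := by rwa [hnf, G.card_neighborFinset_eq_degree]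
  have hnsub : ¬ nf ⊆ {p, q} := by
    intro h
    have := Finset.card_le_card h
    have : ({p, q} : Finset V).card ≤ 2 := card_insert_le _ _ |>.trans (by simp)
    omega
  obtain ⟨r, hrmem, hrn⟩ := Finset.not_subset.mp hnsub
  simp only [mem_insert, mem_singleton, not_or] at hrn
  refine ⟨r, by rwa [← SimpleGraph.mem_neighborFinset], hrn.1, hrn.2, ?_⟩
  have hsub : ({p, q, r} : Finset V) ⊆ nf := by
    intro y hy
    simp only [mem_insert, mem_singleton] at hy
    rcases hy with rfl | rfl | rfl
    · rwa [SimpleGraph.mem_neighborFinset]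
    · rwa [SimpleGraph.mem_neighborFinset]
    · exact hrmem
  have h3 : ({p, q, r} : Finset V).card = 3 := by
    rw [card_insert_of_notMem (by simp [hpq, Ne.symm hrn.1]),
      card_insert_of_notMem (by simp [Ne.symm hrn.2]), card_singleton]
  have heq : ({p, q, r} : Finset V) = nf := Finset.eq_of_subset_of_card_le hsub (by omega)
  intro y hy
  have : y ∈ nf := by rwa [SimpleGraph.mem_neighborFinset]
  rw [← heq] at this
  simpa using this

set_option synthInstance.maxSize 40000 in
set_option synthInstance.maxHeartbeats 4000000 in
set_option maxHeartbeats 4000000 in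
lemma key110 : ∀ (a b c : Fin 3) (ta tb tc : Bool),
    (a = 2 → ta = false) → (b = 2 → tb = false) → (c = 2 → tc = false) →
    (∃ cu cv : Fin 3,
      (¬(a = cu ∧ b = cu) ∧ ¬(a = cu ∧ cv = cu) ∧ ¬(b = cu ∧ cv = cu) ∧
        (cu = 2 → a ≠ cu ∧ b ≠ cu ∧ cv ≠ cu)) ∧
      (¬(a = cv ∧ c = cv) ∧ ¬(a = cv ∧ cu = cv) ∧ ¬(c = cv ∧ cu = cv) ∧
        (cv = 2 → a ≠ cv ∧ c ≠ cv ∧ cu ≠ cv)) ∧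
      (¬(ta = true ∧ cu = a) ∧ ¬(ta = true ∧ cv = a) ∧ ¬(cu = a ∧ cv = a) ∧
        (a = 2 → cu ≠ a ∧ cv ≠ a)) ∧
      (¬(tb = true ∧ cu = b) ∧ (b = 2 → cu ≠ b)) ∧
      (¬(tc = true ∧ cv = c) ∧ (c = 2 → cv ≠ c)))
    ∨ (ta = true ∧ tb = true ∧ tc = true ∧ a ≠ 2 ∧ b ≠ a ∧ b ≠ 2 ∧ c = b) := by
  decide

lemma colorable_check {V : Type*} (G : SimpleGraph V) (g : V → Fin 3)
    (h : ∀ x, (g x = 2 → {y | G.Adj x y ∧ g y = g x} = ∅) ∧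
      ({y | G.Adj x y ∧ g y = g x} : Set V).Subsingleton) :
    Colorable3 G ![1, 1, 0] := by
  refine ⟨g, fun x => ?_⟩
  by_cases h2 : g x = 2
  · rw [(h x).1 h2, h2]
    simp
  · have hle : {y | G.Adj x y ∧ g y = g x}.ncard ≤ 1 := by
      rcases (h x).2.eq_empty_or_singleton with he | ⟨a, he⟩
      · rw [he]; simp
      · rw [he]; simp
    have : ![1, 1, 0] (g x) = 1 := by
      have : ∀ i : Fin 3, i ≠ 2 → ![1, 1, 0] i = 1 := by decide
      exact this _ h2
    omega
/-- `G` (a minimal non-`(1,1,0)`-colorable graph without 4- and 5-cycles) contains no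
triangle `u v w` with `d(u) = d(v) = 3` and `d(w) ≤ 4`. -/
theorem stmt2 {V : Type*} [Fintype V] (G : SimpleGraph V) [DecidableRel G.Adj]
    (hG : NoC45 G) (hmin : MinCE G ![1, 1, 0]) :
    ¬ ∃ u v w : V, TriOn G u v w ∧
      G.degree u = 3 ∧ G.degree v = 3 ∧ G.degree w ≤ 4 := by
  classical
  rintro ⟨u, v, w, ⟨huv, hvw, huw⟩, hdu, hdv, hdw⟩
  obtain ⟨u', hu'adj, hu'v, hu'w, hAu⟩ := third_nbr G hdu huv huw hvw.ne
  obtain ⟨v', hv'adj, hv'u, hv'w, hAv⟩ := third_nbr G hdv huv.symm hvw huw.ne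
  have hu'u : u' ≠ u := fun h => G.irrefl (h ▸ hu'adj)
  have hv'v : v' ≠ v := fun h => G.irrefl (h ▸ hv'adj)
  have hu'v' : u' ≠ v' := by
    intro h
    exact noC4 hG hu'adj (h ▸ hv'adj.symm) hvw huw.symm huv.ne hu'w
  have hnu'w : ¬ G.Adj u' w := fun h => noC4 hG hu'adj h hvw.symm huv.symm huw.ne hu'v
  have hnv'w : ¬ G.Adj v' w := fun h => noC4 hG hv'adj h huw.symm huv hvw.ne hv'u
  have hnu'v' : ¬ G.Adj u' v' := fun h =>
    noC5 hG hu'adj h hv'adj.symm hvw huw.symm (Ne.symm hv'u) huv.ne hu'v hu'w hv'w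
  have hnu'v : ¬ G.Adj u' v := by
    intro h
    rcases hAv u' h.symm with h' | h' | h'
    · exact hu'u h'
    · exact hu'w h'
    · exact hu'v' h'
  have hnv'u : ¬ G.Adj v' u := by
    intro h
    rcases hAu v' h.symm with h' | h' | h'
    · exact hv'v h'
    · exact hv'w h'
    · exact hu'v' h'.symm
  -- the other neighbors of w
  set W' : Finset V := G.neighborFinset w \ {u, v} with hW'def
  have hW'mem : ∀ y ∈ W', G.Adj w y ∧ y ≠ u ∧ y ≠ v := by
    intro y hy
    simp only [hW'def, Finset.mem_sdiff, SimpleGraph.mem_neighborFinset, Finset.mem_insert,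
      Finset.mem_singleton, not_or] at hy
    exact ⟨hy.1, hy.2.1, hy.2.2⟩
  have hAw : ∀ y, G.Adj w y → y = u ∨ y = v ∨ y ∈ W' := by
    intro y hy
    by_cases h1 : y = u
    · exact Or.inl h1
    by_cases h2 : y = v
    · exact Or.inr (Or.inl h2)
    refine Or.inr (Or.inr ?_)
    simp only [hW'def, Finset.mem_sdiff, SimpleGraph.mem_neighborFinset, Finset.mem_insert,
      Finset.mem_singleton, not_or]
    exact ⟨hy, h1, h2⟩
  have hW2 : W'.card ≤ 2 := by
    have hsub : ({u, v} : Finset V) ⊆ G.neighborFinset w := by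
      intro y hy
      simp only [Finset.mem_insert, Finset.mem_singleton] at hy
      rcases hy with rfl | rfl
      · exact (SimpleGraph.mem_neighborFinset _ _ _).mpr huw.symm
      · exact (SimpleGraph.mem_neighborFinset _ _ _).mpr hvw.symm
    have hc2 : ({u, v} : Finset V).card = 2 := by
      rw [Finset.card_insert_of_notMem (by simp [huv.ne]), Finset.card_singleton]
    have := Finset.card_sdiff_of_subset hsub
    rw [← hW'def, hc2] at this
    have hdeg : (G.neighborFinset w).card ≤ 4 := by
      rwa [G.card_neighborFinset_eq_degree]
    omega
  -- the subgraph obtained by deleting u and v, and its coloring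
  set S : Set V := {x | x ≠ u ∧ x ≠ v} with hSdef
  set H : G.Subgraph := (⊤ : G.Subgraph).induce S with hHdef
  have hHne : H ≠ ⊤ := by
    intro h
    have hu : u ∈ H.verts := by rw [h]; simp
    exact hu.1 rfl
  obtain ⟨f0, hf0⟩ := hmin.2 H hHne
  set f : V → Fin 3 := fun x => if hx : x ∈ S then f0 ⟨x, hx⟩ else 0 with hfdef
  have hfeval : ∀ x (hx : x ∈ S), f x = f0 ⟨x, hx⟩ := fun x hx => dif_pos hx
  set N : V → Set V := fun x => {y | G.Adj x y ∧ y ∈ S ∧ f y = f x} with hNdef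
  have hNcard : ∀ x, ∀ hx : x ∈ S, (N x).ncard ≤ ![1, 1, 0] (f x) := by
    intro x hx
    have himg : N x = Subtype.val ''
        {y : H.verts | H.coe.Adj ⟨x, hx⟩ y ∧ f0 y = f0 ⟨x, hx⟩} := by
      ext y
      constructor
      · rintro ⟨hadj, hyS, hfy⟩
        refine ⟨⟨y, hyS⟩, ⟨?_, ?_⟩, rfl⟩
        · show H.Adj x y
          rw [hHdef, SimpleGraph.Subgraph.induce_adj]
          exact ⟨hx, hyS, by simpa using hadj⟩
        · rw [← hfeval y hyS, ← hfeval x hx]; exact hfy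
      · rintro ⟨⟨y', hy'⟩, ⟨hadj, hfy⟩, rfl⟩
        have hAdj : H.Adj x y' := hadj
        rw [hHdef, SimpleGraph.Subgraph.induce_adj] at hAdj
        refine ⟨by simpa using hAdj.2.2, hy', ?_⟩
        rw [hfeval y' hy', hfeval x hx]; exact hfy
    rw [himg, Set.ncard_image_of_injective _ Subtype.val_injective, hfeval x hx]
    exact hf0 _
  have hss : ∀ x, x ∈ S → ∀ y ∈ N x, ∀ z ∈ N x, y = z := by
    intro x hx
    refine (Set.ncard_le_one (Set.toFinite _)).1 ((hNcard x hx).trans ?_)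
    have : ∀ i : Fin 3, ![1, 1, 0] i ≤ 1 := by decide
    exact this _
  have hemp : ∀ x, x ∈ S → f x = 2 → N x = ∅ := by
    intro x hx h2
    refine (Set.ncard_eq_zero (Set.toFinite _)).1 ?_
    have := hNcard x hx
    rw [h2] at this
    simpa using this
  have hwS : w ∈ S := ⟨Ne.symm huw.ne, Ne.symm hvw.ne⟩
  have hu'S : u' ∈ S := ⟨hu'u, hu'v⟩
  have hv'S : v' ∈ S := ⟨hv'u, hv'v⟩
  -- the "tight" booleans
  obtain ⟨ta, hta⟩ : ∃ t : Bool, ((N w).Nonempty ↔ t = true) := by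
    by_cases h : (N w).Nonempty
    exacts [⟨true, by simp [h]⟩, ⟨false, by simp [h]⟩]
  obtain ⟨tb, htb⟩ : ∃ t : Bool, ((N u').Nonempty ↔ t = true) := by
    by_cases h : (N u').Nonempty
    exacts [⟨true, by simp [h]⟩, ⟨false, by simp [h]⟩]
  obtain ⟨tc, htc⟩ : ∃ t : Bool, ((N v').Nonempty ↔ t = true) := by
    by_cases h : (N v').Nonempty
    exacts [⟨true, by simp [h]⟩, ⟨false, by simp [h]⟩]
  have hbool : ∀ (t : Bool) (X : V → Fin 3 → Prop), True := fun _ _ => trivial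
  have hkey := key110 (f w) (f u') (f v') ta tb tc
    (by
      intro h2
      by_contra hne
      have h1 : ta = true := by revert hne; cases ta <;> simp
      have := hta.mpr h1
      rw [hemp w hwS h2] at this
      exact Set.not_nonempty_empty this)
    (by
      intro h2
      by_contra hne
      have h1 : tb = true := by revert hne; cases tb <;> simp
      have := htb.mpr h1
      rw [hemp u' hu'S h2] at this
      exact Set.not_nonempty_empty this)
    (by
      intro h2
      by_contra hne
      have h1 : tc = true := by revert hne; cases tc <;> simp
      have := htc.mpr h1
      rw [hemp v' hv'S h2] at this
      exact Set.not_nonempty_empty this)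
  rcases hkey with ⟨cu, cv, hC1, hC2, hC3, hC4, hC5⟩ | ⟨hta', htb', htc', ha2, hba, hb2, hcb⟩
  · -- the coloring of `G - u - v` extends to `G`
    set g : V → Fin 3 := fun x => if x = u then cu else if x = v then cv else f x with hgdef
    have hgu : g u = cu := by simp [hgdef]
    have hgv : g v = cv := by simp [hgdef, huv.ne']
    have hgS : ∀ x, x ∈ S → g x = f x := by
      rintro x ⟨h1, h2⟩
      simp [hgdef, h1, h2]
    apply hmin.1
    refine colorable_check G g (fun x => ?_)
    by_cases hxu : x = u
    · subst x
      constructor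
      · intro h2
        rw [hgu] at h2
        obtain ⟨hna, hnb, hncv⟩ := hC1.2.2.2 h2
        ext y
        simp only [Set.mem_setOf_eq, Set.mem_empty_iff_false, iff_false, not_and]
        intro hadj hgy
        rw [hgu] at hgy
        rcases hAu y hadj with hy | hy | hy
        · rw [hy, hgv] at hgy; exact hncv hgy
        · rw [hy, hgS w hwS] at hgy; exact hna hgy
        · rw [hy, hgS u' hu'S] at hgy; exact hnb hgy
      · rintro y ⟨hy1, hy2⟩ z ⟨hz1, hz2⟩
        rw [hgu] at hy2 hz2
        rcases hAu y hy1 with hy | hy | hy <;> rcases hAu z hz1 with hz | hz | hz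
        · rw [hy, hz]
        · rw [hy, hgv] at hy2; rw [hz, hgS w hwS] at hz2; exact absurd ⟨hz2, hy2⟩ hC1.2.1
        · rw [hy, hgv] at hy2; rw [hz, hgS u' hu'S] at hz2; exact absurd ⟨hz2, hy2⟩ hC1.2.2.1
        · rw [hz, hgv] at hz2; rw [hy, hgS w hwS] at hy2; exact absurd ⟨hy2, hz2⟩ hC1.2.1
        · rw [hy, hz]
        · rw [hy, hgS w hwS] at hy2; rw [hz, hgS u' hu'S] at hz2; exact absurd ⟨hy2, hz2⟩ hC1.1
        · rw [hz, hgv] at hz2; rw [hy, hgS u' hu'S] at hy2; exact absurd ⟨hy2, hz2⟩ hC1.2.2.1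
        · rw [hz, hgS w hwS] at hz2; rw [hy, hgS u' hu'S] at hy2; exact absurd ⟨hz2, hy2⟩ hC1.1
        · rw [hy, hz]
    by_cases hxv : x = v
    · subst x
      constructor
      · intro h2
        rw [hgv] at h2
        obtain ⟨hna, hnc, hncu⟩ := hC2.2.2.2 h2
        ext y
        simp only [Set.mem_setOf_eq, Set.mem_empty_iff_false, iff_false, not_and]
        intro hadj hgy
        rw [hgv] at hgy
        rcases hAv y hadj with hy | hy | hy
        · rw [hy, hgu] at hgy; exact hncu hgy
        · rw [hy, hgS w hwS] at hgy; exact hna hgy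
        · rw [hy, hgS v' hv'S] at hgy; exact hnc hgy
      · rintro y ⟨hy1, hy2⟩ z ⟨hz1, hz2⟩
        rw [hgv] at hy2 hz2
        rcases hAv y hy1 with hy | hy | hy <;> rcases hAv z hz1 with hz | hz | hz
        · rw [hy, hz]
        · rw [hy, hgu] at hy2; rw [hz, hgS w hwS] at hz2; exact absurd ⟨hz2, hy2⟩ hC2.2.1
        · rw [hy, hgu] at hy2; rw [hz, hgS v' hv'S] at hz2; exact absurd ⟨hz2, hy2⟩ hC2.2.2.1
        · rw [hz, hgu] at hz2; rw [hy, hgS w hwS] at hy2; exact absurd ⟨hy2, hz2⟩ hC2.2.1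
        · rw [hy, hz]
        · rw [hy, hgS w hwS] at hy2; rw [hz, hgS v' hv'S] at hz2; exact absurd ⟨hy2, hz2⟩ hC2.1
        · rw [hz, hgu] at hz2; rw [hy, hgS v' hv'S] at hy2; exact absurd ⟨hy2, hz2⟩ hC2.2.2.1
        · rw [hz, hgS w hwS] at hz2; rw [hy, hgS v' hv'S] at hy2; exact absurd ⟨hz2, hy2⟩ hC2.1
        · rw [hy, hz]
    by_cases hxw : x = w
    · subst x
      have hclass : ∀ y, G.Adj w y → g y = g w →
          (y = u ∧ cu = f w) ∨ (y = v ∧ cv = f w) ∨ y ∈ N w := by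
        intro y hadj hgy
        rw [hgS w hwS] at hgy
        rcases hAw y hadj with rfl | rfl | hyW
        · exact Or.inl ⟨rfl, by rw [← hgu]; exact hgy⟩
        · exact Or.inr (Or.inl ⟨rfl, by rw [← hgv]; exact hgy⟩)
        · obtain ⟨hwy, hy1, hy2⟩ := hW'mem y hyW
          exact Or.inr (Or.inr ⟨hwy, ⟨hy1, hy2⟩, by rw [← hgS y ⟨hy1, hy2⟩]; exact hgy⟩)
      constructor
      · intro h2
        rw [hgS w hwS] at h2
        obtain ⟨hncu, hncv⟩ := hC3.2.2.2 h2
        have hNw : N w = ∅ := hemp w hwS h2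
        ext y
        simp only [Set.mem_setOf_eq, Set.mem_empty_iff_false, iff_false, not_and]
        intro hadj hgy
        rcases hclass y hadj hgy with ⟨rfl, hc⟩ | ⟨rfl, hc⟩ | hyN
        · exact hncu hc
        · exact hncv hc
        · rw [hNw] at hyN; exact hyN
      · rintro y ⟨hy1, hy2⟩ z ⟨hz1, hz2⟩
        rcases hclass y hy1 hy2 with ⟨rfl, hyc⟩ | ⟨rfl, hyc⟩ | hyN <;>
          rcases hclass z hz1 hz2 with ⟨rfl, hzc⟩ | ⟨rfl, hzc⟩ | hzN
        · rfl
        · exact absurd ⟨hyc, hzc⟩ hC3.2.2.1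
        · exact absurd ⟨hta.mp ⟨z, hzN⟩, hyc⟩ hC3.1
        · exact absurd ⟨hzc, hyc⟩ hC3.2.2.1
        · rfl
        · exact absurd ⟨hta.mp ⟨z, hzN⟩, hyc⟩ hC3.2.1
        · exact absurd ⟨hta.mp ⟨y, hyN⟩, hzc⟩ hC3.1
        · exact absurd ⟨hta.mp ⟨y, hyN⟩, hzc⟩ hC3.2.1
        · exact hss w hwS y hyN z hzN
    by_cases hxu' : x = u'
    · subst x
      have hclass : ∀ y, G.Adj u' y → g y = g u' → (y = u ∧ cu = f u') ∨ y ∈ N u' := by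
        intro y hadj hgy
        rw [hgS u' hu'S] at hgy
        by_cases hyu : y = u
        · subst hyu; exact Or.inl ⟨rfl, by rw [← hgu]; exact hgy⟩
        by_cases hyv : y = v
        · subst hyv; exact absurd hadj hnu'v
        · exact Or.inr ⟨hadj, ⟨hyu, hyv⟩, by rw [← hgS y ⟨hyu, hyv⟩]; exact hgy⟩
      constructor
      · intro h2
        rw [hgS u' hu'S] at h2
        have hNe : N u' = ∅ := hemp u' hu'S h2
        have hncu := hC4.2 h2
        ext y
        simp only [Set.mem_setOf_eq, Set.mem_empty_iff_false, iff_false, not_and]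
        intro hadj hgy
        rcases hclass y hadj hgy with ⟨rfl, hc⟩ | hyN
        · exact hncu hc
        · rw [hNe] at hyN; exact hyN
      · rintro y ⟨hy1, hy2⟩ z ⟨hz1, hz2⟩
        rcases hclass y hy1 hy2 with ⟨rfl, hyc⟩ | hyN <;>
          rcases hclass z hz1 hz2 with ⟨rfl, hzc⟩ | hzN
        · rfl
        · exact absurd ⟨htb.mp ⟨z, hzN⟩, hyc⟩ hC4.1
        · exact absurd ⟨htb.mp ⟨y, hyN⟩, hzc⟩ hC4.1
        · exact hss u' hu'S y hyN z hzN
    by_cases hxv' : x = v'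
    · subst x
      have hclass : ∀ y, G.Adj v' y → g y = g v' → (y = v ∧ cv = f v') ∨ y ∈ N v' := by
        intro y hadj hgy
        rw [hgS v' hv'S] at hgy
        by_cases hyu : y = u
        · subst hyu; exact absurd hadj hnv'u
        by_cases hyv : y = v
        · subst hyv; exact Or.inl ⟨rfl, by rw [← hgv]; exact hgy⟩
        · exact Or.inr ⟨hadj, ⟨hyu, hyv⟩, by rw [← hgS y ⟨hyu, hyv⟩]; exact hgy⟩
      constructor
      · intro h2
        rw [hgS v' hv'S] at h2
        have hNe : N v' = ∅ := hemp v' hv'S h2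
        have hncv := hC5.2 h2
        ext y
        simp only [Set.mem_setOf_eq, Set.mem_empty_iff_false, iff_false, not_and]
        intro hadj hgy
        rcases hclass y hadj hgy with ⟨rfl, hc⟩ | hyN
        · exact hncv hc
        · rw [hNe] at hyN; exact hyN
      · rintro y ⟨hy1, hy2⟩ z ⟨hz1, hz2⟩
        rcases hclass y hy1 hy2 with ⟨rfl, hyc⟩ | hyN <;>
          rcases hclass z hz1 hz2 with ⟨rfl, hzc⟩ | hzN
        · rfl
        · exact absurd ⟨htc.mp ⟨z, hzN⟩, hyc⟩ hC5.1
        · exact absurd ⟨htc.mp ⟨y, hyN⟩, hzc⟩ hC5.1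
        · exact hss v' hv'S y hyN z hzN
    · have hxS : x ∈ S := ⟨hxu, hxv⟩
      have hsubN : {y | G.Adj x y ∧ g y = g x} ⊆ N x := by
        rintro y ⟨hy1, hy2⟩
        rw [hgS x hxS] at hy2
        by_cases hyu : y = u
        · subst hyu
          rcases hAu x hy1.symm with h | h | h
          · exact absurd h hxv
          · exact absurd h hxw
          · exact absurd h hxu'
        by_cases hyv : y = v
        · subst hyv
          rcases hAv x hy1.symm with h | h | h
          · exact absurd h hxu
          · exact absurd h hxw
          · exact absurd h hxv'
        · exact ⟨hy1, ⟨hyu, hyv⟩, by rw [← hgS y ⟨hyu, hyv⟩]; exact hy2⟩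
      constructor
      · intro h2
        rw [hgS x hxS] at h2
        have hNe : N x = ∅ := hemp x hxS h2
        exact Set.subset_empty_iff.mp (hNe ▸ hsubN)
      · intro y hy z hz
        exact hss x hxS y (hsubN hy) z (hsubN hz)
  · -- bad configuration: recolor `w` and color both `u`, `v` with `f w`
    obtain ⟨t, htw, htS, htf⟩ := hta.mpr hta'
    have htW : t ∈ W' := by
      simp only [hW'def, Finset.mem_sdiff, SimpleGraph.mem_neighborFinset, Finset.mem_insert,
        Finset.mem_singleton, not_or]
      exact ⟨htw, htS.1, htS.2⟩
    by_cases hex : ∃ s ∈ W', f s = 2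
    · -- some other neighbor of `w` has color 2 : recolor `w` with `f u'`
      obtain ⟨s, hsW, hfs2⟩ := hex
      obtain ⟨hws, hsu, hsv⟩ := hW'mem s hsW
      have hst : t ≠ s := by
        intro h; rw [h, hfs2] at htf; exact ha2 htf.symm
      have hWts : ∀ y ∈ W', y = t ∨ y = s := by
        have hsub : ({t, s} : Finset V) ⊆ W' := by
          intro y hy
          simp only [Finset.mem_insert, Finset.mem_singleton] at hy
          rcases hy with rfl | rfl
          exacts [htW, hsW]
        have hc : ({t, s} : Finset V).card = 2 := by
          rw [Finset.card_insert_of_notMem (by simp [hst]), Finset.card_singleton]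
        have heq := Finset.eq_of_subset_of_card_le hsub (by omega)
        intro y hy
        rw [← heq] at hy
        simpa using hy
      set g : V → Fin 3 := fun x => if x = u then f w else if x = v then f w
        else if x = w then f u' else f x with hgdef
      have hgu : g u = f w := by simp [hgdef]
      have hgv : g v = f w := by simp [hgdef, huv.ne']
      have hgw : g w = f u' := by simp [hgdef, Ne.symm huw.ne, Ne.symm hvw.ne]
      have hgS : ∀ x, x ∈ S → x ≠ w → g x = f x := by
        rintro x ⟨h1, h2⟩ h3
        simp [hgdef, h1, h2, h3]
      apply hmin.1
      refine colorable_check G g (fun x => ?_)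
      by_cases hxu : x = u
      · subst x
        have hel : ∀ y, G.Adj u y → g y = g u → y = v := by
          intro y hadj hgy
          rw [hgu] at hgy
          rcases hAu y hadj with hy | hy | hy
          · exact hy
          · rw [hy, hgw] at hgy; exact absurd hgy hba
          · rw [hy, hgS u' hu'S hu'w] at hgy; exact absurd hgy hba
        constructor
        · intro h2; rw [hgu] at h2; exact absurd h2 ha2
        · rintro y ⟨hy1, hy2⟩ z ⟨hz1, hz2⟩
          rw [hel y hy1 hy2, hel z hz1 hz2]
      by_cases hxv : x = v
      · subst x
        have hel : ∀ y, G.Adj v y → g y = g v → y = u := by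
          intro y hadj hgy
          rw [hgv] at hgy
          rcases hAv y hadj with hy | hy | hy
          · exact hy
          · rw [hy, hgw] at hgy; exact absurd hgy hba
          · rw [hy, hgS v' hv'S hv'w, hcb] at hgy; exact absurd hgy hba
        constructor
        · intro h2; rw [hgv] at h2; exact absurd h2 ha2
        · rintro y ⟨hy1, hy2⟩ z ⟨hz1, hz2⟩
          rw [hel y hy1 hy2, hel z hz1 hz2]
      by_cases hxw : x = w
      · subst x
        have hempty : {y | G.Adj w y ∧ g y = g w} = ∅ := by
          ext y
          simp only [Set.mem_setOf_eq, Set.mem_empty_iff_false, iff_false, not_and]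
          intro hadj hgy
          rw [hgw] at hgy
          rcases hAw y hadj with hy | hy | hyW
          · rw [hy, hgu] at hgy; exact hba hgy.symm
          · rw [hy, hgv] at hgy; exact hba hgy.symm
          · obtain ⟨hwy, hyu, hyv⟩ := hW'mem y hyW
            have hynw : y ≠ w := fun h => G.irrefl (h ▸ hwy)
            rw [hgS y ⟨hyu, hyv⟩ hynw] at hgy
            rcases hWts y hyW with hy' | hy'
            · rw [hy', htf] at hgy; exact hba hgy.symm
            · rw [hy', hfs2] at hgy; exact hb2 hgy.symm
        constructor
        · intro _; exact hempty
        · rintro y hy z hz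
          rw [hempty] at hy
          exact absurd hy (Set.notMem_empty y)
      by_cases hxu' : x = u'
      · subst x
        have hsubN : {y | G.Adj u' y ∧ g y = g u'} ⊆ N u' := by
          rintro y ⟨hy1, hy2⟩
          rw [hgS u' hu'S hu'w] at hy2
          by_cases hyu : y = u
          · rw [hyu, hgu] at hy2; exact absurd hy2.symm hba
          by_cases hyv : y = v
          · rw [hyv] at hy1; exact absurd hy1 hnu'v
          by_cases hyw : y = w
          · rw [hyw] at hy1; exact absurd hy1 hnu'w
          · exact ⟨hy1, ⟨hyu, hyv⟩, by rw [← hgS y ⟨hyu, hyv⟩ hyw]; exact hy2⟩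
        constructor
        · intro h2; rw [hgS u' hu'S hu'w] at h2; exact absurd h2 hb2
        · intro y hy z hz; exact hss u' hu'S y (hsubN hy) z (hsubN hz)
      by_cases hxv' : x = v'
      · subst x
        have hsubN : {y | G.Adj v' y ∧ g y = g v'} ⊆ N v' := by
          rintro y ⟨hy1, hy2⟩
          rw [hgS v' hv'S hv'w, hcb] at hy2
          by_cases hyu : y = u
          · rw [hyu] at hy1; exact absurd hy1 hnv'u
          by_cases hyv : y = v
          · rw [hyv, hgv] at hy2; exact absurd hy2.symm hba
          by_cases hyw : y = w
          · rw [hyw] at hy1; exact absurd hy1 hnv'w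
          · refine ⟨hy1, ⟨hyu, hyv⟩, ?_⟩
            rw [hcb, ← hgS y ⟨hyu, hyv⟩ hyw]; exact hy2
        constructor
        · intro h2; rw [hgS v' hv'S hv'w, hcb] at h2; exact absurd h2 hb2
        · intro y hy z hz; exact hss v' hv'S y (hsubN hy) z (hsubN hz)
      · have hxS : x ∈ S := ⟨hxu, hxv⟩
        have hsubN : {y | G.Adj x y ∧ g y = g x} ⊆ N x := by
          rintro y ⟨hy1, hy2⟩
          rw [hgS x hxS hxw] at hy2
          by_cases hyu : y = u
          · rw [hyu] at hy1
            rcases hAu x hy1.symm with h | h | h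
            · exact absurd h hxv
            · exact absurd h hxw
            · exact absurd h hxu'
          by_cases hyv : y = v
          · rw [hyv] at hy1
            rcases hAv x hy1.symm with h | h | h
            · exact absurd h hxu
            · exact absurd h hxw
            · exact absurd h hxv'
          by_cases hyw : y = w
          · rw [hyw] at hy1 hy2
            rw [hgw] at hy2
            have hxW : x ∈ W' := by
              rcases hAw x hy1.symm with h | h | h
              · exact absurd h hxu
              · exact absurd h hxv
              · exact h
            rcases hWts x hxW with hx' | hx'
            · rw [hx', htf] at hy2; exact absurd hy2 hba
            · rw [hx', hfs2] at hy2; exact absurd hy2 hb2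
          · exact ⟨hy1, ⟨hyu, hyv⟩, by rw [← hgS y ⟨hyu, hyv⟩ hyw]; exact hy2⟩
        constructor
        · intro h2
          rw [hgS x hxS hxw] at h2
          exact Set.subset_empty_iff.mp ((hemp x hxS h2) ▸ hsubN)
        · intro y hy z hz
          exact hss x hxS y (hsubN hy) z (hsubN hz)
    · -- no other neighbor of `w` has color 2 : recolor `w` with color 2
      push_neg at hex
      set g : V → Fin 3 := fun x => if x = u then f w else if x = v then f w
        else if x = w then 2 else f x with hgdef
      have hgu : g u = f w := by simp [hgdef]
      have hgv : g v = f w := by simp [hgdef, huv.ne']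
      have hgw : g w = 2 := by simp [hgdef, Ne.symm huw.ne, Ne.symm hvw.ne]
      have hgS : ∀ x, x ∈ S → x ≠ w → g x = f x := by
        rintro x ⟨h1, h2⟩ h3
        simp [hgdef, h1, h2, h3]
      apply hmin.1
      refine colorable_check G g (fun x => ?_)
      by_cases hxu : x = u
      · subst x
        have hel : ∀ y, G.Adj u y → g y = g u → y = v := by
          intro y hadj hgy
          rw [hgu] at hgy
          rcases hAu y hadj with hy | hy | hy
          · exact hy
          · rw [hy, hgw] at hgy; exact absurd hgy.symm ha2
          · rw [hy, hgS u' hu'S hu'w] at hgy; exact absurd hgy hba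
        constructor
        · intro h2; rw [hgu] at h2; exact absurd h2 ha2
        · rintro y ⟨hy1, hy2⟩ z ⟨hz1, hz2⟩
          rw [hel y hy1 hy2, hel z hz1 hz2]
      by_cases hxv : x = v
      · subst x
        have hel : ∀ y, G.Adj v y → g y = g v → y = u := by
          intro y hadj hgy
          rw [hgv] at hgy
          rcases hAv y hadj with hy | hy | hy
          · exact hy
          · rw [hy, hgw] at hgy; exact absurd hgy.symm ha2
          · rw [hy, hgS v' hv'S hv'w, hcb] at hgy; exact absurd hgy hba
        constructor
        · intro h2; rw [hgv] at h2; exact absurd h2 ha2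
        · rintro y ⟨hy1, hy2⟩ z ⟨hz1, hz2⟩
          rw [hel y hy1 hy2, hel z hz1 hz2]
      by_cases hxw : x = w
      · subst x
        have hempty : {y | G.Adj w y ∧ g y = g w} = ∅ := by
          ext y
          simp only [Set.mem_setOf_eq, Set.mem_empty_iff_false, iff_false, not_and]
          intro hadj hgy
          rw [hgw] at hgy
          rcases hAw y hadj with hy | hy | hyW
          · rw [hy, hgu] at hgy; exact ha2 hgy
          · rw [hy, hgv] at hgy; exact ha2 hgy
          · obtain ⟨hwy, hyu, hyv⟩ := hW'mem y hyW
            have hynw : y ≠ w := fun h => G.irrefl (h ▸ hwy)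
            rw [hgS y ⟨hyu, hyv⟩ hynw] at hgy
            exact hex y hyW hgy
        constructor
        · intro _; exact hempty
        · rintro y hy z hz
          rw [hempty] at hy
          exact absurd hy (Set.notMem_empty y)
      by_cases hxu' : x = u'
      · subst x
        have hsubN : {y | G.Adj u' y ∧ g y = g u'} ⊆ N u' := by
          rintro y ⟨hy1, hy2⟩
          rw [hgS u' hu'S hu'w] at hy2
          by_cases hyu : y = u
          · rw [hyu, hgu] at hy2; exact absurd hy2.symm hba
          by_cases hyv : y = v
          · rw [hyv] at hy1; exact absurd hy1 hnu'v
          by_cases hyw : y = w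
          · rw [hyw] at hy1; exact absurd hy1 hnu'w
          · exact ⟨hy1, ⟨hyu, hyv⟩, by rw [← hgS y ⟨hyu, hyv⟩ hyw]; exact hy2⟩
        constructor
        · intro h2; rw [hgS u' hu'S hu'w] at h2; exact absurd h2 hb2
        · intro y hy z hz; exact hss u' hu'S y (hsubN hy) z (hsubN hz)
      by_cases hxv' : x = v'
      · subst x
        have hsubN : {y | G.Adj v' y ∧ g y = g v'} ⊆ N v' := by
          rintro y ⟨hy1, hy2⟩
          rw [hgS v' hv'S hv'w, hcb] at hy2
          by_cases hyu : y = u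
          · rw [hyu] at hy1; exact absurd hy1 hnv'u
          by_cases hyv : y = v
          · rw [hyv, hgv] at hy2; exact absurd hy2.symm hba
          by_cases hyw : y = w
          · rw [hyw] at hy1; exact absurd hy1 hnv'w
          · refine ⟨hy1, ⟨hyu, hyv⟩, ?_⟩
            rw [hcb, ← hgS y ⟨hyu, hyv⟩ hyw]; exact hy2
        constructor
        · intro h2; rw [hgS v' hv'S hv'w, hcb] at h2; exact absurd h2 hb2
        · intro y hy z hz; exact hss v' hv'S y (hsubN hy) z (hsubN hz)
      · have hxS : x ∈ S := ⟨hxu, hxv⟩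
        have hsubN : {y | G.Adj x y ∧ g y = g x} ⊆ N x := by
          rintro y ⟨hy1, hy2⟩
          rw [hgS x hxS hxw] at hy2
          by_cases hyu : y = u
          · rw [hyu] at hy1
            rcases hAu x hy1.symm with h | h | h
            · exact absurd h hxv
            · exact absurd h hxw
            · exact absurd h hxu'
          by_cases hyv : y = v
          · rw [hyv] at hy1
            rcases hAv x hy1.symm with h | h | h
            · exact absurd h hxu
            · exact absurd h hxw
            · exact absurd h hxv'
          by_cases hyw : y = w
          · rw [hyw] at hy1 hy2
            rw [hgw] at hy2
            have hxW : x ∈ W' := by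
              rcases hAw x hy1.symm with h | h | h
              · exact absurd h hxu
              · exact absurd h hxv
              · exact h
            exact absurd hy2.symm (hex x hxW)
          · exact ⟨hy1, ⟨hyu, hyv⟩, by rw [← hgS y ⟨hyu, hyv⟩ hyw]; exact hy2⟩
        constructor
        · intro h2
          rw [hgS x hxS hxw] at h2
          exact Set.subset_empty_iff.mp ((hemp x hxS h2) ▸ hsubN)
        · intro y hy z hz
          exact hss x hxS y (hsubN hy) z (hsubN hz)
end

section
/- If vxy is a triangle of G with d(v) = 3 and d(x) = d(y) = 4, then the pendant neighbor of v (the unique neighbor of v outside {x,y}) has degree at least 4. -/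
set_option linter.unusedSectionVars false
set_option linter.unusedVariables false


section helpers
variable {α : Type*}

lemma ncard_le_one_of_sub {S : Set α} {a : α} (h : ∀ b ∈ S, b = a) : S.ncard ≤ 1 := by
  have hs : S ⊆ {a} := fun b hb => h b hb
  calc S.ncard ≤ ({a} : Set α).ncard := Set.ncard_le_ncard hs (Set.finite_singleton a)
    _ = 1 := Set.ncard_singleton a

lemma ncard_zero_of {S : Set α} (h : ∀ b ∈ S, False) : S.ncard = 0 := by
  have : S = ∅ := Set.eq_empty_iff_forall_notMem.2 h
  simp [this]

lemma ncard_le_one_of_subsing {S : Set α} (h : ∀ a ∈ S, ∀ b ∈ S, a = b) : S.ncard ≤ 1 := by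
  rcases S.eq_empty_or_nonempty with h0 | ⟨a, ha⟩
  · simp [h0]
  · exact ncard_le_one_of_sub (fun b hb => h b hb a ha)

lemma defect1 {i : Fin 3} (h : i ≠ 2) : (![1,1,0] : Fin 3 → ℕ) i = 1 := by
  revert h; revert i; decide

lemma fin3cases (i : Fin 3) : i = 0 ∨ i = 1 ∨ i = 2 := by revert i; decide

end helpers

section moves

variable {V : Type*} [Fintype V] [DecidableEq V] {G : SimpleGraph V} [DecidableRel G.Adj]
variable {F : V → Fin 3} {v x y u : V}

lemma empty_of_ncard0 {S : Set V} (h : S.ncard = 0) : ∀ b, b ∈ S → False := by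
  have := (Set.ncard_eq_zero (Set.toFinite S)).1 h
  intro b hb; rw [this] at hb; exact hb

/-- the translated validity of the coloring of `G - v` -/
def OKv (G : SimpleGraph V) (F : V → Fin 3) (v : V) : Prop :=
  ∀ w, w ≠ v → {z | G.Adj w z ∧ z ≠ v ∧ F z = F w}.ncard ≤ ![1,1,0] (F w)

lemma old_empty2 (hfv : OKv G F v) {w : V} (hwv : w ≠ v) (hw2 : F w = 2) :
    ∀ z, G.Adj w z → z ≠ v → F z ≠ 2 := by
  intro z hz hzv hz2
  have h0 := hfv w hwv
  rw [hw2] at h0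
  have h1 : {z | G.Adj w z ∧ z ≠ v ∧ F z = 2} = ∅ :=
    (Set.ncard_eq_zero (Set.toFinite _)).1 (Nat.le_zero.1 (by simpa using h0))
  have hmem : z ∈ {z | G.Adj w z ∧ z ≠ v ∧ F z = 2} := ⟨hz, hzv, hz2⟩
  rw [h1] at hmem; exact hmem

lemma sub_old (hfv : OKv G F v) {w : V} (hwv : w ≠ v) {g : V → Fin 3} (hgw : g w = F w)
    (h : ∀ z, G.Adj w z → g z = F w → z ≠ v ∧ F z = F w) :
    {z | G.Adj w z ∧ g z = g w}.ncard ≤ ![1,1,0] (g w) := by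
  rw [hgw]
  refine le_trans (Set.ncard_le_ncard ?_ (Set.toFinite _)) (hfv w hwv)
  rintro z ⟨hadj, hcol⟩
  exact ⟨hadj, (h z hadj hcol).1, (h z hadj hcol).2⟩

lemma w2_zero (hfv : OKv G F v) {w : V} (hwv : w ≠ v) (hw2 : F w = 2) {g : V → Fin 3}
    (hgw : g w = F w)
    (h : ∀ z, G.Adj w z → g z = 2 → z ≠ v ∧ F z = 2) :
    {z | G.Adj w z ∧ g z = g w}.ncard ≤ ![1,1,0] (g w) := by
  rw [hgw, hw2]
  refine le_trans (le_of_eq (ncard_zero_of ?_)) (Nat.zero_le _)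
  rintro z ⟨hadj, hcol⟩
  obtain ⟨hzv, hz2⟩ := h z hadj hcol
  exact old_empty2 hfv hwv hw2 z hadj hzv hz2

/-- Move: color `v` with a color `c` missing from its neighborhood. -/
lemma moveV (hfv : OKv G F v) (hNv : ∀ z, G.Adj v z → z = x ∨ z = y ∨ z = u)
    (c : Fin 3) (hcx : F x ≠ c) (hcy : F y ≠ c) (hcu : F u ≠ c) :
    Colorable3 G ![1,1,0] := by
  classical
  set g : V → Fin 3 := fun z => if z = v then c else F z with hg
  have hgv : g v = c := by simp [hg]
  have hgo : ∀ z, z ≠ v → g z = F z := fun z h1 => by simp [hg, h1]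
  refine ⟨g, fun w => ?_⟩
  by_cases hwv : w = v
  · subst hwv
    rw [hgv]
    refine le_trans (le_of_eq (ncard_zero_of ?_)) (Nat.zero_le _)
    rintro z ⟨hadj, hcol⟩
    rw [hgo z hadj.ne'] at hcol
    rcases hNv z hadj with rfl | rfl | rfl
    · exact hcx hcol
    · exact hcy hcol
    · exact hcu hcol
  · refine sub_old hfv hwv (hgo w hwv) ?_
    intro z hadj hcol
    by_cases hzv : z = v
    · subst hzv
      rw [hgv] at hcol
      rcases hNv w hadj.symm with rfl | rfl | rfl
      · exact absurd hcol.symm hcx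
      · exact absurd hcol.symm hcy
      · exact absurd hcol.symm hcu
    · rw [hgo z hzv] at hcol; exact ⟨hzv, hcol⟩

/-- Move: color `v` with `c ∈ {0,1}` when exactly one neighbor `w0` has color `c`
and `w0` is unsaturated. -/
lemma moveS (hfv : OKv G F v) (hNv : ∀ z, G.Adj v z → z = x ∨ z = y ∨ z = u)
    {w0 : V} {c : Fin 3} (hvw0 : G.Adj v w0) (hFw0 : F w0 = c) (hc2 : c ≠ 2)
    (hcx : F x = c → x = w0) (hcy : F y = c → y = w0) (hcu : F u = c → u = w0)
    (hsat : {z | G.Adj w0 z ∧ z ≠ v ∧ F z = c}.ncard = 0) :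
    Colorable3 G ![1,1,0] := by
  classical
  set g : V → Fin 3 := fun z => if z = v then c else F z with hg
  have hgv : g v = c := by simp [hg]
  have hgo : ∀ z, z ≠ v → g z = F z := fun z h1 => by simp [hg, h1]
  refine ⟨g, fun w => ?_⟩
  by_cases hwv : w = v
  · subst hwv
    rw [hgv, defect1 hc2]
    refine ncard_le_one_of_sub (a := w0) ?_
    rintro z ⟨hadj, hcol⟩
    rw [hgo z hadj.ne'] at hcol
    rcases hNv z hadj with rfl | rfl | rfl
    · exact hcx hcol
    · exact hcy hcol
    · exact hcu hcol
  · by_cases hww0 : w = w0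
    · subst hww0
      have hgw : g w = c := by rw [hgo w hwv, hFw0]
      rw [hgw, defect1 hc2]
      refine ncard_le_one_of_sub (a := v) ?_
      rintro z ⟨hadj, hcol⟩
      by_cases hzv : z = v
      · exact hzv
      · rw [hgo z hzv] at hcol
        exact (empty_of_ncard0 hsat z ⟨hadj, hzv, hcol⟩).elim
    · refine sub_old hfv hwv (hgo w hwv) ?_
      intro z hadj hcol
      by_cases hzv : z = v
      · subst hzv
        rw [hgv] at hcol
        rcases hNv w hadj.symm with rfl | rfl | rfl
        · exact absurd (hcx hcol.symm) hww0
        · exact absurd (hcy hcol.symm) hww0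
        · exact absurd (hcu hcol.symm) hww0
      · rw [hgo z hzv] at hcol; exact ⟨hzv, hcol⟩

end moves

section caseA
variable {V : Type*} [Fintype V] [DecidableEq V] {G : SimpleGraph V} [DecidableRel G.Adj]
variable {F : V → Fin 3} {v x y u : V}

lemma caseA (hfv : OKv G F v) (hNv : ∀ z, G.Adj v z → z = x ∨ z = y ∨ z = u)
    {x1 x2 y1 y2 : V} {a b : Fin 3}
    (hNx : ∀ z, G.Adj x z → z = v ∨ z = y ∨ z = x1 ∨ z = x2)
    (hNy : ∀ z, G.Adj y z → z = v ∨ z = x ∨ z = y1 ∨ z = y2)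
    (hvx : G.Adj v x) (hvy : G.Adj v y) (hvu : G.Adj v u) (hxy : G.Adj x y)
    (hx1 : G.Adj x x1) (hx2 : G.Adj x x2) (hy1 : G.Adj y y1) (hy2 : G.Adj y y2)
    (hx1v : x1 ≠ v) (hx2v : x2 ≠ v) (hy1v : y1 ≠ v) (hy2v : y2 ≠ v)
    (hx2y : x2 ≠ y) (hy2x : y2 ≠ x)
    (hux : u ≠ x) (huy : u ≠ y)
    (ha2 : a ≠ 2) (hb2 : b ≠ 2) (hab : a ≠ b)
    (hFx : F x = a) (hFy : F y = b) (hFu : F u = 2) (hFx1 : F x1 = a) (hFy1 : F y1 = b) :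
    Colorable3 G ![1,1,0] := by
  classical
  have hxv : x ≠ v := hvx.ne'
  have hyv : y ≠ v := hvy.ne'
  have huv : u ≠ v := hvu.ne'
  have hyx : y ≠ x := hxy.ne'
  have hxny : x ≠ y := hxy.ne
  have hx1x : x1 ≠ x := hx1.ne'
  have hx2x : x2 ≠ x := hx2.ne'
  have hy1y : y1 ≠ y := hy1.ne'
  have hy2y : y2 ≠ y := hy2.ne'
  have hx1y : x1 ≠ y := fun h => hab (by rw [← hFx1, h, hFy])
  have hy1x : y1 ≠ x := fun h => hab (by rw [← hFx, ← h, hFy1])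
  by_cases hs : F x2 = 2
  · by_cases ht : F y2 = 2
    · -- M4 : v := a, x := b, y := a
      set g : V → Fin 3 :=
        fun z => if z = v then a else if z = x then b else if z = y then a else F z with hg
      have hgv : g v = a := by simp [hg]
      have hgx : g x = b := by simp [hg, hxv]
      have hgy : g y = a := by simp [hg, hyv, hyx]
      have hgo : ∀ z, z ≠ v → z ≠ x → z ≠ y → g z = F z := fun z h1 h2 h3 => by
        simp [hg, h1, h2, h3]
      have hgu : g u = 2 := by rw [hgo u huv hux huy, hFu]
      refine ⟨g, fun w => ?_⟩
      by_cases hwv : w = v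
      · subst hwv
        rw [hgv, defect1 ha2]
        refine ncard_le_one_of_sub (a := y) ?_
        rintro z ⟨hadj, hcol⟩
        rcases hNv z hadj with h | h | h
        · rw [h, hgx] at hcol; exact (hab hcol.symm).elim
        · exact h
        · rw [h, hgu] at hcol; exact (ha2 hcol.symm).elim
      · by_cases hwx : w = x
        · subst hwx
          rw [hgx]
          refine le_trans (le_of_eq (ncard_zero_of ?_)) (Nat.zero_le _)
          rintro z ⟨hadj, hcol⟩
          rcases hNx z hadj with h | h | h | h
          · rw [h, hgv] at hcol; exact hab hcol
          · rw [h, hgy] at hcol; exact hab hcol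
          · rw [h, hgo x1 hx1v hx1x hx1y, hFx1] at hcol; exact hab hcol
          · rw [h, hgo x2 hx2v hx2x hx2y, hs] at hcol; exact hb2 hcol.symm
        · by_cases hwy : w = y
          · subst hwy
            rw [hgy, defect1 ha2]
            refine ncard_le_one_of_sub (a := v) ?_
            rintro z ⟨hadj, hcol⟩
            rcases hNy z hadj with h | h | h | h
            · exact h
            · rw [h, hgx] at hcol; exact (hab hcol.symm).elim
            · rw [h, hgo y1 hy1v hy1x hy1y, hFy1] at hcol; exact (hab hcol.symm).elim
            · rw [h, hgo y2 hy2v hy2x hy2y, ht] at hcol; exact (ha2 hcol.symm).elim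
          · have hgw : g w = F w := hgo w hwv hwx hwy
            by_cases hw2 : F w = 2
            · refine w2_zero hfv hwv hw2 hgw ?_
              intro z hadj hcol
              by_cases hzv : z = v
              · rw [hzv, hgv] at hcol; exact (ha2 hcol).elim
              · by_cases hzx : z = x
                · rw [hzx, hgx] at hcol; exact (hb2 hcol).elim
                · by_cases hzy : z = y
                  · rw [hzy, hgy] at hcol; exact (ha2 hcol).elim
                  · rw [hgo z hzv hzx hzy] at hcol; exact ⟨hzv, hcol⟩
            · refine sub_old hfv hwv hgw ?_
              intro z hadj hcol
              by_cases hzv : z = v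
              · rw [hzv, hgv] at hcol
                rcases hNv w ((hzv ▸ hadj).symm) with h | h | h
                · exact (hwx h).elim
                · exact (hwy h).elim
                · rw [h] at hw2; exact (hw2 hFu).elim
              · by_cases hzx : z = x
                · rw [hzx, hgx] at hcol
                  rcases hNx w ((hzx ▸ hadj).symm) with h | h | h | h
                  · exact (hwv h).elim
                  · exact (hwy h).elim
                  · rw [h, hFx1] at hcol; exact (hab hcol.symm).elim
                  · rw [h] at hw2; exact (hw2 hs).elim
                · by_cases hzy : z = y
                  · rw [hzy, hgy] at hcol
                    rcases hNy w ((hzy ▸ hadj).symm) with h | h | h | h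
                    · exact (hwv h).elim
                    · exact (hwx h).elim
                    · rw [h, hFy1] at hcol; exact (hab hcol).elim
                    · rw [h] at hw2; exact (hw2 ht).elim
                  · rw [hgo z hzv hzx hzy] at hcol; exact ⟨hzv, hcol⟩
    · -- M3 : y := 2, v := b
      set g : V → Fin 3 := fun z => if z = v then b else if z = y then 2 else F z with hg
      have hgv : g v = b := by simp [hg]
      have hgy : g y = 2 := by simp [hg, hyv]
      have hgo : ∀ z, z ≠ v → z ≠ y → g z = F z := fun z h1 h2 => by simp [hg, h1, h2]
      refine ⟨g, fun w => ?_⟩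
      by_cases hwv : w = v
      · subst hwv
        rw [hgv]
        refine le_trans (le_of_eq (ncard_zero_of ?_)) (Nat.zero_le _)
        rintro z ⟨hadj, hcol⟩
        rcases hNv z hadj with h | h | h
        · rw [h, hgo x hxv hxny, hFx] at hcol; exact hab hcol
        · rw [h, hgy] at hcol; exact hb2 hcol.symm
        · rw [h, hgo u huv huy, hFu] at hcol; exact hb2 hcol.symm
      · by_cases hwy : w = y
        · subst hwy
          rw [hgy]
          refine le_trans (le_of_eq (ncard_zero_of ?_)) (Nat.zero_le _)
          rintro z ⟨hadj, hcol⟩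
          rcases hNy z hadj with h | h | h | h
          · rw [h, hgv] at hcol; exact hb2 hcol
          · rw [h, hgo x hxv hxny, hFx] at hcol; exact ha2 hcol
          · rw [h, hgo y1 hy1v hy1y, hFy1] at hcol; exact hb2 hcol
          · rw [h, hgo y2 hy2v hy2y] at hcol; exact ht hcol
        · have hgw : g w = F w := hgo w hwv hwy
          by_cases hw2 : F w = 2
          · refine w2_zero hfv hwv hw2 hgw ?_
            intro z hadj hcol
            by_cases hzv : z = v
            · rw [hzv, hgv] at hcol; exact (hb2 hcol).elim
            · by_cases hzy : z = y
              · rcases hNy w ((hzy ▸ hadj).symm) with h | h | h | h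
                · exact (hwv h).elim
                · rw [h, hFx] at hw2; exact (ha2 hw2).elim
                · rw [h, hFy1] at hw2; exact (hb2 hw2).elim
                · rw [h] at hw2; exact (ht hw2).elim
              · rw [hgo z hzv hzy] at hcol; exact ⟨hzv, hcol⟩
          · refine sub_old hfv hwv hgw ?_
            intro z hadj hcol
            by_cases hzv : z = v
            · rw [hzv, hgv] at hcol
              rcases hNv w ((hzv ▸ hadj).symm) with h | h | h
              · rw [h, hFx] at hcol; exact (hab hcol.symm).elim
              · exact (hwy h).elim
              · rw [h, hFu] at hcol; exact (hb2 hcol).elim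
            · by_cases hzy : z = y
              · rw [hzy, hgy] at hcol; exact (hw2 hcol.symm).elim
              · rw [hgo z hzv hzy] at hcol; exact ⟨hzv, hcol⟩
  · -- M2 : x := 2, v := a
    set g : V → Fin 3 := fun z => if z = v then a else if z = x then 2 else F z with hg
    have hgv : g v = a := by simp [hg]
    have hgx : g x = 2 := by simp [hg, hxv]
    have hgo : ∀ z, z ≠ v → z ≠ x → g z = F z := fun z h1 h2 => by simp [hg, h1, h2]
    refine ⟨g, fun w => ?_⟩
    by_cases hwv : w = v
    · subst hwv
      rw [hgv]
      refine le_trans (le_of_eq (ncard_zero_of ?_)) (Nat.zero_le _)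
      rintro z ⟨hadj, hcol⟩
      rcases hNv z hadj with h | h | h
      · rw [h, hgx] at hcol; exact ha2 hcol.symm
      · rw [h, hgo y hyv hyx, hFy] at hcol; exact hab hcol.symm
      · rw [h, hgo u huv hux, hFu] at hcol; exact ha2 hcol.symm
    · by_cases hwx : w = x
      · subst hwx
        rw [hgx]
        refine le_trans (le_of_eq (ncard_zero_of ?_)) (Nat.zero_le _)
        rintro z ⟨hadj, hcol⟩
        rcases hNx z hadj with h | h | h | h
        · rw [h, hgv] at hcol; exact ha2 hcol
        · rw [h, hgo y hyv hyx, hFy] at hcol; exact hb2 hcol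
        · rw [h, hgo x1 hx1v hx1x, hFx1] at hcol; exact ha2 hcol
        · rw [h, hgo x2 hx2v hx2x] at hcol; exact hs hcol
      · have hgw : g w = F w := hgo w hwv hwx
        by_cases hw2 : F w = 2
        · refine w2_zero hfv hwv hw2 hgw ?_
          intro z hadj hcol
          by_cases hzv : z = v
          · rw [hzv, hgv] at hcol; exact (ha2 hcol).elim
          · by_cases hzx : z = x
            · rcases hNx w ((hzx ▸ hadj).symm) with h | h | h | h
              · exact (hwv h).elim
              · rw [h, hFy] at hw2; exact (hb2 hw2).elim
              · rw [h, hFx1] at hw2; exact (ha2 hw2).elim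
              · rw [h] at hw2; exact (hs hw2).elim
            · rw [hgo z hzv hzx] at hcol; exact ⟨hzv, hcol⟩
        · refine sub_old hfv hwv hgw ?_
          intro z hadj hcol
          by_cases hzv : z = v
          · rw [hzv, hgv] at hcol
            rcases hNv w ((hzv ▸ hadj).symm) with h | h | h
            · exact (hwx h).elim
            · rw [h, hFy] at hcol; exact (hab hcol).elim
            · rw [h, hFu] at hcol; exact (ha2 hcol).elim
          · by_cases hzx : z = x
            · rw [hzx, hgx] at hcol; exact (hw2 hcol.symm).elim
            · rw [hgo z hzv hzx] at hcol; exact ⟨hzv, hcol⟩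

end caseA

section caseB
variable {V : Type*} [Fintype V] [DecidableEq V] {G : SimpleGraph V} [DecidableRel G.Adj]
variable {F : V → Fin 3} {v x y u : V}

lemma nbr_le3_unique' {u v u1 : V} (hd : G.degree u ≤ 3) (hv : G.Adj u v) (hu1 : G.Adj u u1)
    (hvu1 : v ≠ u1) : ∀ z z', G.Adj u z → z ≠ v → z ≠ u1 → G.Adj u z' → z' ≠ v → z' ≠ u1 →
      z = z' := by
  intro z z' hz hz1 hz2 hz' hz'1 hz'2
  by_contra hne
  have hsub : ({v, u1, z, z'} : Finset V) ⊆ G.neighborFinset u := by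
    intro w hw
    simp only [Finset.mem_insert, Finset.mem_singleton] at hw
    rcases hw with rfl | rfl | rfl | rfl <;>
      simp [SimpleGraph.mem_neighborFinset, hv, hu1, hz, hz']
  have hcard : ({v, u1, z, z'} : Finset V).card = 4 := by
    rw [Finset.card_insert_of_notMem (by simp [hvu1, Ne.symm hz1, Ne.symm hz'1]),
      Finset.card_insert_of_notMem (by simp [Ne.symm hz2, Ne.symm hz'2]),
      Finset.card_insert_of_notMem (by simp [hne]), Finset.card_singleton]
  have := Finset.card_le_card hsub
  rw [hcard, SimpleGraph.card_neighborFinset_eq_degree] at this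
  omega

lemma caseB (hfv : OKv G F v) (hNv : ∀ z, G.Adj v z → z = x ∨ z = y ∨ z = u)
    {y1 y2 u1 : V} {b e : Fin 3}
    (hNy : ∀ z, G.Adj y z → z = v ∨ z = x ∨ z = y1 ∨ z = y2)
    (hvx : G.Adj v x) (hvy : G.Adj v y) (hvu : G.Adj v u) (hxy : G.Adj x y)
    (hy1 : G.Adj y y1) (hy2 : G.Adj y y2) (hu1 : G.Adj u u1)
    (hy1v : y1 ≠ v) (hy2v : y2 ≠ v) (hy2x : y2 ≠ x) (hu1v : u1 ≠ v)
    (hux : u ≠ x) (huy : u ≠ y)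
    (hdu : G.degree u ≤ 3)
    (hb2 : b ≠ 2) (he2 : e ≠ 2) (hbe : b ≠ e)
    (hFx : F x = 2) (hFy : F y = b) (hFu : F u = e) (hFy1 : F y1 = b) (hFu1 : F u1 = e) :
    Colorable3 G ![1,1,0] := by
  classical
  have hxv : x ≠ v := hvx.ne'
  have hyv : y ≠ v := hvy.ne'
  have huv : u ≠ v := hvu.ne'
  have hyx : y ≠ x := hxy.ne'
  have hxny : x ≠ y := hxy.ne
  have hy1y : y1 ≠ y := hy1.ne'
  have hy2y : y2 ≠ y := hy2.ne'
  have hu1u : u1 ≠ u := hu1.ne'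
  have huniq := nbr_le3_unique' hdu hvu.symm hu1 (Ne.symm hu1v)
  by_cases hblock0 : F y2 = e ∧ {z | G.Adj y2 z ∧ z ≠ v ∧ F z = e}.ncard ≠ 0
  · by_cases hblock1 : ∃ z, G.Adj u z ∧ z ≠ v ∧ z ≠ u1 ∧ F z = b ∧
        {t | G.Adj z t ∧ t ≠ v ∧ F t = b}.ncard ≠ 0
    · -- MB2 : u := 2, v := e
      obtain ⟨u2, hu2adj, hu2v, hu2u1, hFu2, -⟩ := hblock1
      have hNu : ∀ z, G.Adj u z → z = v ∨ z = u1 ∨ z = u2 := by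
        intro z hz
        by_cases h1 : z = v
        · exact Or.inl h1
        · by_cases h2 : z = u1
          · exact Or.inr (Or.inl h2)
          · exact Or.inr (Or.inr (huniq z u2 hz h1 h2 hu2adj hu2v hu2u1))
      set g : V → Fin 3 := fun z => if z = v then e else if z = u then 2 else F z with hg
      have hgv : g v = e := by simp [hg]
      have hgu : g u = 2 := by simp [hg, huv]
      have hgo : ∀ z, z ≠ v → z ≠ u → g z = F z := fun z h1 h2 => by simp [hg, h1, h2]
      refine ⟨g, fun w => ?_⟩
      by_cases hwv : w = v
      · subst hwv
        rw [hgv]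
        refine le_trans (le_of_eq (ncard_zero_of ?_)) (Nat.zero_le _)
        rintro z ⟨hadj, hcol⟩
        rcases hNv z hadj with h | h | h
        · rw [h, hgo x hxv (Ne.symm hux), hFx] at hcol; exact he2 hcol.symm
        · rw [h, hgo y hyv (Ne.symm huy), hFy] at hcol; exact hbe hcol
        · rw [h, hgu] at hcol; exact he2 hcol.symm
      · by_cases hwu : w = u
        · subst hwu
          rw [hgu]
          refine le_trans (le_of_eq (ncard_zero_of ?_)) (Nat.zero_le _)
          rintro z ⟨hadj, hcol⟩
          rcases hNu z hadj with h | h | h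
          · rw [h, hgv] at hcol; exact he2 hcol
          · rw [h, hgo u1 hu1v hu1u, hFu1] at hcol; exact he2 hcol
          · rw [h, hgo u2 hu2v hu2adj.ne', hFu2] at hcol; exact hb2 hcol
        · have hgw : g w = F w := hgo w hwv hwu
          by_cases hw2 : F w = 2
          · refine w2_zero hfv hwv hw2 hgw ?_
            intro z hadj hcol
            by_cases hzv : z = v
            · rw [hzv, hgv] at hcol; exact (he2 hcol).elim
            · by_cases hzu : z = u
              · rcases hNu w ((hzu ▸ hadj).symm) with h | h | h
                · exact (hwv h).elim
                · rw [h, hFu1] at hw2; exact (he2 hw2).elim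
                · rw [h, hFu2] at hw2; exact (hb2 hw2).elim
              · rw [hgo z hzv hzu] at hcol; exact ⟨hzv, hcol⟩
          · refine sub_old hfv hwv hgw ?_
            intro z hadj hcol
            by_cases hzv : z = v
            · rw [hzv, hgv] at hcol
              rcases hNv w ((hzv ▸ hadj).symm) with h | h | h
              · rw [h, hFx] at hcol; exact (he2 hcol).elim
              · rw [h, hFy] at hcol; exact (hbe hcol.symm).elim
              · exact (hwu h).elim
            · by_cases hzu : z = u
              · rw [hzu, hgu] at hcol; exact (hw2 hcol.symm).elim
              · rw [hgo z hzv hzu] at hcol; exact ⟨hzv, hcol⟩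
    · -- MB0' : u := b, v := e
      push_neg at hblock1
      set g : V → Fin 3 := fun z => if z = v then e else if z = u then b else F z with hg
      have hgv : g v = e := by simp [hg]
      have hgu : g u = b := by simp [hg, huv]
      have hgo : ∀ z, z ≠ v → z ≠ u → g z = F z := fun z h1 h2 => by simp [hg, h1, h2]
      refine ⟨g, fun w => ?_⟩
      by_cases hwv : w = v
      · subst hwv
        rw [hgv]
        refine le_trans (le_of_eq (ncard_zero_of ?_)) (Nat.zero_le _)
        rintro z ⟨hadj, hcol⟩
        rcases hNv z hadj with h | h | h
        · rw [h, hgo x hxv (Ne.symm hux), hFx] at hcol; exact he2 hcol.symm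
        · rw [h, hgo y hyv (Ne.symm huy), hFy] at hcol; exact hbe hcol
        · rw [h, hgu] at hcol; exact hbe hcol
      · by_cases hwu : w = u
        · subst hwu
          rw [hgu, defect1 hb2]
          refine ncard_le_one_of_subsing ?_
          rintro z ⟨hz, hcz⟩ z' ⟨hz', hcz'⟩
          have hzv : z ≠ v := by rintro rfl; rw [hgv] at hcz; exact (hbe hcz.symm).elim
          have hzu1 : z ≠ u1 := by
            intro hh; rw [hh, hgo u1 hu1v hu1u, hFu1] at hcz; exact (hbe hcz.symm).elim
          have hz'v : z' ≠ v := by rintro rfl; rw [hgv] at hcz'; exact (hbe hcz'.symm).elim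
          have hz'u1 : z' ≠ u1 := by
            intro hh; rw [hh, hgo u1 hu1v hu1u, hFu1] at hcz'; exact (hbe hcz'.symm).elim
          exact huniq z z' hz hzv hzu1 hz' hz'v hz'u1
        · have hgw : g w = F w := hgo w hwv hwu
          by_cases hw2 : F w = 2
          · refine w2_zero hfv hwv hw2 hgw ?_
            intro z hadj hcol
            by_cases hzv : z = v
            · rw [hzv, hgv] at hcol; exact (he2 hcol).elim
            · by_cases hzu : z = u
              · rw [hzu, hgu] at hcol; exact (hb2 hcol).elim
              · rw [hgo z hzv hzu] at hcol; exact ⟨hzv, hcol⟩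
          · by_cases hwu2 : G.Adj w u ∧ F w = b
            · have hwu1 : w ≠ u1 := by
                intro hh; rw [hh, hFu1] at hwu2; exact hbe hwu2.2.symm
              have h0 : {t | G.Adj w t ∧ t ≠ v ∧ F t = b}.ncard = 0 :=
                hblock1 w hwu2.1.symm hwv hwu1 hwu2.2
              rw [hgw, hwu2.2, defect1 hb2]
              refine ncard_le_one_of_sub (a := u) ?_
              rintro z ⟨hadj, hcol⟩
              by_cases hzv : z = v
              · rw [hzv, hgv] at hcol; exact (hbe hcol.symm).elim
              · by_cases hzu : z = u
                · exact hzu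
                · rw [hgo z hzv hzu] at hcol
                  exact (empty_of_ncard0 h0 z ⟨hadj, hzv, hcol⟩).elim
            · refine sub_old hfv hwv hgw ?_
              intro z hadj hcol
              by_cases hzv : z = v
              · rw [hzv, hgv] at hcol
                rcases hNv w ((hzv ▸ hadj).symm) with h | h | h
                · rw [h, hFx] at hcol; exact (he2 hcol).elim
                · rw [h, hFy] at hcol; exact (hbe hcol.symm).elim
                · exact (hwu h).elim
              · by_cases hzu : z = u
                · rw [hzu, hgu] at hcol
                  exact (hwu2 ⟨hzu ▸ hadj, hcol.symm⟩).elim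
                · rw [hgo z hzv hzu] at hcol; exact ⟨hzv, hcol⟩
  · -- MB0 : y := e, v := b
    push_neg at hblock0
    set g : V → Fin 3 := fun z => if z = v then b else if z = y then e else F z with hg
    have hgv : g v = b := by simp [hg]
    have hgy : g y = e := by simp [hg, hyv]
    have hgo : ∀ z, z ≠ v → z ≠ y → g z = F z := fun z h1 h2 => by simp [hg, h1, h2]
    refine ⟨g, fun w => ?_⟩
    by_cases hwv : w = v
    · subst hwv
      rw [hgv]
      refine le_trans (le_of_eq (ncard_zero_of ?_)) (Nat.zero_le _)
      rintro z ⟨hadj, hcol⟩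
      rcases hNv z hadj with h | h | h
      · rw [h, hgo x hxv hxny, hFx] at hcol; exact hb2 hcol.symm
      · rw [h, hgy] at hcol; exact hbe hcol.symm
      · rw [h, hgo u huv huy, hFu] at hcol; exact hbe hcol.symm
    · by_cases hwy : w = y
      · subst hwy
        rw [hgy, defect1 he2]
        refine ncard_le_one_of_sub (a := y2) ?_
        rintro z ⟨hadj, hcol⟩
        rcases hNy z hadj with h | h | h | h
        · rw [h, hgv] at hcol; exact (hbe hcol).elim
        · rw [h, hgo x hxv hxny, hFx] at hcol; exact (he2 hcol.symm).elim
        · rw [h, hgo y1 hy1v hy1y, hFy1] at hcol; exact (hbe hcol).elim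
        · exact h
      · have hgw : g w = F w := hgo w hwv hwy
        by_cases hw2 : F w = 2
        · refine w2_zero hfv hwv hw2 hgw ?_
          intro z hadj hcol
          by_cases hzv : z = v
          · rw [hzv, hgv] at hcol; exact (hb2 hcol).elim
          · by_cases hzy : z = y
            · rw [hzy, hgy] at hcol; exact (he2 hcol).elim
            · rw [hgo z hzv hzy] at hcol; exact ⟨hzv, hcol⟩
        · by_cases hsp : w = y2 ∧ F y2 = e
          · have h0 := hblock0 hsp.2
            have hFw : F w = e := by rw [hsp.1, hsp.2]
            rw [hgw, hFw, defect1 he2]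
            refine ncard_le_one_of_sub (a := y) ?_
            rintro z ⟨hadj, hcol⟩
            by_cases hzv : z = v
            · rw [hzv, hgv] at hcol; exact (hbe hcol).elim
            · by_cases hzy : z = y
              · exact hzy
              · rw [hgo z hzv hzy] at hcol
                exact (empty_of_ncard0 h0 z ⟨hsp.1 ▸ hadj, hzv, hcol⟩).elim
          · refine sub_old hfv hwv hgw ?_
            intro z hadj hcol
            by_cases hzv : z = v
            · rw [hzv, hgv] at hcol
              rcases hNv w ((hzv ▸ hadj).symm) with h | h | h
              · rw [h, hFx] at hcol; exact (hb2 hcol).elim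
              · exact (hwy h).elim
              · rw [h, hFu] at hcol; exact (hbe hcol).elim
            · by_cases hzy : z = y
              · rw [hzy, hgy] at hcol
                rcases hNy w ((hzy ▸ hadj).symm) with h | h | h | h
                · exact (hwv h).elim
                · rw [h, hFx] at hcol; exact (he2 hcol).elim
                · rw [h, hFy1] at hcol; exact (hbe hcol.symm).elim
                · exact (hsp ⟨h, h ▸ hcol.symm⟩).elim
              · rw [hgo z hzv hzy] at hcol; exact ⟨hzv, hcol⟩

end caseB

section graphhelpers
variable {V : Type*} [Fintype V] [DecidableEq V] {G : SimpleGraph V} [DecidableRel G.Adj]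

lemma nbr3 {v x y u : V} (hd : G.degree v = 3) (hx : G.Adj v x) (hy : G.Adj v y)
    (hu : G.Adj v u) (hxy : x ≠ y) (hxu : x ≠ u) (hyu : y ≠ u) :
    ∀ z, G.Adj v z → z = x ∨ z = y ∨ z = u := by
  intro z hz
  have hsub : ({x, y, u} : Finset V) ⊆ G.neighborFinset v := by
    intro w hw
    simp only [Finset.mem_insert, Finset.mem_singleton] at hw
    rcases hw with rfl | rfl | rfl <;> simp [SimpleGraph.mem_neighborFinset, hx, hy, hu]
  have hcard : ({x, y, u} : Finset V).card = 3 := by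
    rw [Finset.card_insert_of_notMem (by simp [hxy, hxu]),
      Finset.card_insert_of_notMem (by simp [hyu]), Finset.card_singleton]
  have heq : ({x, y, u} : Finset V) = G.neighborFinset v := by
    apply Finset.eq_of_subset_of_card_le hsub
    rw [hcard]
    rw [← SimpleGraph.card_neighborFinset_eq_degree] at hd
    omega
  have : z ∈ ({x, y, u} : Finset V) := by rw [heq]; simp [SimpleGraph.mem_neighborFinset, hz]
  simpa using this

lemma nbr4 {x a b c : V} (hd : G.degree x = 4) (ha : G.Adj x a) (hb : G.Adj x b)
    (hc : G.Adj x c) (hab : a ≠ b) (hac : a ≠ c) (hbc : b ≠ c) :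
    ∃ d, G.Adj x d ∧ d ≠ a ∧ d ≠ b ∧ d ≠ c ∧
      ∀ z, G.Adj x z → z = a ∨ z = b ∨ z = c ∨ z = d := by
  have hsub : ({a, b, c} : Finset V) ⊆ G.neighborFinset x := by
    intro w hw
    simp only [Finset.mem_insert, Finset.mem_singleton] at hw
    rcases hw with rfl | rfl | rfl <;> simp [SimpleGraph.mem_neighborFinset, ha, hb, hc]
  have hcard : ({a, b, c} : Finset V).card = 3 := by
    rw [Finset.card_insert_of_notMem (by simp [hab, hac]),
      Finset.card_insert_of_notMem (by simp [hbc]), Finset.card_singleton]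
  have hdeg : (G.neighborFinset x).card = 4 := by
    rw [SimpleGraph.card_neighborFinset_eq_degree]; exact hd
  have hsd : (G.neighborFinset x \ {a, b, c}).card = 1 := by
    rw [Finset.card_sdiff_of_subset hsub, hdeg, hcard]
  obtain ⟨d, hd1⟩ := Finset.card_eq_one.1 hsd
  have hdm : d ∈ G.neighborFinset x \ ({a, b, c} : Finset V) := by rw [hd1]; simp
  simp only [Finset.mem_sdiff, SimpleGraph.mem_neighborFinset, Finset.mem_insert,
    Finset.mem_singleton, not_or] at hdm
  refine ⟨d, hdm.1, hdm.2.1, hdm.2.2.1, hdm.2.2.2, fun z hz => ?_⟩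
  by_cases h1 : z = a; · left; exact h1
  by_cases h2 : z = b; · right; left; exact h2
  by_cases h3 : z = c; · right; right; left; exact h3
  right; right; right
  have : z ∈ G.neighborFinset x \ ({a, b, c} : Finset V) := by
    simp [SimpleGraph.mem_neighborFinset, hz, h1, h2, h3]
  rw [hd1] at this; simpa using this

end graphhelpers

lemma transport {V : Type*} [Fintype V] [DecidableEq V] (G : SimpleGraph V) (v : V)
    (hcol : Colorable3 ((⊤ : G.Subgraph).deleteVerts {v}).coe ![1,1,0]) :
    ∃ F : V → Fin 3, ∀ w, w ≠ v →
      {z | G.Adj w z ∧ z ≠ v ∧ F z = F w}.ncard ≤ ![1,1,0] (F w) := by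
  obtain ⟨f, hf⟩ := hcol
  have hmem : ∀ z : V, z ≠ v → z ∈ ((⊤ : G.Subgraph).deleteVerts {v}).verts := by
    intro z hz; simp [hz]
  refine ⟨fun z => if h : z = v then 0 else f ⟨z, hmem z h⟩, fun w hw => ?_⟩
  set F : V → Fin 3 := fun z => if h : z = v then 0 else f ⟨z, hmem z h⟩ with hF
  have hFval : ∀ (z : V) (hz : z ≠ v), F z = f ⟨z, hmem z hz⟩ := by
    intro z hz; simp [hF, hz]
  have hFw := hFval w hw
  have key : {z | G.Adj w z ∧ z ≠ v ∧ F z = F w} =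
      Subtype.val '' {b | ((⊤ : G.Subgraph).deleteVerts {v}).coe.Adj ⟨w, hmem w hw⟩ b ∧
        f b = f ⟨w, hmem w hw⟩} := by
    ext z
    simp only [Set.mem_setOf_eq, Set.mem_image]
    constructor
    · rintro ⟨hadj, hzv, hc⟩
      refine ⟨⟨z, hmem z hzv⟩, ⟨?_, ?_⟩, rfl⟩
      · simp only [SimpleGraph.Subgraph.coe_adj, SimpleGraph.Subgraph.deleteVerts_adj,
          SimpleGraph.Subgraph.top_adj]
        simp [hadj, hzv, hw]
      · rw [← hFval z hzv, hc, hFw]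
    · rintro ⟨⟨z', hz'⟩, ⟨hadj, hc⟩, rfl⟩
      have hz'v : z' ≠ v := by simpa using (Set.mem_diff _).1 hz' |>.2
      simp only [SimpleGraph.Subgraph.coe_adj, SimpleGraph.Subgraph.deleteVerts_adj,
        SimpleGraph.Subgraph.top_adj] at hadj
      exact ⟨hadj.2.2.2.2, hz'v, by rw [hFval z' hz'v, hc, hFw]⟩
  rw [key, Set.ncard_image_of_injective _ Subtype.val_injective, hFw]
  exact hf ⟨w, hmem w hw⟩

/-- If `v x y` is a triangle of `G` with `d(v) = 3` and `d(x) = d(y) = 4`, then the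
pendant neighbor of `v` (its unique neighbor outside `{x, y}`) has degree at least 4. -/
theorem stmt5 {V : Type*} [Fintype V] (G : SimpleGraph V) [DecidableRel G.Adj]
    (hG : NoC45 G) (hmin : MinCE G ![1, 1, 0]) :
    ∀ v x y u : V, TriOn G v x y →
      G.degree v = 3 → G.degree x = 4 → G.degree y = 4 →
      G.Adj v u → u ≠ x → u ≠ y → 4 ≤ G.degree u := by
  classical
  intro v x y u htri hdv hdx hdy hvu hux huy
  by_contra hcon
  have hdu : G.degree u ≤ 3 := by omega
  obtain ⟨hvx, hxy, hvy⟩ := htri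
  have hne : ((⊤ : G.Subgraph).deleteVerts {v}) ≠ ⊤ := by
    intro h
    have hv : v ∈ ((⊤ : G.Subgraph).deleteVerts {v}).verts := by rw [h]; trivial
    simp at hv
  obtain ⟨F, hfv'⟩ := transport G v (hmin.2 _ hne)
  have hfv : OKv G F v := hfv'
  have hNv := nbr3 hdv hvx hvy hvu hxy.ne (Ne.symm hux) (Ne.symm huy)
  suffices hcol : Colorable3 G ![1,1,0] by exact hmin.1 hcol
  have mS : ∀ (w0 : V) (c : Fin 3), G.Adj v w0 → F w0 = c → c ≠ 2 →
      (F x = c → x = w0) → (F y = c → y = w0) → (F u = c → u = w0) →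
      {z | G.Adj w0 z ∧ z ≠ v ∧ F z = c}.ncard = 0 → Colorable3 G ![1,1,0] :=
    fun w0 c h1 h2 h3 h4 h5 h6 h7 => moveS hfv hNv h1 h2 h3 h4 h5 h6 h7
  by_cases h2 : F x ≠ 2 ∧ F y ≠ 2 ∧ F u ≠ 2
  · exact moveV hfv hNv 2 h2.1 h2.2.1 h2.2.2
  by_cases h0 : F x ≠ 0 ∧ F y ≠ 0 ∧ F u ≠ 0
  · exact moveV hfv hNv 0 h0.1 h0.2.1 h0.2.2
  by_cases h1 : F x ≠ 1 ∧ F y ≠ 1 ∧ F u ≠ 1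
  · exact moveV hfv hNv 1 h1.1 h1.2.1 h1.2.2
  rcases fin3cases (F x) with hfx | hfx | hfx <;> rcases fin3cases (F y) with hfy | hfy | hfy <;>
    rcases fin3cases (F u) with hfu | hfu | hfu
  all_goals first
    | exact (h2 ⟨by rw [hfx]; decide, by rw [hfy]; decide, by rw [hfu]; decide⟩).elim
    | exact (h0 ⟨by rw [hfx]; decide, by rw [hfy]; decide, by rw [hfu]; decide⟩).elim
    | exact (h1 ⟨by rw [hfx]; decide, by rw [hfy]; decide, by rw [hfu]; decide⟩).elim
    | skip
  -- P1 : (F x, F y, F u) = (0, 1, 2)  → caseA a=0 b=1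
  · by_cases s0 : {z | G.Adj x z ∧ z ≠ v ∧ F z = 0}.ncard = 0
    · exact mS x 0 hvx hfx (by decide) (fun _ => rfl)
        (fun h => absurd h (by rw [hfy]; decide)) (fun h => absurd h (by rw [hfu]; decide)) s0
    by_cases s1 : {z | G.Adj y z ∧ z ≠ v ∧ F z = 1}.ncard = 0
    · exact mS y 1 hvy hfy (by decide) (fun h => absurd h (by rw [hfx]; decide))
        (fun _ => rfl) (fun h => absurd h (by rw [hfu]; decide)) s1
    obtain ⟨x1, hx1adj, hx1v, hFx1⟩ := Set.nonempty_of_ncard_ne_zero s0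
    obtain ⟨y1, hy1adj, hy1v, hFy1⟩ := Set.nonempty_of_ncard_ne_zero s1
    have hyx1 : y ≠ x1 := fun h => by rw [← h, hfy] at hFx1; exact absurd hFx1 (by decide)
    have hxy1 : x ≠ y1 := fun h => by rw [← h, hfx] at hFy1; exact absurd hFy1 (by decide)
    obtain ⟨x2, hx2adj, hx2v, hx2y, hx2x1, hNx⟩ :=
      nbr4 hdx hvx.symm hxy hx1adj hvy.ne (Ne.symm hx1v) hyx1
    obtain ⟨y2, hy2adj, hy2v, hy2x, hy2y1, hNy⟩ :=
      nbr4 hdy hvy.symm hxy.symm hy1adj hvx.ne (Ne.symm hy1v) hxy1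
    exact caseA (a := 0) (b := 1) hfv hNv hNx hNy hvx hvy hvu hxy hx1adj hx2adj hy1adj hy2adj
      hx1v hx2v hy1v hy2v hx2y hy2x hux huy (by decide) (by decide) (by decide)
      hfx hfy hfu hFx1 hFy1
  -- P5 : (0, 2, 1) → caseB swapped, b=0 e=1
  · have hNv' : ∀ z, G.Adj v z → z = y ∨ z = x ∨ z = u := fun z hz => by
      rcases hNv z hz with h | h | h
      exacts [Or.inr (Or.inl h), Or.inl h, Or.inr (Or.inr h)]
    by_cases s0 : {z | G.Adj x z ∧ z ≠ v ∧ F z = 0}.ncard = 0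
    · exact mS x 0 hvx hfx (by decide) (fun _ => rfl)
        (fun h => absurd h (by rw [hfy]; decide)) (fun h => absurd h (by rw [hfu]; decide)) s0
    by_cases s1 : {z | G.Adj u z ∧ z ≠ v ∧ F z = 1}.ncard = 0
    · exact mS u 1 hvu hfu (by decide) (fun h => absurd h (by rw [hfx]; decide))
        (fun h => absurd h (by rw [hfy]; decide)) (fun _ => rfl) s1
    obtain ⟨x1, hx1adj, hx1v, hFx1⟩ := Set.nonempty_of_ncard_ne_zero s0
    obtain ⟨u1, hu1adj, hu1v, hFu1⟩ := Set.nonempty_of_ncard_ne_zero s1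
    have hyx1 : y ≠ x1 := fun h => by rw [← h, hfy] at hFx1; exact absurd hFx1 (by decide)
    obtain ⟨x2, hx2adj, hx2v, hx2y, hx2x1, hNx⟩ :=
      nbr4 hdx hvx.symm hxy hx1adj hvy.ne (Ne.symm hx1v) hyx1
    exact caseB (x := y) (y := x) (b := 0) (e := 1) hfv hNv' hNx hvy hvx hvu hxy.symm
      hx1adj hx2adj hu1adj hx1v hx2v hx2y hu1v huy hux hdu
      (by decide) (by decide) (by decide) hfy hfx hfu hFx1 hFu1
  -- P2 : (1, 0, 2) → caseA a=1 b=0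
  · by_cases s0 : {z | G.Adj y z ∧ z ≠ v ∧ F z = 0}.ncard = 0
    · exact mS y 0 hvy hfy (by decide) (fun h => absurd h (by rw [hfx]; decide))
        (fun _ => rfl) (fun h => absurd h (by rw [hfu]; decide)) s0
    by_cases s1 : {z | G.Adj x z ∧ z ≠ v ∧ F z = 1}.ncard = 0
    · exact mS x 1 hvx hfx (by decide) (fun _ => rfl)
        (fun h => absurd h (by rw [hfy]; decide)) (fun h => absurd h (by rw [hfu]; decide)) s1
    obtain ⟨y1, hy1adj, hy1v, hFy1⟩ := Set.nonempty_of_ncard_ne_zero s0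
    obtain ⟨x1, hx1adj, hx1v, hFx1⟩ := Set.nonempty_of_ncard_ne_zero s1
    have hyx1 : y ≠ x1 := fun h => by rw [← h, hfy] at hFx1; exact absurd hFx1 (by decide)
    have hxy1 : x ≠ y1 := fun h => by rw [← h, hfx] at hFy1; exact absurd hFy1 (by decide)
    obtain ⟨x2, hx2adj, hx2v, hx2y, hx2x1, hNx⟩ :=
      nbr4 hdx hvx.symm hxy hx1adj hvy.ne (Ne.symm hx1v) hyx1
    obtain ⟨y2, hy2adj, hy2v, hy2x, hy2y1, hNy⟩ :=
      nbr4 hdy hvy.symm hxy.symm hy1adj hvx.ne (Ne.symm hy1v) hxy1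
    exact caseA (a := 1) (b := 0) hfv hNv hNx hNy hvx hvy hvu hxy hx1adj hx2adj hy1adj hy2adj
      hx1v hx2v hy1v hy2v hx2y hy2x hux huy (by decide) (by decide) (by decide)
      hfx hfy hfu hFx1 hFy1
  -- P6 : (1, 2, 0) → caseB swapped, b=1 e=0
  · have hNv' : ∀ z, G.Adj v z → z = y ∨ z = x ∨ z = u := fun z hz => by
      rcases hNv z hz with h | h | h
      exacts [Or.inr (Or.inl h), Or.inl h, Or.inr (Or.inr h)]
    by_cases s0 : {z | G.Adj u z ∧ z ≠ v ∧ F z = 0}.ncard = 0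
    · exact mS u 0 hvu hfu (by decide) (fun h => absurd h (by rw [hfx]; decide))
        (fun h => absurd h (by rw [hfy]; decide)) (fun _ => rfl) s0
    by_cases s1 : {z | G.Adj x z ∧ z ≠ v ∧ F z = 1}.ncard = 0
    · exact mS x 1 hvx hfx (by decide) (fun _ => rfl)
        (fun h => absurd h (by rw [hfy]; decide)) (fun h => absurd h (by rw [hfu]; decide)) s1
    obtain ⟨u1, hu1adj, hu1v, hFu1⟩ := Set.nonempty_of_ncard_ne_zero s0
    obtain ⟨x1, hx1adj, hx1v, hFx1⟩ := Set.nonempty_of_ncard_ne_zero s1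
    have hyx1 : y ≠ x1 := fun h => by rw [← h, hfy] at hFx1; exact absurd hFx1 (by decide)
    obtain ⟨x2, hx2adj, hx2v, hx2y, hx2x1, hNx⟩ :=
      nbr4 hdx hvx.symm hxy hx1adj hvy.ne (Ne.symm hx1v) hyx1
    exact caseB (x := y) (y := x) (b := 1) (e := 0) hfv hNv' hNx hvy hvx hvu hxy.symm
      hx1adj hx2adj hu1adj hx1v hx2v hx2y hu1v huy hux hdu
      (by decide) (by decide) (by decide) hfy hfx hfu hFx1 hFu1
  -- P3 : (2, 0, 1) → caseB b=0 e=1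
  · by_cases s0 : {z | G.Adj y z ∧ z ≠ v ∧ F z = 0}.ncard = 0
    · exact mS y 0 hvy hfy (by decide) (fun h => absurd h (by rw [hfx]; decide))
        (fun _ => rfl) (fun h => absurd h (by rw [hfu]; decide)) s0
    by_cases s1 : {z | G.Adj u z ∧ z ≠ v ∧ F z = 1}.ncard = 0
    · exact mS u 1 hvu hfu (by decide) (fun h => absurd h (by rw [hfx]; decide))
        (fun h => absurd h (by rw [hfy]; decide)) (fun _ => rfl) s1
    obtain ⟨y1, hy1adj, hy1v, hFy1⟩ := Set.nonempty_of_ncard_ne_zero s0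
    obtain ⟨u1, hu1adj, hu1v, hFu1⟩ := Set.nonempty_of_ncard_ne_zero s1
    have hxy1 : x ≠ y1 := fun h => by rw [← h, hfx] at hFy1; exact absurd hFy1 (by decide)
    obtain ⟨y2, hy2adj, hy2v, hy2x, hy2y1, hNy⟩ :=
      nbr4 hdy hvy.symm hxy.symm hy1adj hvx.ne (Ne.symm hy1v) hxy1
    exact caseB (b := 0) (e := 1) hfv hNv hNy hvx hvy hvu hxy hy1adj hy2adj hu1adj
      hy1v hy2v hy2x hu1v hux huy hdu (by decide) (by decide) (by decide)
      hfx hfy hfu hFy1 hFu1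
  -- P4 : (2, 1, 0) → caseB b=1 e=0
  · by_cases s0 : {z | G.Adj u z ∧ z ≠ v ∧ F z = 0}.ncard = 0
    · exact mS u 0 hvu hfu (by decide) (fun h => absurd h (by rw [hfx]; decide))
        (fun h => absurd h (by rw [hfy]; decide)) (fun _ => rfl) s0
    by_cases s1 : {z | G.Adj y z ∧ z ≠ v ∧ F z = 1}.ncard = 0
    · exact mS y 1 hvy hfy (by decide) (fun h => absurd h (by rw [hfx]; decide))
        (fun _ => rfl) (fun h => absurd h (by rw [hfu]; decide)) s1
    obtain ⟨u1, hu1adj, hu1v, hFu1⟩ := Set.nonempty_of_ncard_ne_zero s0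
    obtain ⟨y1, hy1adj, hy1v, hFy1⟩ := Set.nonempty_of_ncard_ne_zero s1
    have hxy1 : x ≠ y1 := fun h => by rw [← h, hfx] at hFy1; exact absurd hFy1 (by decide)
    obtain ⟨y2, hy2adj, hy2v, hy2x, hy2y1, hNy⟩ :=
      nbr4 hdy hvy.symm hxy.symm hy1adj hvx.ne (Ne.symm hy1v) hxy1
    exact caseB (b := 1) (e := 0) hfv hNv hNy hvx hvy hvu hxy hy1adj hy2adj hu1adj
      hy1v hy2v hy2x hu1v hux huy hdu (by decide) (by decide) (by decide)
      hfx hfy hfu hFy1 hFu1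
end

section
/- G contains no triangle uvw with d(u) = 3 and d(v) = d(w) = 4 in which v is a special 4-vertex, i.e., v lies on exactly one triangle (namely uvw) and is adjacent to two bad 3-vertices not on that triangle. -/
/-- A bad 3-vertex: a vertex of degree 3 lying on a triangle. -/
def Bad3 {V : Type*} [Fintype V] (G : SimpleGraph V) [DecidableRel G.Adj] (v : V) : Prop :=
  G.degree v = 3 ∧ ∃ x y, TriOn G v x y

open SimpleGraph

/-- From a 4-cycle we get a contradiction with `NoC45`. -/
lemma cyc4' {V : Type*} {G : SimpleGraph V} (hG : NoC45 G) {p q r s : V}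
    (h1 : G.Adj p q) (h2 : G.Adj q r) (h3 : G.Adj r s) (h4 : G.Adj s p)
    (hpr : p ≠ r) (hqs : q ≠ s) : False := by
  have hw : (h1.toWalk.append (h2.toWalk.append (h3.toWalk.append h4.toWalk))).IsCycle := by
    have e1 := h1.ne; have e2 := h2.ne; have e3 := h3.ne; have e4 := h4.ne
    have e4' := h4.ne'
    simp [SimpleGraph.Walk.isCycle_def, SimpleGraph.Walk.isTrail_def, Sym2.eq, Sym2.rel_iff',
      and_assoc]
    tauto
  have := (hG p _ hw).1
  simp [SimpleGraph.Walk.length_append] at this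

/-- Pick a color distinct from two given colors. -/
def pk2 (c1 c2 : Fin 3) : Fin 3 :=
  if 0 ≠ c1 ∧ 0 ≠ c2 then 0 else if 1 ≠ c1 ∧ 1 ≠ c2 then 1 else 2

lemma pk2_spec : ∀ c1 c2 : Fin 3, pk2 c1 c2 ≠ c1 ∧ pk2 c1 c2 ≠ c2 := by decide

/-- Pick a color distinct from a given color, avoiding color `2`. -/
def pk1 (c1 : Fin 3) : Fin 3 := if c1 = 0 then 1 else 0

lemma pk1_spec : ∀ c1 : Fin 3, pk1 c1 ≠ c1 ∧ pk1 c1 ≠ 2 := by decide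

lemma core : ∀ au aw aa ab : Fin 3, au ≠ 2 → ∃ av : Fin 3,
    ((av = 2 ∧ aw ≠ 2 ∧ aa ≠ 2 ∧ ab ≠ 2) ∨
     (av ≠ 2 ∧ ¬(au = av ∧ aw = av) ∧ ¬(au = av ∧ aa = av) ∧ ¬(au = av ∧ ab = av)
      ∧ ¬(aw = av ∧ aa = av) ∧ ¬(aw = av ∧ ab = av) ∧ ¬(aa = av ∧ ab = av))) := by decide

lemma cval : ∀ i : Fin 3, i ≠ 2 → (![1,1,0] : Fin 3 → ℕ) i = 1 := by decide

/-- `G` contains no triangle `u v w` with `d(u) = 3`, `d(v) = d(w) = 4`, in which `v`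
is a special 4-vertex: `v` lies on exactly one triangle (namely `u v w`) and is
adjacent to two bad 3-vertices not on that triangle. -/
theorem stmt6 {V : Type*} [Fintype V] (G : SimpleGraph V) [DecidableRel G.Adj]
    (hG : NoC45 G) (hmin : MinCE G ![1, 1, 0]) :
    ¬ ∃ u v w : V, TriOn G u v w ∧
      G.degree u = 3 ∧ G.degree v = 4 ∧ G.degree w = 4 ∧
      (∀ a b c : V, TriOn G a b c → v ∈ ({a, b, c} : Set V) →
        ({a, b, c} : Set V) = {u, v, w}) ∧
      (∃ a b : V, a ≠ b ∧ a ∉ ({u, v, w} : Set V) ∧ b ∉ ({u, v, w} : Set V) ∧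
        G.Adj v a ∧ G.Adj v b ∧ Bad3 G a ∧ Bad3 G b) := by
  classical
  rintro ⟨u, v, w, ⟨huv, hvw, huw⟩, hdu, hdv, hdw, huniq,
    a, b, hab, haU, hbU, hva, hvb, ⟨hda, x1, y1, hax1, hx1y1, hay1⟩,
    ⟨hdb, x2, y2, hbx2, hx2y2, hby2⟩⟩
  -- basic distinctness
  have hvu : G.Adj v u := huv.symm
  -- triangles through v are {u,v,w}
  have key : ∀ p q : V, G.Adj v p → G.Adj v q → G.Adj p q →
      p ∈ ({u, v, w} : Set V) ∧ q ∈ ({u, v, w} : Set V) := by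
    intro p q h1 h2 h3
    have ht : TriOn G v p q := ⟨h1, h3, h2⟩
    have he := huniq v p q ht (by simp)
    constructor
    · have : p ∈ ({v, p, q} : Set V) := by simp
      rwa [he] at this
    · have : q ∈ ({v, p, q} : Set V) := by simp
      rwa [he] at this
  have hnab : ¬ G.Adj a b := fun h => haU ((key a b hva hvb h).1)
  have hnua : ¬ G.Adj u a := fun h => haU ((key u a hvu hva h).2)
  have hnub : ¬ G.Adj u b := fun h => hbU ((key u b hvu hvb h).2)
  have hnwa : ¬ G.Adj w a := fun h => haU ((key w a hvw hva h).2)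
  have hnwb : ¬ G.Adj w b := fun h => hbU ((key w b hvw hvb h).2)
  -- no vertex other than v is adjacent to two distinct neighbors of v
  have hone : ∀ p r r' : V, G.Adj v r → G.Adj v r' → r ≠ r' →
      G.Adj p r → G.Adj p r' → p = v := by
    intro p r r' h1 h2 hne h3 h4
    by_contra hpv
    exact cyc4' hG h1 h3.symm h4 h2.symm (fun h => hpv h.symm) hne
  -- a ≠ u etc.
  have hau : a ≠ u := fun h => haU (by simp [h])
  have hav : a ≠ v := fun h => haU (by simp [h])
  have haw : a ≠ w := fun h => haU (by simp [h])
  have hbu : b ≠ u := fun h => hbU (by simp [h])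
  have hbv : b ≠ v := fun h => hbU (by simp [h])
  have hbw : b ≠ w := fun h => hbU (by simp [h])
  -- v is not on the triangles of a and b
  have hvx1 : v ≠ x1 := by
    intro h
    exact haU (by
      have := huniq a x1 y1 ⟨hax1, hx1y1, hay1⟩ (by simp [h])
      have ha : a ∈ ({a, x1, y1} : Set V) := by simp
      rwa [this] at ha)
  have hvy1 : v ≠ y1 := by
    intro h
    exact haU (by
      have := huniq a x1 y1 ⟨hax1, hx1y1, hay1⟩ (by simp [h])
      have ha : a ∈ ({a, x1, y1} : Set V) := by simp
      rwa [this] at ha)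
  have hvx2 : v ≠ x2 := by
    intro h
    exact hbU (by
      have := huniq b x2 y2 ⟨hbx2, hx2y2, hby2⟩ (by simp [h])
      have hb : b ∈ ({b, x2, y2} : Set V) := by simp
      rwa [this] at hb)
  have hvy2 : v ≠ y2 := by
    intro h
    exact hbU (by
      have := huniq b x2 y2 ⟨hbx2, hx2y2, hby2⟩ (by simp [h])
      have hb : b ∈ ({b, x2, y2} : Set V) := by simp
      rwa [this] at hb)
  -- exact neighborhood of v
  have hNv : ∀ q, G.Adj v q ↔ (q = u ∨ q = w ∨ q = a ∨ q = b) := by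
    have hsub : ({u, w, a, b} : Finset V) ⊆ G.neighborFinset v := by
      intro q hq
      simp only [Finset.mem_insert, Finset.mem_singleton] at hq
      rw [SimpleGraph.mem_neighborFinset]
      rcases hq with h | h | h | h <;> subst h
      · exact hvu
      · exact hvw
      · exact hva
      · exact hvb
    have hcard : ({u, w, a, b} : Finset V).card = 4 := by
      rw [Finset.card_insert_of_notMem (by simp [huw.ne, Ne.symm hau, Ne.symm hbu]),
        Finset.card_insert_of_notMem (by simp [Ne.symm haw, Ne.symm hbw]),
        Finset.card_insert_of_notMem (by simp [hab]), Finset.card_singleton]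
    have := Finset.eq_of_subset_of_card_le hsub (by rw [hcard]; exact le_of_eq hdv)
    intro q
    rw [← SimpleGraph.mem_neighborFinset, ← this]
    simp
  -- exact neighborhood of u
  obtain ⟨z, hz⟩ : ∃ z, G.neighborFinset u \ {v, w} = {z} := by
    apply Finset.card_eq_one.mp
    have hsub : ({v, w} : Finset V) ⊆ G.neighborFinset u := by
      intro q hq
      simp only [Finset.mem_insert, Finset.mem_singleton] at hq
      rw [SimpleGraph.mem_neighborFinset]
      rcases hq with h | h <;> subst h
      · exact huv
      · exact huw
    rw [Finset.card_sdiff_of_subset hsub, Finset.card_insert_of_notMem (by simp [hvw.ne]),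
      Finset.card_singleton]
    have : (G.neighborFinset u).card = 3 := hdu
    omega
  have hzmem : z ∈ G.neighborFinset u \ {v, w} := by rw [hz]; simp
  have huz : G.Adj u z := by
    rw [← SimpleGraph.mem_neighborFinset]
    exact (Finset.mem_sdiff.mp hzmem).1
  have hzv : z ≠ v := by
    have := (Finset.mem_sdiff.mp hzmem).2; simp at this; exact this.1
  have hzw : z ≠ w := by
    have := (Finset.mem_sdiff.mp hzmem).2; simp at this; exact this.2
  have hNu : ∀ q, G.Adj u q ↔ (q = v ∨ q = w ∨ q = z) := by
    intro q
    constructor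
    · intro h
      by_cases h1 : q = v
      · exact Or.inl h1
      by_cases h2 : q = w
      · exact Or.inr (Or.inl h2)
      have : q ∈ G.neighborFinset u \ {v, w} := by
        rw [Finset.mem_sdiff, SimpleGraph.mem_neighborFinset]
        exact ⟨h, by simp [h1, h2]⟩
      rw [hz] at this
      simp at this
      exact Or.inr (Or.inr this)
    · rintro (h | h | h) <;> subst h
      · exact huv
      · exact huw
      · exact huz
  -- exact neighborhood of w
  obtain ⟨s, t, hst, hstw⟩ : ∃ s t, s ≠ t ∧ G.neighborFinset w \ {u, v} = {s, t} := by
    apply Finset.card_eq_two.mp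
    have hsub : ({u, v} : Finset V) ⊆ G.neighborFinset w := by
      intro q hq
      simp only [Finset.mem_insert, Finset.mem_singleton] at hq
      rw [SimpleGraph.mem_neighborFinset]
      rcases hq with h | h <;> subst h
      · exact huw.symm
      · exact hvw.symm
    rw [Finset.card_sdiff_of_subset hsub, Finset.card_insert_of_notMem (by simp [huv.ne]),
      Finset.card_singleton]
    have : (G.neighborFinset w).card = 4 := hdw
    omega
  have hsmem : s ∈ G.neighborFinset w \ {u, v} := by rw [hstw]; simp
  have htmem : t ∈ G.neighborFinset w \ {u, v} := by rw [hstw]; simp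
  have hws : G.Adj w s := by
    rw [← SimpleGraph.mem_neighborFinset]; exact (Finset.mem_sdiff.mp hsmem).1
  have hwt : G.Adj w t := by
    rw [← SimpleGraph.mem_neighborFinset]; exact (Finset.mem_sdiff.mp htmem).1
  have hsu : s ≠ u := by have := (Finset.mem_sdiff.mp hsmem).2; simp at this; exact this.1
  have hsv : s ≠ v := by have := (Finset.mem_sdiff.mp hsmem).2; simp at this; exact this.2
  have htu : t ≠ u := by have := (Finset.mem_sdiff.mp htmem).2; simp at this; exact this.1
  have htv : t ≠ v := by have := (Finset.mem_sdiff.mp htmem).2; simp at this; exact this.2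
  have hNw : ∀ q, G.Adj w q ↔ (q = u ∨ q = v ∨ q = s ∨ q = t) := by
    intro q
    constructor
    · intro h
      by_cases h1 : q = u
      · exact Or.inl h1
      by_cases h2 : q = v
      · exact Or.inr (Or.inl h2)
      have : q ∈ G.neighborFinset w \ {u, v} := by
        rw [Finset.mem_sdiff, SimpleGraph.mem_neighborFinset]
        exact ⟨h, by simp [h1, h2]⟩
      rw [hstw] at this
      simp at this
      rcases this with h | h
      · exact Or.inr (Or.inr (Or.inl h))
      · exact Or.inr (Or.inr (Or.inr h))
    · rintro (h | h | h | h) <;> subst h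
      · exact huw.symm
      · exact hvw.symm
      · exact hws
      · exact hwt
  -- exact neighborhood of a
  have hNa : ∀ q, G.Adj a q ↔ (q = v ∨ q = x1 ∨ q = y1) := by
    have hsub : ({v, x1, y1} : Finset V) ⊆ G.neighborFinset a := by
      intro q hq
      simp only [Finset.mem_insert, Finset.mem_singleton] at hq
      rw [SimpleGraph.mem_neighborFinset]
      rcases hq with h | h | h <;> subst h
      · exact hva.symm
      · exact hax1
      · exact hay1
    have hcard : ({v, x1, y1} : Finset V).card = 3 := by
      rw [Finset.card_insert_of_notMem (by simp [hvx1, hvy1]),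
        Finset.card_insert_of_notMem (by simp [hx1y1.ne]), Finset.card_singleton]
    have heq := Finset.eq_of_subset_of_card_le hsub (by rw [hcard]; exact le_of_eq hda)
    intro q
    rw [← SimpleGraph.mem_neighborFinset, ← heq]
    simp
  -- exact neighborhood of b
  have hNb : ∀ q, G.Adj b q ↔ (q = v ∨ q = x2 ∨ q = y2) := by
    have hsub : ({v, x2, y2} : Finset V) ⊆ G.neighborFinset b := by
      intro q hq
      simp only [Finset.mem_insert, Finset.mem_singleton] at hq
      rw [SimpleGraph.mem_neighborFinset]
      rcases hq with h | h | h <;> subst h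
      · exact hvb.symm
      · exact hbx2
      · exact hby2
    have hcard : ({v, x2, y2} : Finset V).card = 3 := by
      rw [Finset.card_insert_of_notMem (by simp [hvx2, hvy2]),
        Finset.card_insert_of_notMem (by simp [hx2y2.ne]), Finset.card_singleton]
    have heq := Finset.eq_of_subset_of_card_le hsub (by rw [hcard]; exact le_of_eq hdb)
    intro q
    rw [← SimpleGraph.mem_neighborFinset, ← heq]
    simp
  -- further distinctness
  have hzu : z ≠ u := huz.ne'
  have hza : z ≠ a := fun h => hnua (h ▸ huz)
  have hzb : z ≠ b := fun h => hnub (h ▸ huz)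
  have hsw : s ≠ w := hws.ne'
  have hsa : s ≠ a := fun h => hnwa (h ▸ hws)
  have hsb : s ≠ b := fun h => hnwb (h ▸ hws)
  have htw : t ≠ w := hwt.ne'
  have hta : t ≠ a := fun h => hnwa (h ▸ hwt)
  have htb : t ≠ b := fun h => hnwb (h ▸ hwt)
  have hx1a : x1 ≠ a := hax1.ne'
  have hx1u : x1 ≠ u := fun h => hnua ((h ▸ hax1).symm)
  have hx1w : x1 ≠ w := fun h => hnwa ((h ▸ hax1).symm)
  have hx1b : x1 ≠ b := fun h => hnab (h ▸ hax1)
  have hy1a : y1 ≠ a := hay1.ne'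
  have hy1u : y1 ≠ u := fun h => hnua ((h ▸ hay1).symm)
  have hy1w : y1 ≠ w := fun h => hnwa ((h ▸ hay1).symm)
  have hy1b : y1 ≠ b := fun h => hnab (h ▸ hay1)
  have hx2b : x2 ≠ b := hbx2.ne'
  have hx2u : x2 ≠ u := fun h => hnub ((h ▸ hbx2).symm)
  have hx2w : x2 ≠ w := fun h => hnwb ((h ▸ hbx2).symm)
  have hx2a : x2 ≠ a := fun h => hnab ((h ▸ hbx2).symm)
  have hy2b : y2 ≠ b := hby2.ne'
  have hy2u : y2 ≠ u := fun h => hnub ((h ▸ hby2).symm)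
  have hy2w : y2 ≠ w := fun h => hnwb ((h ▸ hby2).symm)
  have hy2a : y2 ≠ a := fun h => hnab ((h ▸ hby2).symm)
  -- the coloring of G - v
  set H : G.Subgraph := (⊤ : G.Subgraph).deleteVerts {v} with hH
  have hHne : H ≠ ⊤ := by
    intro h
    have h1 : v ∈ H.verts := by rw [h, SimpleGraph.Subgraph.verts_top]; trivial
    rw [hH] at h1
    simp [SimpleGraph.Subgraph.deleteVerts_verts] at h1
  obtain ⟨f, hf⟩ := hmin.2 H hHne
  have hmem : ∀ p : V, p ≠ v → p ∈ H.verts := by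
    intro p hp
    rw [hH]
    simp [SimpleGraph.Subgraph.deleteVerts_verts, hp]
  let g : V → Fin 3 := fun p => if h : p = v then 0 else f ⟨p, hmem p h⟩
  have hgdef : ∀ (p : V) (h : p ≠ v), g p = f ⟨p, hmem p h⟩ := fun p h => dif_neg h
  have hg : ∀ (p : V), p ≠ v → {q | G.Adj p q ∧ q ≠ v ∧ g q = g p}.ncard ≤ ![1,1,0] (g p) := by
    intro p hp
    have himg : Subtype.val '' {q : H.verts |
          H.coe.Adj ⟨p, hmem p hp⟩ q ∧ f q = f ⟨p, hmem p hp⟩}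
        = {q | G.Adj p q ∧ q ≠ v ∧ g q = g p} := by
      ext q
      simp only [Set.mem_image, Set.mem_setOf_eq]
      constructor
      · rintro ⟨⟨q', hq'⟩, ⟨hadj, hcol⟩, rfl⟩
        have hqv : q' ≠ v := by
          rw [hH] at hq'
          simp [SimpleGraph.Subgraph.deleteVerts_verts] at hq'
          exact hq'
        rw [SimpleGraph.Subgraph.coe_adj] at hadj
        simp only [hH, SimpleGraph.Subgraph.deleteVerts_adj, SimpleGraph.Subgraph.verts_top,
          Set.mem_univ, Set.mem_singleton_iff, true_and, SimpleGraph.Subgraph.top_adj] at hadj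
        refine ⟨by tauto, hqv, ?_⟩
        rw [hgdef q' hqv, hgdef p hp]
        exact hcol
      · rintro ⟨hadj, hqv, hcol⟩
        refine ⟨⟨q, hmem q hqv⟩, ⟨?_, ?_⟩, rfl⟩
        · rw [SimpleGraph.Subgraph.coe_adj]
          simp only [hH, SimpleGraph.Subgraph.deleteVerts_adj, SimpleGraph.Subgraph.verts_top,
            Set.mem_univ, Set.mem_singleton_iff, true_and, SimpleGraph.Subgraph.top_adj]
          tauto
        · rw [hgdef q hqv, hgdef p hp] at hcol
          exact hcol
    rw [← himg, Set.ncard_image_of_injective _ Subtype.val_injective, hgdef p hp]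
    exact hf ⟨p, hmem p hp⟩
  -- the recoloring
  set αu : Fin 3 := pk1 (g z) with hαu
  set αw : Fin 3 := pk2 (g s) (g t) with hαw
  set αa : Fin 3 := pk2 (g x1) (g y1) with hαa
  set αb : Fin 3 := pk2 (g x2) (g y2) with hαb
  obtain ⟨av, hcore⟩ := core αu αw αa αb (pk1_spec (g z)).2
  have H1 : ¬(αu = av ∧ αw = av) := by
    rcases hcore with ⟨h2, _, _, _⟩ | ⟨_, c1, _, _, _, _, _⟩
    · rintro ⟨e, _⟩; exact (pk1_spec (g z)).2 (e.trans h2)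
    · exact c1
  have H2 : ¬(αu = av ∧ αa = av) := by
    rcases hcore with ⟨h2, _, _, _⟩ | ⟨_, _, c2, _, _, _, _⟩
    · rintro ⟨e, _⟩; exact (pk1_spec (g z)).2 (e.trans h2)
    · exact c2
  have H3 : ¬(αu = av ∧ αb = av) := by
    rcases hcore with ⟨h2, _, _, _⟩ | ⟨_, _, _, c3, _, _, _⟩
    · rintro ⟨e, _⟩; exact (pk1_spec (g z)).2 (e.trans h2)
    · exact c3
  have H4 : ¬(αw = av ∧ αa = av) := by
    rcases hcore with ⟨h2, hw2, _, _⟩ | ⟨_, _, _, _, c4, _, _⟩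
    · rintro ⟨e, _⟩; exact hw2 (e.trans h2)
    · exact c4
  have H5 : ¬(αw = av ∧ αb = av) := by
    rcases hcore with ⟨h2, hw2, _, _⟩ | ⟨_, _, _, _, _, c5, _⟩
    · rintro ⟨e, _⟩; exact hw2 (e.trans h2)
    · exact c5
  have H6 : ¬(αa = av ∧ αb = av) := by
    rcases hcore with ⟨h2, _, ha2, _⟩ | ⟨_, _, _, _, _, _, c6⟩
    · rintro ⟨e, _⟩; exact ha2 (e.trans h2)
    · exact c6
  have H7 : αa = 2 → av ≠ 2 := by
    rcases hcore with ⟨_, _, ha2, _⟩ | ⟨hne2, _, _, _, _, _, _⟩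
    · intro h; exact absurd h ha2
    · intro _; exact hne2
  have H8 : αw = 2 → av ≠ 2 := by
    rcases hcore with ⟨_, hw2, _, _⟩ | ⟨hne2, _, _, _, _, _, _⟩
    · intro h; exact absurd h hw2
    · intro _; exact hne2
  have H9 : αb = 2 → av ≠ 2 := by
    rcases hcore with ⟨_, _, _, hb2⟩ | ⟨hne2, _, _, _, _, _, _⟩
    · intro h; exact absurd h hb2
    · intro _; exact hne2
  have H10 : av = 2 → αu ≠ 2 := fun _ _ => (pk1_spec (g z)).2 (by assumption)
  have hu1 : αu ≠ g z := (pk1_spec (g z)).1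
  have hu2 : αu ≠ 2 := (pk1_spec (g z)).2
  have hw1 : αw ≠ g s := (pk2_spec (g s) (g t)).1
  have hw2t : αw ≠ g t := (pk2_spec (g s) (g t)).2
  have hA1 : αa ≠ g x1 := (pk2_spec (g x1) (g y1)).1
  have hA2 : αa ≠ g y1 := (pk2_spec (g x1) (g y1)).2
  have hB1 : αb ≠ g x2 := (pk2_spec (g x2) (g y2)).1
  have hB2 : αb ≠ g y2 := (pk2_spec (g x2) (g y2)).2
  set F : V → Fin 3 := fun p => if p = v then av else if p = u then αu else if p = w then αw
    else if p = a then αa else if p = b then αb else g p with hF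
  have hFv : F v = av := by simp [hF]
  have hFu : F u = αu := by simp [hF, huv.ne]
  have hFw : F w = αw := by simp [hF, hvw.ne', huw.ne']
  have hFa : F a = αa := by simp [hF, hav, hau, haw]
  have hFb : F b = αb := by simp [hF, hbv, hbu, hbw, hab.symm]
  have hFg : ∀ q, q ≠ v → q ≠ u → q ≠ w → q ≠ a → q ≠ b → F q = g q := by
    intro q h1 h2 h3 h4 h5; simp [hF, h1, h2, h3, h4, h5]
  apply hmin.1
  refine ⟨F, ?_⟩
  intro p
  by_cases hpv : p = v
  · subst hpv
    by_cases hav2 : av = 2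
    · have hset : {q | G.Adj p q ∧ F q = F p} = ∅ := by
        ext q
        simp only [Set.mem_setOf_eq, Set.mem_empty_iff_false, iff_false, not_and]
        intro hadj hcol
        rw [hFv, hav2] at hcol
        rcases (hNv q).mp hadj with rfl | rfl | rfl | rfl
        · rw [hFu] at hcol; exact hu2 hcol
        · rw [hFw] at hcol; exact H8 hcol hav2
        · rw [hFa] at hcol; exact H7 hcol hav2
        · rw [hFb] at hcol; exact H9 hcol hav2
      rw [hset, hFv, hav2]
      simp
    · rw [hFv, cval av hav2]
      refine (Set.ncard_le_one (Set.toFinite _)).mpr ?_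
      have cls : ∀ q, G.Adj p q → F q = av →
          ((q = u ∧ αu = av) ∨ (q = w ∧ αw = av) ∨ (q = a ∧ αa = av) ∨ (q = b ∧ αb = av)) := by
        intro q hadj hcol
        rcases (hNv q).mp hadj with rfl | rfl | rfl | rfl
        · exact Or.inl ⟨rfl, by rw [← hFu]; exact hcol⟩
        · exact Or.inr (Or.inl ⟨rfl, by rw [← hFw]; exact hcol⟩)
        · exact Or.inr (Or.inr (Or.inl ⟨rfl, by rw [← hFa]; exact hcol⟩))
        · exact Or.inr (Or.inr (Or.inr ⟨rfl, by rw [← hFb]; exact hcol⟩))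
      intro q1 hq1 q2 hq2
      simp only [Set.mem_setOf_eq] at hq1 hq2
      rcases cls q1 hq1.1 hq1.2 with ⟨e, e1⟩ | ⟨e, e1⟩ | ⟨e, e1⟩ | ⟨e, e1⟩ <;> subst e <;>
          rcases cls q2 hq2.1 hq2.2 with ⟨e', e2⟩ | ⟨e', e2⟩ | ⟨e', e2⟩ | ⟨e', e2⟩ <;> subst e'
      · rfl
      · exact absurd ⟨e1, e2⟩ H1
      · exact absurd ⟨e1, e2⟩ H2
      · exact absurd ⟨e1, e2⟩ H3
      · exact absurd ⟨e2, e1⟩ H1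
      · rfl
      · exact absurd ⟨e1, e2⟩ H4
      · exact absurd ⟨e1, e2⟩ H5
      · exact absurd ⟨e2, e1⟩ H2
      · exact absurd ⟨e2, e1⟩ H4
      · rfl
      · exact absurd ⟨e1, e2⟩ H6
      · exact absurd ⟨e2, e1⟩ H3
      · exact absurd ⟨e2, e1⟩ H5
      · exact absurd ⟨e2, e1⟩ H6
      · rfl
  by_cases hpu : p = u
  · subst hpu
    rw [hFu, cval αu hu2]
    refine (Set.ncard_le_one (Set.toFinite _)).mpr ?_
    have cls : ∀ q, G.Adj p q → F q = αu →
        ((q = v ∧ av = αu) ∨ (q = w ∧ αw = αu)) := by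
      intro q hadj hcol
      rcases (hNu q).mp hadj with rfl | rfl | rfl
      · exact Or.inl ⟨rfl, by rw [← hFv]; exact hcol⟩
      · exact Or.inr ⟨rfl, by rw [← hFw]; exact hcol⟩
      · exfalso
        rw [hFg q hzv hzu hzw hza hzb] at hcol
        exact hu1 hcol.symm
    intro q1 hq1 q2 hq2
    simp only [Set.mem_setOf_eq] at hq1 hq2
    rcases cls q1 hq1.1 hq1.2 with ⟨e, e1⟩ | ⟨e, e1⟩ <;> subst e <;>
        rcases cls q2 hq2.1 hq2.2 with ⟨e', e2⟩ | ⟨e', e2⟩ <;> subst e'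
    · rfl
    · exact absurd ⟨e1.symm, e2.trans e1.symm⟩ H1
    · exact absurd ⟨e2.symm, e1.trans e2.symm⟩ H1
    · rfl
  by_cases hpw : p = w
  · subst hpw
    by_cases hw2 : αw = 2
    · have hset : {q | G.Adj p q ∧ F q = F p} = ∅ := by
        ext q
        simp only [Set.mem_setOf_eq, Set.mem_empty_iff_false, iff_false, not_and]
        intro hadj hcol
        rw [hFw, hw2] at hcol
        rcases (hNw q).mp hadj with rfl | rfl | rfl | rfl
        · rw [hFu] at hcol; exact hu2 hcol
        · rw [hFv] at hcol; exact H8 hw2 hcol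
        · rw [hFg q hsv hsu hsw hsa hsb] at hcol
          exact hw1 (hw2.trans hcol.symm)
        · rw [hFg q htv htu htw hta htb] at hcol
          exact hw2t (hw2.trans hcol.symm)
      rw [hset, hFw, hw2]
      simp
    · rw [hFw, cval αw hw2]
      refine (Set.ncard_le_one (Set.toFinite _)).mpr ?_
      have cls : ∀ q, G.Adj p q → F q = αw →
          ((q = u ∧ αu = αw) ∨ (q = v ∧ av = αw)) := by
        intro q hadj hcol
        rcases (hNw q).mp hadj with rfl | rfl | rfl | rfl
        · exact Or.inl ⟨rfl, by rw [← hFu]; exact hcol⟩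
        · exact Or.inr ⟨rfl, by rw [← hFv]; exact hcol⟩
        · exfalso
          rw [hFg q hsv hsu hsw hsa hsb] at hcol
          exact hw1 hcol.symm
        · exfalso
          rw [hFg q htv htu htw hta htb] at hcol
          exact hw2t hcol.symm
      intro q1 hq1 q2 hq2
      simp only [Set.mem_setOf_eq] at hq1 hq2
      rcases cls q1 hq1.1 hq1.2 with ⟨e, e1⟩ | ⟨e, e1⟩ <;> subst e <;>
          rcases cls q2 hq2.1 hq2.2 with ⟨e', e2⟩ | ⟨e', e2⟩ <;> subst e'
      · rfl
      · exact absurd ⟨e1.trans e2.symm, e2.symm⟩ H1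
      · exact absurd ⟨e2.trans e1.symm, e1.symm⟩ H1
      · rfl
  by_cases hpa : p = a
  · subst hpa
    by_cases ha2 : αa = 2
    · have hset : {q | G.Adj p q ∧ F q = F p} = ∅ := by
        ext q
        simp only [Set.mem_setOf_eq, Set.mem_empty_iff_false, iff_false, not_and]
        intro hadj hcol
        rw [hFa, ha2] at hcol
        rcases (hNa q).mp hadj with rfl | rfl | rfl
        · rw [hFv] at hcol; exact H7 ha2 hcol
        · rw [hFg q hvx1.symm hx1u hx1w hx1a hx1b] at hcol
          exact hA1 (ha2.trans hcol.symm)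
        · rw [hFg q hvy1.symm hy1u hy1w hy1a hy1b] at hcol
          exact hA2 (ha2.trans hcol.symm)
      rw [hset, hFa, ha2]
      simp
    · rw [hFa, cval αa ha2]
      refine (Set.ncard_le_one (Set.toFinite _)).mpr ?_
      have cls : ∀ q, G.Adj p q → F q = αa → q = v := by
        intro q hadj hcol
        rcases (hNa q).mp hadj with rfl | rfl | rfl
        · rfl
        · exfalso
          rw [hFg q hvx1.symm hx1u hx1w hx1a hx1b] at hcol
          exact hA1 hcol.symm
        · exfalso
          rw [hFg q hvy1.symm hy1u hy1w hy1a hy1b] at hcol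
          exact hA2 hcol.symm
      intro q1 hq1 q2 hq2
      simp only [Set.mem_setOf_eq] at hq1 hq2
      rw [cls q1 hq1.1 hq1.2, cls q2 hq2.1 hq2.2]
  by_cases hpb : p = b
  · subst hpb
    by_cases hb2 : αb = 2
    · have hset : {q | G.Adj p q ∧ F q = F p} = ∅ := by
        ext q
        simp only [Set.mem_setOf_eq, Set.mem_empty_iff_false, iff_false, not_and]
        intro hadj hcol
        rw [hFb, hb2] at hcol
        rcases (hNb q).mp hadj with rfl | rfl | rfl
        · rw [hFv] at hcol; exact H9 hb2 hcol
        · rw [hFg q hvx2.symm hx2u hx2w hx2a hx2b] at hcol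
          exact hB1 (hb2.trans hcol.symm)
        · rw [hFg q hvy2.symm hy2u hy2w hy2a hy2b] at hcol
          exact hB2 (hb2.trans hcol.symm)
      rw [hset, hFb, hb2]
      simp
    · rw [hFb, cval αb hb2]
      refine (Set.ncard_le_one (Set.toFinite _)).mpr ?_
      have cls : ∀ q, G.Adj p q → F q = αb → q = v := by
        intro q hadj hcol
        rcases (hNb q).mp hadj with rfl | rfl | rfl
        · rfl
        · exfalso
          rw [hFg q hvx2.symm hx2u hx2w hx2a hx2b] at hcol
          exact hB1 hcol.symm
        · exfalso
          rw [hFg q hvy2.symm hy2u hy2w hy2a hy2b] at hcol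
          exact hB2 hcol.symm
      intro q1 hq1 q2 hq2
      simp only [Set.mem_setOf_eq] at hq1 hq2
      rw [cls q1 hq1.1 hq1.2, cls q2 hq2.1 hq2.2]
  -- generic vertex
  · have hFp : F p = g p := hFg p hpv hpu hpw hpa hpb
    have hsub : {q | G.Adj p q ∧ F q = F p} ⊆ {q | G.Adj p q ∧ q ≠ v ∧ g q = g p} := by
      rintro q ⟨hadj, hcol⟩
      rw [hFp] at hcol
      by_cases h1 : q = v
      · subst h1
        exact absurd ((hNv p).mp hadj.symm) (by simp [hpu, hpw, hpa, hpb])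
      by_cases h2 : q = u
      · subst h2
        exfalso
        rcases (hNu p).mp hadj.symm with rfl | rfl | rfl
        · exact hpv rfl
        · exact hpw rfl
        · rw [hFu] at hcol; exact hu1 hcol
      by_cases h3 : q = w
      · subst h3
        exfalso
        rcases (hNw p).mp hadj.symm with rfl | rfl | rfl | rfl
        · exact hpu rfl
        · exact hpv rfl
        · rw [hFw] at hcol; exact hw1 hcol
        · rw [hFw] at hcol; exact hw2t hcol
      by_cases h4 : q = a
      · subst h4
        exfalso
        rcases (hNa p).mp hadj.symm with rfl | rfl | rfl
        · exact hpv rfl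
        · rw [hFa] at hcol; exact hA1 hcol
        · rw [hFa] at hcol; exact hA2 hcol
      by_cases h5 : q = b
      · subst h5
        exfalso
        rcases (hNb p).mp hadj.symm with rfl | rfl | rfl
        · exact hpv rfl
        · rw [hFb] at hcol; exact hB1 hcol
        · rw [hFb] at hcol; exact hB2 hcol
      · rw [hFg q h1 h2 h3 h4 h5] at hcol
        exact ⟨hadj, h1, hcol⟩
    conv_rhs => rw [hFp]
    exact le_trans (Set.ncard_le_ncard hsub (Set.toFinite _)) (hg p hpv)
end

section
/- Every vertex of degree 3 in G has a neighbor of degree at least 6. -/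
/-- Every vertex of degree 3 in `G` (a minimal non-`(3,0,0)`-colorable graph without
4- and 5-cycles) has a neighbor of degree at least 6. -/
theorem stmt14 {V : Type*} [Fintype V] (G : SimpleGraph V) [DecidableRel G.Adj]
    (hG : NoC45 G) (hmin : MinCE G ![3, 0, 0]) :
    ∀ v : V, G.degree v = 3 → ∃ u : V, G.Adj v u ∧ 6 ≤ G.degree u := by
  classical
  intro v hv
  by_contra hcon
  push_neg at hcon
  obtain ⟨hnc, hsub⟩ := hmin
  apply hnc
  have hdeg : ∀ u, G.Adj v u → G.degree u ≤ 5 := fun u hu =>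
    Nat.lt_succ_iff.mp (hcon u hu)
  -- the subgraph `G - v`
  have hvmem : ∀ u : V, u ≠ v → u ∈ ((⊤ : G.Subgraph).deleteVerts {v}).verts := by
    intro u hu; simp [hu]
  have hHne : (⊤ : G.Subgraph).deleteVerts {v} ≠ ⊤ := by
    intro h
    have h2 : v ∈ ((⊤ : G.Subgraph).deleteVerts {v}).verts := by rw [h]; trivial
    simp at h2
  obtain ⟨f, hf⟩ := hsub _ hHne
  set f₀ : V → Fin 3 := fun u => if h : u = v then 0 else f ⟨u, hvmem u h⟩ with hf₀
  have hf₀ne : ∀ u (h : u ≠ v), f₀ u = f ⟨u, hvmem u h⟩ := by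
    intro u h; simp [hf₀, h]
  -- the key property of f₀
  have hK : ∀ u, u ≠ v →
      {w | G.Adj u w ∧ w ≠ v ∧ f₀ w = f₀ u}.ncard ≤ ![3,0,0] (f₀ u) := by
    intro u hu
    have himg : {w | G.Adj u w ∧ w ≠ v ∧ f₀ w = f₀ u} =
        Subtype.val '' {q | ((⊤ : G.Subgraph).deleteVerts {v}).coe.Adj ⟨u, hvmem u hu⟩ q
          ∧ f q = f ⟨u, hvmem u hu⟩} := by
      ext w
      simp only [Set.mem_image, Set.mem_setOf_eq, SimpleGraph.Subgraph.coe_adj,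
        SimpleGraph.Subgraph.deleteVerts_adj, SimpleGraph.Subgraph.top_adj,
        Set.mem_singleton_iff, Subtype.exists]
      constructor
      · rintro ⟨h1, h2, h3⟩
        exact ⟨w, hvmem w h2, ⟨⟨trivial, hu, trivial, h2, h1⟩,
          by rw [← hf₀ne w h2, h3, hf₀ne u hu]⟩, rfl⟩
      · rintro ⟨w', hw', ⟨⟨_, _, _, hw2, hadj⟩, hcol⟩, rfl⟩
        refine ⟨hadj, hw2, ?_⟩
        rw [hf₀ne w' hw2, hf₀ne u hu]; exact hcol
    rw [himg, Set.ncard_image_of_injective _ Subtype.val_injective, hf₀ne u hu]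
    exact hf _
  have hns : ∀ x : V, (G.neighborSet x).ncard = G.degree x := by
    intro x
    rw [Set.ncard_eq_toFinset_card', Set.toFinset_card]
    exact G.card_neighborSet_eq_degree x
  have hN : (G.neighborSet v).ncard = 3 := by rw [hns]; exact hv
  have hcz : (![3,0,0] : Fin 3 → ℕ) 0 = 3 := rfl
  have hcnz : ∀ a : Fin 3, a ≠ 0 → (![3,0,0] : Fin 3 → ℕ) a = 0 := by decide
  by_cases hA : ∃ a : Fin 3, a ≠ 0 ∧ ∀ u, G.Adj v u → f₀ u ≠ a
  · -- color v with a color missing among its neighbors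
    obtain ⟨a, ha0, ha⟩ := hA
    set g := Function.update f₀ v a with hg
    have hgv : g v = a := Function.update_self v a f₀
    have hgw : ∀ w, w ≠ v → g w = f₀ w := fun w hw => Function.update_of_ne hw a f₀
    refine ⟨g, fun u => ?_⟩
    by_cases hu : u = v
    · subst hu
      have : {w | G.Adj u w ∧ g w = g u} = ∅ := by
        ext w
        simp only [Set.mem_setOf_eq, Set.mem_empty_iff_false, iff_false, not_and]
        intro hadj hcol
        rw [hgw w hadj.ne', hgv] at hcol
        exact ha w hadj hcol
      rw [this]; simp
    · have hsubT : {w | G.Adj u w ∧ g w = g u} ⊆ {w | G.Adj u w ∧ w ≠ v ∧ f₀ w = f₀ u} := by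
        rintro w ⟨h1, h2⟩
        have hwv : w ≠ v := by
          rintro rfl
          rw [hgv, hgw u hu] at h2
          exact ha u h1.symm h2.symm
        rw [hgw w hwv, hgw u hu] at h2
        exact ⟨h1, hwv, h2⟩
      calc {w | G.Adj u w ∧ g w = g u}.ncard
          ≤ {w | G.Adj u w ∧ w ≠ v ∧ f₀ w = f₀ u}.ncard :=
            Set.ncard_le_ncard hsubT (Set.toFinite _)
        _ ≤ ![3,0,0] (f₀ u) := hK u hu
        _ = ![3,0,0] (g u) := by rw [hgw u hu]
  · push_neg at hA
    obtain ⟨u1, hu1a, hu1c⟩ := hA 1 (by decide)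
    obtain ⟨u2, hu2a, hu2c⟩ := hA 2 (by decide)
    -- at most one neighbor of v is colored 0
    have hN0 : {w | G.Adj v w ∧ f₀ w = 0}.ncard ≤ 1 := by
      have hsub0 : {w | G.Adj v w ∧ f₀ w = 0} ⊆ G.neighborSet v := fun w hw => hw.1
      have h12 : 1 < (G.neighborSet v \ {w | G.Adj v w ∧ f₀ w = 0}).ncard := by
        rw [Set.one_lt_ncard (Set.toFinite _)]
        refine ⟨u1, ⟨hu1a, ?_⟩, u2, ⟨hu2a, ?_⟩, ?_⟩
        · simp only [Set.mem_setOf_eq, not_and]; intro _ h; rw [hu1c] at h; exact absurd h (by decide)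
        · simp only [Set.mem_setOf_eq, not_and]; intro _ h; rw [hu2c] at h; exact absurd h (by decide)
        · rintro rfl; rw [hu1c] at hu2c; exact absurd hu2c (by decide)
      have heq := Set.ncard_diff_add_ncard_of_subset hsub0 (Set.toFinite _)
      omega
    by_cases hB : ∀ z, G.Adj v z → f₀ z = 0 → {w | G.Adj z w ∧ w ≠ v ∧ f₀ w = 0}.ncard ≤ 2
    · -- color v with 0
      set g := Function.update f₀ v 0 with hg
      have hgv : g v = 0 := Function.update_self v 0 f₀
      have hgw : ∀ w, w ≠ v → g w = f₀ w := fun w hw => Function.update_of_ne hw 0 f₀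
      refine ⟨g, fun u => ?_⟩
      by_cases hu : u = v
      · subst hu
        calc {w | G.Adj u w ∧ g w = g u}.ncard
            ≤ (G.neighborSet u).ncard := Set.ncard_le_ncard (fun w hw => hw.1) (Set.toFinite _)
          _ = 3 := hN
          _ = ![3,0,0] (g u) := by rw [hgv]; rfl
      · by_cases hc : G.Adj u v ∧ f₀ u = 0
        · have hsubT : {w | G.Adj u w ∧ g w = g u} ⊆
              insert v {w | G.Adj u w ∧ w ≠ v ∧ f₀ w = f₀ u} := by
            rintro w ⟨h1, h2⟩
            by_cases hwv : w = v
            · exact Or.inl hwv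
            · rw [hgw w hwv, hgw u hu] at h2
              exact Or.inr ⟨h1, hwv, h2⟩
          have hB2 := hB u hc.1.symm hc.2
          calc {w | G.Adj u w ∧ g w = g u}.ncard
              ≤ (insert v {w | G.Adj u w ∧ w ≠ v ∧ f₀ w = f₀ u}).ncard :=
                Set.ncard_le_ncard hsubT (Set.toFinite _)
            _ ≤ {w | G.Adj u w ∧ w ≠ v ∧ f₀ w = f₀ u}.ncard + 1 := Set.ncard_insert_le _ _
            _ ≤ 2 + 1 := by
                have : {w | G.Adj u w ∧ w ≠ v ∧ f₀ w = f₀ u} =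
                    {w | G.Adj u w ∧ w ≠ v ∧ f₀ w = 0} := by rw [hc.2]
                rw [this]; omega
            _ = ![3,0,0] (g u) := by rw [hgw u hu, hc.2]; rfl
        · have hsubT : {w | G.Adj u w ∧ g w = g u} ⊆
              {w | G.Adj u w ∧ w ≠ v ∧ f₀ w = f₀ u} := by
            rintro w ⟨h1, h2⟩
            have hwv : w ≠ v := by
              rintro rfl
              rw [hgv, hgw u hu] at h2
              exact hc ⟨h1, h2.symm⟩
            rw [hgw w hwv, hgw u hu] at h2
            exact ⟨h1, hwv, h2⟩
          calc {w | G.Adj u w ∧ g w = g u}.ncard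
              ≤ {w | G.Adj u w ∧ w ≠ v ∧ f₀ w = f₀ u}.ncard :=
                Set.ncard_le_ncard hsubT (Set.toFinite _)
            _ ≤ ![3,0,0] (f₀ u) := hK u hu
            _ = ![3,0,0] (g u) := by rw [hgw u hu]
    · -- recolor a bad neighbor z, then color v with 0
      push_neg at hB
      obtain ⟨z, hvz, hz0, hz3⟩ := hB
      have hzv : z ≠ v := hvz.ne'
      set S2 := {w | G.Adj z w ∧ w ≠ v ∧ f₀ w ≠ 0} with hS2
      have hS2le : S2.ncard ≤ 1 := by
        have hdisj : Disjoint {w | G.Adj z w ∧ w ≠ v ∧ f₀ w = 0} S2 := by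
          rw [Set.disjoint_left]
          rintro w ⟨_, _, h0⟩ ⟨_, _, hne⟩
          exact hne h0
        have hsub12 : {w | G.Adj z w ∧ w ≠ v ∧ f₀ w = 0} ∪ S2 ⊆ G.neighborSet z \ {v} := by
          rintro w (⟨h1, h2, _⟩ | ⟨h1, h2, _⟩) <;> exact ⟨h1, h2⟩
        have hvmemz : ({v} : Set V) ⊆ G.neighborSet z := by
          simp [SimpleGraph.mem_neighborSet, hvz.symm]
        have h1 := Set.ncard_diff_add_ncard_of_subset hvmemz (Set.toFinite _)
        have h2 := Set.ncard_union_eq hdisj (Set.toFinite _) (Set.toFinite _)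
        have h3 : ({w | G.Adj z w ∧ w ≠ v ∧ f₀ w = 0} ∪ S2).ncard ≤
            (G.neighborSet z \ {v}).ncard := Set.ncard_le_ncard hsub12 (Set.toFinite _)
        have h4 : (G.neighborSet z).ncard ≤ 5 := by rw [hns]; exact hdeg z hvz
        rw [Set.ncard_singleton] at h1
        omega
      have hb : ∃ b : Fin 3, b ≠ 0 ∧ ∀ w ∈ S2, f₀ w ≠ b := by
        by_contra hc
        push_neg at hc
        obtain ⟨w1, hw1, hw1e⟩ := hc 1 (by decide)
        obtain ⟨w2, hw2, hw2e⟩ := hc 2 (by decide)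
        have : 1 < S2.ncard := by
          rw [Set.one_lt_ncard (Set.toFinite _)]
          exact ⟨w1, hw1, w2, hw2, by rintro rfl; rw [hw1e] at hw2e; exact absurd hw2e (by decide)⟩
        omega
      obtain ⟨b, hb0, hbS⟩ := hb
      set g := Function.update (Function.update f₀ z b) v 0 with hg
      have hgv : g v = 0 := Function.update_self v 0 _
      have hgz : g z = b := by
        rw [hg, Function.update_of_ne hzv, Function.update_self]
      have hgw : ∀ w, w ≠ v → w ≠ z → g w = f₀ w := by
        intro w h1 h2
        rw [hg, Function.update_of_ne h1, Function.update_of_ne h2]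
      refine ⟨g, fun u => ?_⟩
      by_cases hu : u = v
      · subst hu
        calc {w | G.Adj u w ∧ g w = g u}.ncard
            ≤ (G.neighborSet u).ncard := Set.ncard_le_ncard (fun w hw => hw.1) (Set.toFinite _)
          _ = 3 := hN
          _ = ![3,0,0] (g u) := by rw [hgv]; rfl
      · by_cases huz : u = z
        · subst huz
          have hTe : {w | G.Adj u w ∧ g w = g u} = ∅ := by
            ext w
            simp only [Set.mem_setOf_eq, Set.mem_empty_iff_false, iff_false, not_and]
            intro hadj hcol
            rw [hgz] at hcol
            have hwz : w ≠ u := hadj.ne'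
            by_cases hwv : w = v
            · subst hwv; rw [hgv] at hcol; exact hb0 hcol.symm
            · rw [hgw w hwv hwz] at hcol
              have hwS2 : w ∈ S2 := ⟨hadj, hwv, by rw [hcol]; exact hb0⟩
              exact hbS w hwS2 hcol
          rw [hTe, Set.ncard_empty]
          exact Nat.zero_le _
        · have hsubT : {w | G.Adj u w ∧ g w = g u} ⊆
              {w | G.Adj u w ∧ w ≠ v ∧ f₀ w = f₀ u} := by
            rintro w ⟨h1, h2⟩
            rw [hgw u hu huz] at h2
            have hwv : w ≠ v := by
              intro hwveq
              rw [hwveq, hgv] at h2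
              rw [hwveq] at h1
              have huN0 : u ∈ {w | G.Adj v w ∧ f₀ w = 0} := ⟨h1.symm, h2.symm⟩
              have hzN0 : z ∈ {w | G.Adj v w ∧ f₀ w = 0} := ⟨hvz, hz0⟩
              exact huz ((Set.ncard_le_one (Set.toFinite _)).mp hN0 u huN0 z hzN0)
            have hwz : w ≠ z := by
              rintro rfl
              rw [hgz] at h2
              have huS2 : u ∈ S2 := ⟨h1.symm, hu, by rw [← h2]; exact hb0⟩
              exact hbS u huS2 h2.symm
            rw [hgw w hwv hwz] at h2
            exact ⟨h1, hwv, h2⟩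
          calc {w | G.Adj u w ∧ g w = g u}.ncard
              ≤ {w | G.Adj u w ∧ w ≠ v ∧ f₀ w = f₀ u}.ncard :=
                Set.ncard_le_ncard hsubT (Set.toFinite _)
            _ ≤ ![3,0,0] (f₀ u) := hK u hu
            _ = ![3,0,0] (g u) := by rw [hgw u hu huz]
end

section
/- For every triangle uvw of G with d(u) = d(v) = 3 and d(w) ≤ 6, the pendant neighbor of u and the pendant neighbor of v each have degree at least 6. -/
theorem Set.eq_of_mem_sdiff_of_ncard_le {α : Type*} {Z N : Set α} (hN : N.Finite) (hZN : Z ⊆ N)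
    (h : N.ncard ≤ Z.ncard + 1) {a b : α} (ha : a ∈ N \ Z) (hb : b ∈ N \ Z) : a = b := by
  have : (N \ Z).ncard ≤ 1 := by rw [Set.ncard_sdiff hZN (hN.subset hZN)]; omega
  exact (Set.ncard_le_one_iff hN.sdiff).mp this ha hb

open Function

namespace SimpleGraph

variable {V : Type*}

-- `Colorable3 G c` unfolds to `∃ f, G.IsDefectiveColoring c f`.
def IsDefectiveColoring (G : SimpleGraph V) (c : Fin 3 → ℕ) (f : V → Fin 3) : Prop :=
  ∀ v, {u | G.Adj v u ∧ f u = f v}.ncard ≤ c (f v)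

def IsSaturated (G : SimpleGraph V) (c : Fin 3 → ℕ) (f : V → Fin 3) (v : V) : Prop :=
  c (f v) ≤ {u | G.Adj v u ∧ f u = f v}.ncard

theorem not_isSaturated_of_ncard_neighborSet_lt [Finite V] {G : SimpleGraph V} {c : Fin 3 → ℕ}
    {f : V → Fin 3} {v : V} (h : (G.neighborSet v).ncard < c (f v)) : ¬ G.IsSaturated c f v :=
  fun hv => (hv.trans (Set.ncard_le_ncard fun _ hu => hu.1)).not_gt h

theorem deleteIncidenceSet_lt {G : SimpleGraph V} {u v : V} (h : G.Adj u v) :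
    G.deleteIncidenceSet u < G :=
  (G.deleteIncidenceSet_le u).lt_of_ne fun he =>
    (deleteIncidenceSet_adj.mp (he.symm ▸ h : (G.deleteIncidenceSet u).Adj u v)).2.1 rfl

namespace IsDefectiveColoring

variable {G H : SimpleGraph V} {c : Fin 3 → ℕ} {f : V → Fin 3}

theorem comap {W : Type*} {K : SimpleGraph W} {g : W → Fin 3} (e : G ≃g K)
    (hg : K.IsDefectiveColoring c g) : G.IsDefectiveColoring c (g ∘ e) := by
  intro v
  have : {u | G.Adj v u ∧ (g ∘ e) u = (g ∘ e) v} = e ⁻¹' {y | K.Adj (e v) y ∧ g y = g (e v)} := by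
    ext u; simp [e.map_adj_iff]
  rw [this, Set.ncard_preimage_of_injective_subset_range e.injective (by simp)]
  exact hg (e v)

theorem of_le [Finite V] (hHG : H ≤ G) (hf : G.IsDefectiveColoring c f) :
    H.IsDefectiveColoring c f := fun v =>
  (Set.ncard_le_ncard (t := {u | G.Adj v u ∧ f u = f v}) fun _ hu => ⟨hHG hu.1, hu.2⟩).trans
    (hf v)

variable [Finite V] [DecidableEq V]

theorem extend {u : V} {k : Fin 3} (hf : (G.deleteIncidenceSet u).IsDefectiveColoring c f)
    (hu : {y | G.Adj u y ∧ f y = k}.ncard ≤ c k)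
    (hnbr : ∀ y, G.Adj u y → f y = k → ¬ (G.deleteIncidenceSet u).IsSaturated c f y) :
    G.IsDefectiveColoring c (update f u k) := by
  intro z
  by_cases hzu : z = u
  · subst hzu
    have hset : {y | G.Adj z y ∧ update f z k y = update f z k z} = {y | G.Adj z y ∧ f y = k} :=
      Set.ext fun y => and_congr_right fun h => by rw [update_self, update_of_ne h.ne']
    rwa [hset, update_self]
  rw [update_of_ne hzu]
  by_cases hz : G.Adj u z ∧ f z = k
  · obtain ⟨huz, rfl⟩ := hz
    have hlt := not_le.mp (hnbr z huz rfl)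
    refine (Set.ncard_le_ncard (t := insert u {y | (G.deleteIncidenceSet u).Adj z y ∧ f y = f z})
      ?_).trans ((Set.ncard_insert_le _ _).trans hlt)
    intro y ⟨hzy, hy⟩
    by_cases hyu : y = u
    · exact Or.inl hyu
    · rw [update_of_ne hyu] at hy
      exact Or.inr ⟨deleteIncidenceSet_adj.mpr ⟨hzy, hzu, hyu⟩, hy⟩
  · refine (Set.ncard_le_ncard ?_).trans (hf z)
    intro y ⟨hzy, hy⟩
    have hyu : y ≠ u := by
      rintro rfl
      rw [update_self] at hy
      exact hz ⟨hzy.symm, hy.symm⟩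
    rw [update_of_ne hyu] at hy
    exact ⟨deleteIncidenceSet_adj.mpr ⟨hzy, hzu, hyu⟩, hy⟩

theorem extend_of_forall_ne {u : V} {k : Fin 3}
    (hf : (G.deleteIncidenceSet u).IsDefectiveColoring c f) (hk : ∀ y, G.Adj u y → f y ≠ k) :
    G.IsDefectiveColoring c (update f u k) :=
  hf.extend (((Set.ncard_eq_zero (Set.toFinite _)).mpr
      (Set.eq_empty_of_forall_notMem fun y hy => hk y hy.1 hy.2)).trans_le (Nat.zero_le _))
    fun y hy hyk => absurd hyk (hk y hy)

theorem update_of_forall_ne {x : V} {k : Fin 3}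
    (hf : G.IsDefectiveColoring c f) (hk : ∀ y, G.Adj x y → f y ≠ k) :
    G.IsDefectiveColoring c (update f x k) :=
  (hf.of_le (G.deleteIncidenceSet_le x)).extend_of_forall_ne hk

end IsDefectiveColoring

section Degree

variable [Fintype V] {G : SimpleGraph V} [DecidableRel G.Adj]

theorem ncard_neighborSet (v : V) : (G.neighborSet v).ncard = G.degree v :=
  (Set.ncard_eq_toFinset_card' _).trans (G.card_neighborFinset_eq_degree v)

theorem ncard_setOf_adj_and_le_degree (v : V) (p : V → Prop) :
    {y | G.Adj v y ∧ p y}.ncard ≤ G.degree v :=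
  (Set.ncard_le_ncard fun _ hy => hy.1).trans (G.ncard_neighborSet v).le

theorem ncard_neighborSet_deleteIncidenceSet_add_one {u z : V} (h : G.Adj z u) :
    ((G.deleteIncidenceSet u).neighborSet z).ncard + 1 = G.degree z := by
  have : (G.deleteIncidenceSet u).neighborSet z = G.neighborSet z \ {u} := by
    ext y
    simp [deleteIncidenceSet_adj, h.ne, and_comm]
  rw [this, Set.ncard_sdiff_singleton_add_one (show u ∈ G.neighborSet z from h), ncard_neighborSet]

theorem exists_adj_iff_of_degree_eq_three [DecidableEq V] {u a b : V} (hu : G.degree u = 3)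
    (ha : G.Adj u a) (hb : G.Adj u b) (hab : a ≠ b) :
    ∃ c, c ≠ a ∧ c ≠ b ∧ ∀ y, G.Adj u y ↔ y = a ∨ y = b ∨ y = c := by
  have hsub : {a, b} ⊆ G.neighborFinset u := by simp [Finset.insert_subset_iff, ha, hb]
  obtain ⟨c, hc⟩ : ∃ c, G.neighborFinset u \ {a, b} = {c} := Finset.card_eq_one.mp <| by
    rw [Finset.card_sdiff_of_subset hsub, card_neighborFinset_eq_degree, hu, Finset.card_pair hab]
  have hN : G.neighborFinset u = {a, b} ∪ {c} := by rw [← hc, Finset.union_sdiff_of_subset hsub]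
  have hcab : c ∉ ({a, b} : Finset V) :=
    (Finset.mem_sdiff.mp (by rw [hc]; exact Finset.mem_singleton_self c)).2
  refine ⟨c, fun h => hcab (by simp [h]), fun h => hcab (by simp [h]), fun y => ?_⟩
  rw [← mem_neighborFinset, hN]
  simp

end Degree

namespace IsSaturated

variable [Finite V] {H : SimpleGraph V} {f : V → Fin 3} {x : V}

theorem exists_ne_zero_forall_adj_ne (hx : f x = 0) (hsat : H.IsSaturated ![3, 0, 0] f x)
    (hdeg : (H.neighborSet x).ncard ≤ 4) : ∃ k ≠ 0, ∀ y, H.Adj x y → f y ≠ k := by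
  set Z := {y | H.Adj x y ∧ f y = 0}
  have h3 : 3 ≤ Z.ncard := by simpa [IsSaturated, hx] using hsat
  have hZ : Z ⊆ H.neighborSet x := fun _ h => h.1
  by_cases h1 : ∃ y, H.Adj x y ∧ f y = 1
  · obtain ⟨y₁, hxy₁, hy₁⟩ := h1
    refine ⟨2, by decide, fun y hxy hy => ?_⟩
    have : y = y₁ := Set.eq_of_mem_sdiff_of_ncard_le (Set.toFinite _) hZ (by omega)
      ⟨hxy, fun h => by simp_all [Z]⟩ ⟨hxy₁, fun h => by simp_all [Z]⟩
    simp_all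
  · push Not at h1
    exact ⟨1, by decide, h1⟩

theorem eq_of_adj_of_eq (hx : f x = 0) (hsat : H.IsSaturated ![3, 0, 0] f x)
    (hdeg : (H.neighborSet x).ncard ≤ 5) {o a b : V} (ho : H.Adj x o) (ho0 : f o ≠ 0)
    (ha : H.Adj x a) (hb : H.Adj x b) (ha0 : f a ≠ 0) (hao : f a ≠ f o) (hba : f b = f a) :
    b = a := by
  set Z := {y | H.Adj x y ∧ f y = 0}
  have h3 : 3 ≤ Z.ncard := by simpa [IsSaturated, hx] using hsat
  have hZ : Z ⊆ H.neighborSet x \ {o} := fun y hy =>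
    ⟨hy.1, fun h => ho0 (by simp_all [Z])⟩
  have hN := Set.ncard_sdiff_singleton_add_one (show o ∈ H.neighborSet x from ho)
  exact Set.eq_of_mem_sdiff_of_ncard_le (Set.toFinite _) hZ (by omega)
    ⟨⟨hb, fun h => by simp_all⟩, fun h => by simp_all [Z]⟩
    ⟨⟨ha, fun h => by simp_all⟩, fun h => by simp_all [Z]⟩

end IsSaturated

section Triangle

variable [Fintype V] {G : SimpleGraph V} [DecidableRel G.Adj] {f : V → Fin 3} {u v w x v' : V}

theorem not_isSaturated_deleteIncidenceSet_of_degree_eq_three (huv : G.Adj u v)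
    (hdv : G.degree v = 3) (hv : f v = 0) :
    ¬ (G.deleteIncidenceSet u).IsSaturated ![3, 0, 0] f v :=
  not_isSaturated_of_ncard_neighborSet_lt <| by
    have := ncard_neighborSet_deleteIncidenceSet_add_one huv.symm
    rw [hv]
    change _ < 3
    omega

variable [DecidableEq V]

theorem colorable3_of_isSaturated_pendant
    (hf : (G.deleteIncidenceSet u).IsDefectiveColoring ![3, 0, 0] f)
    (hNu : ∀ y, G.Adj u y ↔ y = v ∨ y = w ∨ y = x) (hdx : G.degree x ≤ 5) (hx : f x = 0)
    (hsat : (G.deleteIncidenceSet u).IsSaturated ![3, 0, 0] f x) (hv : f v ≠ 0) (hw : f w ≠ 0) :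
    Colorable3 G ![3, 0, 0] := by
  have hux : G.Adj u x := (hNu x).mpr (by simp)
  obtain ⟨k, hk0, hk⟩ := hsat.exists_ne_zero_forall_adj_ne hx <| by
    have := ncard_neighborSet_deleteIncidenceSet_add_one hux.symm
    omega
  refine ⟨_, (hf.update_of_forall_ne hk).extend_of_forall_ne (k := 0) fun y hy => ?_⟩
  rcases (hNu y).mp hy with rfl | rfl | rfl
  · rwa [update_of_ne (by rintro rfl; exact hv hx)]
  · rwa [update_of_ne (by rintro rfl; exact hw hx)]
  · rwa [update_self]

theorem colorable3_of_unique_adj_color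
    (hf : (G.deleteIncidenceSet u).IsDefectiveColoring ![3, 0, 0] f)
    (hNu : ∀ y, G.Adj u y ↔ y = v ∨ y = w ∨ y = x) (hNv : ∀ y, G.Adj v y ↔ y = u ∨ y = w ∨ y = v')
    (hv'w : v' ≠ w) (hdu : G.degree u = 3) (hdv : G.degree v = 3)
    (hv : f v ≠ 0) (hx : f x ≠ 0) (hvx : f v ≠ f x) (hv'x : f v' = f x)
    (hunique : ∀ y, (G.deleteIncidenceSet u).Adj w y → f y = f v → y = v) :
    Colorable3 G ![3, 0, 0] := by
  have huv : G.Adj u v := (hNu v).mpr (by simp)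
  have hvw : G.Adj v w := (hNv w).mpr (by simp)
  have hxv : x ≠ v := by rintro rfl; exact hvx rfl
  -- `w` may take the colour of `v` once `v` is detached; `v` is then reattached with colour `0`.
  have hf₁ : ((G.deleteIncidenceSet u).deleteIncidenceSet v).IsDefectiveColoring ![3, 0, 0]
      (update f w (f v)) :=
    (hf.of_le (deleteIncidenceSet_le _ v)).update_of_forall_ne fun y hy hyv => by
      rw [deleteIncidenceSet_adj] at hy
      exact hy.2.2 (hunique y hy.1 hyv)
  have hf₂ : (G.deleteIncidenceSet u).IsDefectiveColoring ![3, 0, 0]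
      (update (update f w (f v)) v 0) :=
    hf₁.extend_of_forall_ne fun y hy => by
      rw [deleteIncidenceSet_adj] at hy
      rcases (hNv y).mp hy.1 with rfl | rfl | rfl
      · exact absurd rfl hy.2.2
      · rwa [update_self]
      · rwa [update_of_ne hv'w, hv'x]
  refine ⟨_, hf₂.extend (k := 0) ((ncard_setOf_adj_and_le_degree u _).trans hdu.le)
    fun y hy hy0 => ?_⟩
  rcases (hNu y).mp hy with rfl | rfl | rfl
  · exact not_isSaturated_deleteIncidenceSet_of_degree_eq_three huv hdv hy0
  · rw [update_of_ne hvw.ne', update_self] at hy0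
    exact absurd hy0 hv
  · rw [update_of_ne hxv, update_apply] at hy0
    split_ifs at hy0
    exacts [absurd hy0 hv, absurd hy0 hx]

theorem colorable3_of_isSaturated_apex
    (hf : (G.deleteIncidenceSet u).IsDefectiveColoring ![3, 0, 0] f)
    (hNu : ∀ y, G.Adj u y ↔ y = v ∨ y = w ∨ y = x) (hNv : ∀ y, G.Adj v y ↔ y = u ∨ y = w ∨ y = v')
    (hv'w : v' ≠ w) (hdu : G.degree u = 3) (hdv : G.degree v = 3) (hdw : G.degree w ≤ 6)
    (hw : f w = 0) (hsat : (G.deleteIncidenceSet u).IsSaturated ![3, 0, 0] f w)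
    (hv : f v ≠ 0) (hx : f x ≠ 0) (hvx : f v ≠ f x) : Colorable3 G ![3, 0, 0] := by
  have huv : G.Adj u v := (hNu v).mpr (by simp)
  have huw : G.Adj u w := (hNu w).mpr (by simp)
  have hvw : G.Adj v w := (hNv w).mpr (by simp)
  have hxv : x ≠ v := by rintro rfl; exact hvx rfl
  have hxw : x ≠ w := by rintro rfl; exact hx hw
  by_cases ho : ∃ o, (G.deleteIncidenceSet u).Adj w o ∧ f o = f x
  · obtain ⟨o, hwo, ho⟩ := ho
    have hunique : ∀ y, (G.deleteIncidenceSet u).Adj w y → f y = f v → y = v :=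
      fun y hwy hyv => hsat.eq_of_adj_of_eq hw
        (by have := ncard_neighborSet_deleteIncidenceSet_add_one huw.symm; omega)
        hwo (ho ▸ hx) (deleteIncidenceSet_adj.mpr ⟨hvw.symm, huw.ne', huv.ne'⟩) hwy hv
        (ho ▸ hvx) hyv
    by_cases hv' : f v' = f x
    · exact colorable3_of_unique_adj_color hf hNu hNv hv'w hdu hdv hv hx hvx hv' hunique
    have hf₁ := hf.update_of_forall_ne (x := v) (k := f x) fun y hy => by
      rw [deleteIncidenceSet_adj] at hy
      rcases (hNv y).mp hy.1 with rfl | rfl | rfl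
      · exact absurd rfl hy.2.2
      · rw [hw]; exact hx.symm
      · exact hv'
    refine ⟨_, hf₁.extend_of_forall_ne (k := f v) fun y hy => ?_⟩
    rcases (hNu y).mp hy with rfl | rfl | rfl
    · rw [update_self]; exact hvx.symm
    · rw [update_of_ne hvw.ne', hw]; exact hv.symm
    · rw [update_of_ne hxv]; exact hvx.symm
  · push Not at ho
    refine ⟨_, (hf.update_of_forall_ne ho).extend_of_forall_ne (k := 0) fun y hy => ?_⟩
    rcases (hNu y).mp hy with rfl | rfl | rfl
    · rwa [update_of_ne hvw.ne]
    · rwa [update_self]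
    · rwa [update_of_ne hxw]

theorem colorable3_of_triangle
    (hf : (G.deleteIncidenceSet u).IsDefectiveColoring ![3, 0, 0] f)
    (hNu : ∀ y, G.Adj u y ↔ y = v ∨ y = w ∨ y = x) (hNv : ∀ y, G.Adj v y ↔ y = u ∨ y = w ∨ y = v')
    (hv'w : v' ≠ w) (hdu : G.degree u = 3) (hdv : G.degree v = 3) (hdw : G.degree w ≤ 6)
    (hdx : G.degree x ≤ 5) : Colorable3 G ![3, 0, 0] := by
  have huv : G.Adj u v := (hNu v).mpr (by simp)
  by_cases hmissing : ∃ k ≠ 0, ∀ y, G.Adj u y → f y ≠ k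
  · obtain ⟨k, -, hk⟩ := hmissing
    exact ⟨_, hf.extend_of_forall_ne hk⟩
  push Not at hmissing
  have hcolor : ∀ k ≠ 0, f v = k ∨ f w = k ∨ f x = k := fun k hk => by
    obtain ⟨y, hy, rfl⟩ := hmissing k hk
    rcases (hNu y).mp hy with rfl | rfl | rfl <;> simp
  have h1 := hcolor 1 (by decide)
  have h2 := hcolor 2 (by decide)
  by_cases hx : f x = 0 ∧ (G.deleteIncidenceSet u).IsSaturated ![3, 0, 0] f x
  · exact colorable3_of_isSaturated_pendant hf hNu hdx hx.1 hx.2 (by omega) (by omega)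
  by_cases hw : f w = 0 ∧ (G.deleteIncidenceSet u).IsSaturated ![3, 0, 0] f w
  · exact colorable3_of_isSaturated_apex hf hNu hNv hv'w hdu hdv hdw hw.1 hw.2
      (by omega) (by omega) (by omega)
  refine ⟨_, hf.extend (k := 0) ((ncard_setOf_adj_and_le_degree u _).trans hdu.le)
    fun y hy hy0 => ?_⟩
  rcases (hNu y).mp hy with rfl | rfl | rfl
  · exact not_isSaturated_deleteIncidenceSet_of_degree_eq_three huv hdv hy0
  · exact fun h => hw ⟨hy0, h⟩
  · exact fun h => hx ⟨hy0, h⟩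

end Triangle

end SimpleGraph

open SimpleGraph

theorem MinCE.exists_isDefectiveColoring_of_lt {V : Type*} {G H : SimpleGraph V}
    {c : Fin 3 → ℕ} (hmin : MinCE G c) (hHG : H < G) : ∃ f, H.IsDefectiveColoring c f := by
  have hne : toSubgraph H hHG.le ≠ ⊤ := fun h =>
    hHG.ne ((congrArg Subgraph.spanningCoe h).trans Subgraph.spanningCoe_top)
  obtain ⟨f, hf⟩ := hmin.2 _ hne
  exact ⟨_, IsDefectiveColoring.comap
    (Subgraph.spanningCoeEquivCoeOfSpanning _ (toSubgraph.isSpanning H hHG.le)) hf⟩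

theorem MinCE.six_le_degree_of_pendant {V : Type*} [Fintype V] {G : SimpleGraph V}
    [DecidableRel G.Adj] (hmin : MinCE G ![3, 0, 0]) {u v w x : V} (huv : G.Adj u v)
    (hvw : G.Adj v w) (huw : G.Adj u w) (hdu : G.degree u = 3) (hdv : G.degree v = 3)
    (hdw : G.degree w ≤ 6) (hux : G.Adj u x) (hxv : x ≠ v) (hxw : x ≠ w) : 6 ≤ G.degree x := by
  classical
  by_contra! hdx
  obtain ⟨f, hf⟩ := hmin.exists_isDefectiveColoring_of_lt (deleteIncidenceSet_lt huv)
  obtain ⟨x', -, -, hNu⟩ := exists_adj_iff_of_degree_eq_three hdu huv huw hvw.ne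
  obtain rfl : x = x' := by simpa [hxv, hxw] using (hNu x).mp hux
  obtain ⟨v', -, hv'w, hNv⟩ := exists_adj_iff_of_degree_eq_three hdv huv.symm hvw huw.ne
  exact hmin.1 (colorable3_of_triangle hf hNu hNv hv'w hdu hdv hdw (by omega))

theorem stmt15_general {V : Type*} [Fintype V] (G : SimpleGraph V) [DecidableRel G.Adj]
    (hmin : MinCE G ![3, 0, 0]) :
    ∀ u v w : V, TriOn G u v w →
      G.degree u = 3 → G.degree v = 3 → G.degree w ≤ 6 →
      (∀ x : V, G.Adj u x → x ≠ v → x ≠ w → 6 ≤ G.degree x) ∧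
      (∀ x : V, G.Adj v x → x ≠ u → x ≠ w → 6 ≤ G.degree x) := by
  rintro u v w ⟨huv, hvw, huw⟩ hdu hdv hdw
  exact ⟨fun x hux hxv hxw => hmin.six_le_degree_of_pendant huv hvw huw hdu hdv hdw hux hxv hxw,
    fun x hvx hxu hxw => hmin.six_le_degree_of_pendant huv.symm huw hvw hdv hdu hdw hvx hxu hxw⟩

/-- For every triangle `u v w` of `G` with `d(u) = d(v) = 3` and `d(w) ≤ 6`, the
pendant neighbor of `u` and the pendant neighbor of `v` (their unique neighbors
outside the triangle) each have degree at least 6. -/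
theorem stmt15 {V : Type*} [Fintype V] (G : SimpleGraph V) [DecidableRel G.Adj]
    (hG : NoC45 G) (hmin : MinCE G ![3, 0, 0]) :
    ∀ u v w : V, TriOn G u v w →
      G.degree u = 3 → G.degree v = 3 → G.degree w ≤ 6 →
      (∀ x : V, G.Adj u x → x ≠ v → x ≠ w → 6 ≤ G.degree x) ∧
      (∀ x : V, G.Adj v x → x ≠ u → x ≠ w → 6 ≤ G.degree x) :=
  stmt15_general G hmin
end

section
/- No vertex v of G of degree k lies on ⌊k/2⌋ distinct poor triangles, i.e., ⌊k/2⌋ distinct triangles each of whose two vertices other than v are 3-vertices whose pendant neighbors have degree at most 5. -/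
/-- `T` is a poor triangle at `v`: a triangle containing `v` whose two other vertices
are 3-vertices whose pendant neighbors (unique neighbors outside the triangle) have
degree at most 5. -/
def PoorAt {V : Type*} [Fintype V] (G : SimpleGraph V) [DecidableRel G.Adj]
    (v : V) (T : Set V) : Prop :=
  ∃ a b : V, TriOn G v a b ∧ T = {v, a, b} ∧
    G.degree a = 3 ∧ G.degree b = 3 ∧
    (∀ x : V, G.Adj a x → x ≠ v → x ≠ b → G.degree x ≤ 5) ∧
    (∀ x : V, G.Adj b x → x ≠ v → x ≠ a → G.degree x ≤ 5)

open SimpleGraph Finset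

section

variable {V : Type*} {G : SimpleGraph V}

namespace NoC45

theorem false_of_cycle4 (hG : NoC45 G) {a b c d : V} (hab : G.Adj a b) (hbc : G.Adj b c)
    (hcd : G.Adj c d) (hda : G.Adj d a) (hac : a ≠ c) (hbd : b ≠ d) : False := by
  refine (hG a (.cons hab (.cons hbc (.cons hcd (.cons hda .nil)))) ?_).1 rfl
  simp [Walk.cons_isCycle_iff, Walk.cons_isPath_iff, hab.ne, hbc.ne, hcd.ne, hda.ne, hab.ne',
    hda.ne', hac, hbd, hac.symm]

theorem false_of_cycle5 (hG : NoC45 G) {a b c d e : V} (hab : G.Adj a b) (hbc : G.Adj b c)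
    (hcd : G.Adj c d) (hde : G.Adj d e) (hea : G.Adj e a)
    (hac : a ≠ c) (had : a ≠ d) (hbd : b ≠ d) (hbe : b ≠ e) (hce : c ≠ e) : False := by
  refine (hG a (.cons hab (.cons hbc (.cons hcd (.cons hde (.cons hea .nil))))) ?_).2 rfl
  simp [Walk.cons_isCycle_iff, Walk.cons_isPath_iff, hab.ne, hbc.ne, hcd.ne, hde.ne, hea.ne,
    hab.ne', hea.ne', hac, had, hbd, hbe, hce, hac.symm, had.symm]

theorem eq_of_adj_of_adj (hG : NoC45 G) {v r x y : V} (hrv : r ≠ v) (hx : G.Adj v x)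
    (hy : G.Adj v y) (hrx : G.Adj r x) (hry : G.Adj r y) : x = y := by
  by_contra hxy
  exact hG.false_of_cycle4 hx hrx.symm hry hy.symm hrv.symm hxy

end NoC45

theorem colorable3_of_forall_card_le [Fintype V] [DecidableRel G.Adj] {c : Fin 3 → ℕ}
    (g : V → Fin 3) (hg : ∀ u, #{y ∈ G.neighborFinset u | g y = g u} ≤ c (g u)) :
    Colorable3 G c := by
  refine ⟨g, fun u => ?_⟩
  convert hg u using 1
  rw [← Set.ncard_coe_finset]
  congr 1
  ext y
  simp

theorem exists_coloring_of_colorable3_deleteVerts [Fintype V] [DecidableRel G.Adj]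
    [DecidableEq V] {c : Fin 3 → ℕ} {v : V}
    (h : Colorable3 ((⊤ : G.Subgraph).deleteVerts {v}).coe c) :
    ∃ f : V → Fin 3, ∀ u, u ≠ v → #{y ∈ G.neighborFinset u | y ≠ v ∧ f y = f u} ≤ c (f u) := by
  obtain ⟨f₀, hf₀⟩ := h
  have hmem : ∀ {x}, x ≠ v → x ∈ ((⊤ : G.Subgraph).deleteVerts {v}).verts := by simp
  classical
  refine ⟨fun x => if hx : x = v then 0 else f₀ ⟨x, hmem hx⟩, fun u hu => ?_⟩
  convert hf₀ ⟨u, hmem hu⟩ using 1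
  · rw [← Set.ncard_coe_finset, ← Set.ncard_image_of_injective _ Subtype.val_injective]
    congr 1
    ext y
    by_cases hy : y = v <;> simp [hu, hy]
  · simp [hu]

section Overloaded

variable [Fintype V] [DecidableRel G.Adj]

theorem card_filter_adj_eq_zero_iff (g : V → Fin 3) (u : V) (c : Fin 3) :
    #{y ∈ G.neighborFinset u | g y = c} = 0 ↔ ∀ y, G.Adj u y → g y ≠ c := by
  simp [Finset.filter_eq_empty_iff]

variable (G) in
def Overloaded (g : V → Fin 3) (u : V) : Prop :=
  g u = 0 ∧ 3 < #{y ∈ G.neighborFinset u | g y = 0}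

theorem Overloaded.exists_ne_zero_forall_adj_ne {g : V → Fin 3} {u : V}
    (hu : Overloaded G g u) (hdeg : G.degree u ≤ 5) :
    ∃ c : Fin 3, c ≠ 0 ∧ ∀ y, G.Adj u y → g y ≠ c := by
  have hcard : #{y ∈ G.neighborFinset u | ¬ g y = 0} ≤ 1 := by
    have := card_filter_add_card_filter_not (s := G.neighborFinset u) (fun y => g y = 0)
    rw [card_neighborFinset_eq_degree] at this
    have := hu.2
    omega
  by_contra! h
  obtain ⟨y₁, h₁, hy₁⟩ := h 1 (by decide)
  obtain ⟨y₂, h₂, hy₂⟩ := h 2 (by decide)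
  have := card_le_one.1 hcard y₁ (by simp [h₁, hy₁]) y₂ (by simp [h₂, hy₂])
  subst this
  exact absurd (hy₁.symm.trans hy₂) (by decide)

theorem colorable3_of_overloaded_independent (g : V → Fin 3)
    (hproper : ∀ u y, G.Adj u y → g u ≠ 0 → g y ≠ g u)
    (hover : ∀ u, Overloaded G g u → G.degree u ≤ 5 ∧ ∀ y, G.Adj u y → ¬ Overloaded G g y) :
    Colorable3 G ![3, 0, 0] := by
  classical
  choose! c hc0 hc using fun u (hu : Overloaded G g u) =>
    hu.exists_ne_zero_forall_adj_ne (hover u hu).1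
  let g' u := if Overloaded G g u then c u else g u
  refine colorable3_of_forall_card_le g' fun u => ?_
  by_cases hu : Overloaded G g u
  · suffices #{y ∈ G.neighborFinset u | g' y = g' u} = 0 by simp [this]
    refine (card_filter_adj_eq_zero_iff _ _ _).2 fun y hy => ?_
    simpa [g', hu, (hover u hu).2 y hy] using hc u hu y hy
  by_cases h0 : g u = 0
  · have hle : #{y ∈ G.neighborFinset u | g' y = 0} ≤ #{y ∈ G.neighborFinset u | g y = 0} := by
      refine card_le_card fun y => ?_
      by_cases hy : Overloaded G g y <;> simp [g', hy, hc0]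
    have h3 : #{y ∈ G.neighborFinset u | g y = 0} ≤ 3 := not_lt.1 fun h => hu ⟨h0, h⟩
    simpa [g', hu, h0] using hle.trans h3
  · have : #{y ∈ G.neighborFinset u | g' y = g' u} = 0 := by
      refine (card_filter_adj_eq_zero_iff _ _ _).2 fun y hy => ?_
      by_cases hy' : Overloaded G g y
      · simpa [g', hu, hy'] using (hc y hy' u hy.symm).symm
      · simpa [g', hu, hy'] using hproper u y hy h0
    simp [this]

end Overloaded

theorem Set.Subsingleton.exists_nonzero_colors {s : Set V} (hs : s.Subsingleton) (f : V → Fin 3) :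
    ∃ cv cb : Fin 3, cv ≠ 0 ∧ cb ≠ 0 ∧ cv ≠ cb ∧ ∀ w ∈ s, f w ≠ cv := by
  have key : ∀ c : Fin 3, ∃ cv cb : Fin 3, cv ≠ 0 ∧ cb ≠ 0 ∧ cv ≠ cb ∧ c ≠ cv := by decide
  rcases hs.eq_empty_or_singleton with rfl | ⟨w, rfl⟩
  · exact ⟨1, 2, by decide, by decide, by decide, by simp⟩
  · simpa using key (f w)

theorem exists_adj_iff_of_degree_eq_three [Fintype V] [DecidableRel G.Adj] {x y z : V}
    (hx : G.degree x = 3) (hy : G.Adj x y) (hz : G.Adj x z) (hyz : y ≠ z) :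
    ∃ w, w ≠ y ∧ w ≠ z ∧ ∀ t, G.Adj x t ↔ t = y ∨ t = z ∨ t = w := by
  classical
  have hsub : {y, z} ⊆ G.neighborFinset x := by simp [insert_subset_iff, hy, hz]
  have hone : #(G.neighborFinset x \ {y, z}) = 1 := by
    rw [card_sdiff_of_subset hsub, card_neighborFinset_eq_degree, hx, card_pair_eq_two_iff.2 hyz]
  obtain ⟨w, hw⟩ := card_eq_one.1 hone
  have hw' : w ∈ G.neighborFinset x \ {y, z} := hw ▸ mem_singleton_self w
  simp only [mem_sdiff, mem_insert, mem_singleton, not_or] at hw'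
  refine ⟨w, hw'.2.1, hw'.2.2, fun t => ?_⟩
  rw [← mem_neighborFinset, ← union_sdiff_of_subset hsub, mem_union, hw]
  simp [or_assoc]

variable (G) in
/-- Triangles `v, a i, b i` whose vertices `a i`, `b i` have exactly one further neighbour,
`p i` and `q i` respectively. -/
structure PoorFan [Fintype V] [DecidableRel G.Adj] (v : V) (ι : Type*) where
  a : ι → V
  b : ι → V
  p : ι → V
  q : ι → V
  adj_a_iff : ∀ i x, G.Adj (a i) x ↔ x = v ∨ x = b i ∨ x = p i
  adj_b_iff : ∀ i x, G.Adj (b i) x ↔ x = v ∨ x = a i ∨ x = q i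
  p_ne_v : ∀ i, p i ≠ v
  p_ne_b : ∀ i, p i ≠ b i
  q_ne_v : ∀ i, q i ≠ v
  q_ne_a : ∀ i, q i ≠ a i
  degree_q_le : ∀ i, G.degree (q i) ≤ 5
  injective : Function.Injective fun i => ({v, a i, b i} : Set V)

theorem nonempty_poorFan [Fintype V] [DecidableRel G.Adj] {v : V} {S : Finset (Set V)}
    (hS : ∀ T ∈ S, PoorAt G v T) : Nonempty (PoorFan G v S) := by
  have : ∀ T : S, ∃ a b p q : V, T.1 = {v, a, b} ∧
      (∀ x, G.Adj a x ↔ x = v ∨ x = b ∨ x = p) ∧ (∀ x, G.Adj b x ↔ x = v ∨ x = a ∨ x = q) ∧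
      p ≠ v ∧ p ≠ b ∧ q ≠ v ∧ q ≠ a ∧ G.degree q ≤ 5 := by
    rintro ⟨T, hT⟩
    obtain ⟨a, b, ⟨hva, hab, hvb⟩, rfl, hda, hdb, -, hq5⟩ := hS T hT
    obtain ⟨p, hpv, hpb, hp⟩ := exists_adj_iff_of_degree_eq_three hda hva.symm hab hvb.ne
    obtain ⟨q, hqv, hqa, hq⟩ := exists_adj_iff_of_degree_eq_three hdb hvb.symm hab.symm hva.ne
    exact ⟨a, b, p, q, rfl, hp, hq, hpv, hpb, hqv, hqa,
      hq5 q ((hq q).2 (by simp)) hqv hqa⟩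
  choose a b p q hT hp hq hpv hpb hqv hqa hq5 using this
  exact ⟨⟨a, b, p, q, hp, hq, hpv, hpb, hqv, hqa, hq5, fun i j h => Subtype.ext <| by
    simpa only [← hT] using h⟩⟩

namespace PoorFan

variable [Fintype V] [DecidableRel G.Adj] {v : V} {ι : Type*} (F : PoorFan G v ι)
  {f : V → Fin 3} {cv cb : Fin 3}

theorem adj_a (i : ι) : G.Adj v (F.a i) := ((F.adj_a_iff i v).2 (Or.inl rfl)).symm

theorem adj_b (i : ι) : G.Adj v (F.b i) := ((F.adj_b_iff i v).2 (Or.inl rfl)).symm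

theorem adj_a_b (i : ι) : G.Adj (F.a i) (F.b i) := (F.adj_a_iff i _).2 (by simp)

theorem adj_a_p (i : ι) : G.Adj (F.a i) (F.p i) := (F.adj_a_iff i _).2 (by simp)

theorem adj_b_q (i : ι) : G.Adj (F.b i) (F.q i) := (F.adj_b_iff i _).2 (by simp)

theorem a_injective (hG : NoC45 G) : Function.Injective F.a := fun i j h => by
  have hb : F.b i = F.b j :=
    hG.eq_of_adj_of_adj (F.adj_a i).ne' (F.adj_b i) (F.adj_b j) (F.adj_a_b i)
      (h ▸ F.adj_a_b j)
  exact F.injective (by simp only [h, hb])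

theorem b_injective (hG : NoC45 G) : Function.Injective F.b := fun i j h => by
  have ha : F.a i = F.a j :=
    hG.eq_of_adj_of_adj (F.adj_b i).ne' (F.adj_a i) (F.adj_a j) (F.adj_a_b i).symm
      (h ▸ (F.adj_a_b j).symm)
  exact F.injective (by simp only [h, ha])

theorem a_ne_b (hG : NoC45 G) (i j : ι) : F.a i ≠ F.b j := fun h => by
  have hba : F.b i = F.a j :=
    hG.eq_of_adj_of_adj (F.adj_a i).ne' (F.adj_b i) (F.adj_a j) (F.adj_a_b i)
      (h ▸ (F.adj_a_b j).symm)
  have hij : i = j := F.injective (by simp only [h, hba, Set.pair_comm])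
  exact (F.adj_a_b i).ne (hij ▸ h)

theorem not_adj_p (hG : NoC45 G) (i : ι) : ¬ G.Adj v (F.p i) := fun h =>
  (F.adj_a i).ne (hG.eq_of_adj_of_adj (F.p_ne_b i) (F.adj_a_b i).symm (F.adj_b i).symm
    (F.adj_a_p i).symm h.symm).symm

theorem not_adj_q (hG : NoC45 G) (i : ι) : ¬ G.Adj v (F.q i) := fun h =>
  (F.adj_b i).ne (hG.eq_of_adj_of_adj (F.q_ne_a i) (F.adj_a_b i) (F.adj_a i).symm
    (F.adj_b_q i).symm h.symm).symm

theorem not_adj_q_q (hG : NoC45 G) (i j : ι) : ¬ G.Adj (F.q i) (F.q j) := fun h => by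
  have hij : i ≠ j := by rintro rfl; exact h.ne rfl
  have hqb : ∀ k l, F.q k ≠ F.b l := fun k l e => F.not_adj_q hG k (e ▸ F.adj_b l)
  exact hG.false_of_cycle5 (F.adj_b i) (F.adj_b_q i) h (F.adj_b_q j).symm (F.adj_b j).symm
    (F.q_ne_v i).symm (F.q_ne_v j).symm (hqb j i).symm ((F.b_injective hG).ne hij) (hqb i j)

def verts : Set V := Set.range F.a ∪ Set.range F.b

theorem adj_of_mem_verts {x : V} (hx : x ∈ F.verts) : G.Adj v x := by
  rcases hx with ⟨i, rfl⟩ | ⟨i, rfl⟩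
  exacts [F.adj_a i, F.adj_b i]

theorem p_notMem_verts (hG : NoC45 G) (i : ι) : F.p i ∉ F.verts :=
  fun h => F.not_adj_p hG i (F.adj_of_mem_verts h)

theorem q_notMem_verts (hG : NoC45 G) (i : ι) : F.q i ∉ F.verts :=
  fun h => F.not_adj_q hG i (F.adj_of_mem_verts h)

theorem eq_p_of_adj_a {i : ι} {u : V} (h : G.Adj (F.a i) u) (hv : u ≠ v)
    (hu : u ∉ F.verts) : u = F.p i := by
  rcases (F.adj_a_iff i u).1 h with h | rfl | h
  exacts [absurd h hv, absurd (Or.inr ⟨i, rfl⟩) hu, h]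

theorem eq_q_of_adj_b {i : ι} {u : V} (h : G.Adj (F.b i) u) (hv : u ≠ v)
    (hu : u ∉ F.verts) : u = F.q i := by
  rcases (F.adj_b_iff i u).1 h with h | rfl | h
  exacts [absurd h hv, absurd (Or.inl ⟨i, rfl⟩) hu, h]

theorem subsingleton_adj_notMem_verts [Fintype ι] (hG : NoC45 G)
    (hdeg : G.degree v ≤ 2 * Fintype.card ι + 1) :
    {w | G.Adj v w ∧ w ∉ F.verts}.Subsingleton := by
  classical
  set X := univ.image F.a ∪ univ.image F.b
  have hX : #X = 2 * Fintype.card ι := by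
    rw [card_union_of_disjoint, card_image_of_injective _ (F.a_injective hG),
      card_image_of_injective _ (F.b_injective hG), card_univ, two_mul]
    simpa [Finset.disjoint_left, eq_comm] using F.a_ne_b hG
  have hsub : X ⊆ G.neighborFinset v := by
    simp [X, union_subset_iff, image_subset_iff, F.adj_a, F.adj_b]
  have hone : #(G.neighborFinset v \ X) ≤ 1 := by
    rw [card_sdiff_of_subset hsub, card_neighborFinset_eq_degree]
    omega
  refine (card_le_one_iff_subsingleton.1 hone).anti fun w ⟨hw, hwX⟩ => ?_
  simpa [X, verts, hw, eq_comm] using hwX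

theorem degree_le_three_of_mem_verts {x : V} (hx : x ∈ F.verts) : G.degree x ≤ 3 := by
  classical
  rw [← card_neighborFinset_eq_degree]
  rcases hx with ⟨i, rfl⟩ | ⟨i, rfl⟩
  · exact (card_le_card fun y hy => by simpa [F.adj_a_iff] using hy).trans card_le_three
  · exact (card_le_card fun y hy => by simpa [F.adj_b_iff] using hy).trans card_le_three

open Classical in
noncomputable def recolor (f : V → Fin 3) (cv cb : Fin 3) (x : V) : Fin 3 :=
  if x = v then cv
  else if ∃ i, (x = F.a i ∧ f (F.p i) ≠ cb) ∨ (x = F.b i ∧ f (F.p i) = cb ∧ f (F.q i) ≠ cb)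
    then cb
  else if x ∈ F.verts then 0
  else f x

theorem recolor_self : F.recolor f cv cb v = cv := if_pos rfl

theorem recolor_of_notMem {x : V} (hv : x ≠ v) (hx : x ∉ F.verts) :
    F.recolor f cv cb x = f x := by
  have : ¬ ∃ i, (x = F.a i ∧ f (F.p i) ≠ cb) ∨ (x = F.b i ∧ f (F.p i) = cb ∧ f (F.q i) ≠ cb) := by
    rintro ⟨i, ⟨rfl, -⟩ | ⟨rfl, -⟩⟩
    exacts [hx (Or.inl ⟨i, rfl⟩), hx (Or.inr ⟨i, rfl⟩)]
  simp [recolor, hv, hx, this]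

theorem recolor_a (hG : NoC45 G) (i : ι) :
    F.recolor f cv cb (F.a i) = if f (F.p i) ≠ cb then cb else 0 := by
  simp [recolor, (F.adj_a i).ne', (F.a_injective hG).eq_iff, F.a_ne_b hG, verts]

theorem recolor_b (hG : NoC45 G) (i : ι) :
    F.recolor f cv cb (F.b i) = if f (F.p i) = cb ∧ f (F.q i) ≠ cb then cb else 0 := by
  simp [recolor, (F.adj_b i).ne', (F.b_injective hG).eq_iff, fun j => (F.a_ne_b hG j i).symm, verts]

theorem recolor_adj_self_ne (hG : NoC45 G) (hcv : cv ≠ 0) (hcvcb : cv ≠ cb)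
    (hE : ∀ w, G.Adj v w → w ∉ F.verts → f w ≠ cv) {y : V} (hy : G.Adj v y) :
    F.recolor f cv cb y ≠ cv := by
  by_cases hy' : y ∈ F.verts
  · rcases hy' with ⟨i, rfl⟩ | ⟨i, rfl⟩
    · rw [F.recolor_a hG]; split_ifs; exacts [hcvcb.symm, hcv.symm]
    · rw [F.recolor_b hG]; split_ifs; exacts [hcvcb.symm, hcv.symm]
  · rw [F.recolor_of_notMem hy.ne' hy']
    exact hE y hy hy'

theorem recolor_adj_a_ne (hG : NoC45 G) (hcb : cb ≠ 0) (hcvcb : cv ≠ cb) {i : ι} {y : V}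
    (hy : G.Adj (F.a i) y) (h : F.recolor f cv cb (F.a i) ≠ 0) :
    F.recolor f cv cb y ≠ F.recolor f cv cb (F.a i) := by
  rw [F.recolor_a hG] at h ⊢
  have hp : f (F.p i) ≠ cb := fun hp => h (if_neg (not_not.2 hp))
  rw [if_pos hp]
  rcases (F.adj_a_iff i y).1 hy with rfl | rfl | rfl
  · rwa [recolor_self]
  · rw [F.recolor_b hG, if_neg fun h => hp h.1]
    exact hcb.symm
  · rwa [F.recolor_of_notMem (F.p_ne_v i) (F.p_notMem_verts hG i)]

theorem recolor_adj_b_ne (hG : NoC45 G) (hcb : cb ≠ 0) (hcvcb : cv ≠ cb) {i : ι} {y : V}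
    (hy : G.Adj (F.b i) y) (h : F.recolor f cv cb (F.b i) ≠ 0) :
    F.recolor f cv cb y ≠ F.recolor f cv cb (F.b i) := by
  rw [F.recolor_b hG] at h ⊢
  have hpq : f (F.p i) = cb ∧ f (F.q i) ≠ cb := by_contra fun hpq => h (if_neg hpq)
  rw [if_pos hpq]
  rcases (F.adj_b_iff i y).1 hy with rfl | rfl | rfl
  · rwa [recolor_self]
  · rw [F.recolor_a hG, if_neg (not_not.2 hpq.1)]
    exact hcb.symm
  · rw [F.recolor_of_notMem (F.q_ne_v i) (F.q_notMem_verts hG i)]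
    exact hpq.2

theorem recolor_adj_ne_of_notMem (hG : NoC45 G)
    (hE : ∀ w, G.Adj v w → w ∉ F.verts → f w ≠ cv)
    (hf : ∀ u y, u ≠ v → y ≠ v → G.Adj u y → f u ≠ 0 → f y ≠ f u)
    {u y : V} (hv : u ≠ v) (hu : u ∉ F.verts) (hy : G.Adj u y) (h : f u ≠ 0) :
    F.recolor f cv cb y ≠ f u := by
  by_cases hyv : y = v
  · subst hyv
    rw [recolor_self]
    exact (hE u hy.symm hu).symm
  by_cases hy' : y ∈ F.verts
  · rcases hy' with ⟨i, rfl⟩ | ⟨i, rfl⟩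
    · rw [F.eq_p_of_adj_a hy.symm hv hu, F.recolor_a hG]
      split_ifs with hp
      exacts [Ne.symm hp, (F.eq_p_of_adj_a hy.symm hv hu ▸ h).symm]
    · rw [F.eq_q_of_adj_b hy.symm hv hu, F.recolor_b hG]
      split_ifs with hpq
      exacts [Ne.symm hpq.2, (F.eq_q_of_adj_b hy.symm hv hu ▸ h).symm]
  · rw [F.recolor_of_notMem hyv hy']
    exact hf u y hv hyv hy h

theorem recolor_adj_ne (hG : NoC45 G) (hcv : cv ≠ 0) (hcb : cb ≠ 0) (hcvcb : cv ≠ cb)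
    (hE : ∀ w, G.Adj v w → w ∉ F.verts → f w ≠ cv)
    (hf : ∀ u y, u ≠ v → y ≠ v → G.Adj u y → f u ≠ 0 → f y ≠ f u)
    {u y : V} (hy : G.Adj u y) (h : F.recolor f cv cb u ≠ 0) :
    F.recolor f cv cb y ≠ F.recolor f cv cb u := by
  by_cases hv : u = v
  · subst hv
    rw [recolor_self]
    exact F.recolor_adj_self_ne hG hcv hcvcb hE hy
  by_cases hu : u ∈ F.verts
  · rcases hu with ⟨i, rfl⟩ | ⟨i, rfl⟩
    exacts [F.recolor_adj_a_ne hG hcb hcvcb hy h, F.recolor_adj_b_ne hG hcb hcvcb hy h]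
  · rw [F.recolor_of_notMem hv hu] at h ⊢
    exact F.recolor_adj_ne_of_notMem hG hE hf hv hu hy h

theorem eq_q_of_overloaded [DecidableEq V] (hG : NoC45 G) (hcv : cv ≠ 0) (hcb : cb ≠ 0)
    (hf : ∀ u, u ≠ v → f u = 0 → #{y ∈ G.neighborFinset u | y ≠ v ∧ f y = 0} ≤ 3)
    {u : V} (h : Overloaded G (F.recolor f cv cb) u) : ∃ i, u = F.q i := by
  obtain ⟨h0, hcard⟩ := h
  have hv : u ≠ v := by rintro rfl; rw [recolor_self] at h0; exact hcv h0
  have hu : u ∉ F.verts := fun hu =>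
    (hcard.trans_le ((card_filter_le _ _).trans_eq (card_neighborFinset_eq_degree G u))).not_ge
      (F.degree_le_three_of_mem_verts hu)
  rw [F.recolor_of_notMem hv hu] at h0
  by_contra! hq
  refine absurd (hf u hv h0) (hcard.trans_le (card_le_card fun y => ?_)).not_ge
  simp only [mem_filter, mem_neighborFinset, and_imp]
  intro hy hgy
  have hyv : y ≠ v := by rintro rfl; rw [recolor_self] at hgy; exact hcv hgy
  by_cases hy' : y ∈ F.verts
  · rcases hy' with ⟨i, rfl⟩ | ⟨i, rfl⟩
    · rw [F.recolor_a hG] at hgy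
      rw [F.eq_p_of_adj_a hy.symm hv hu] at h0
      split_ifs at hgy with hp
      exacts [absurd hgy hcb, absurd h0 (not_not.1 hp ▸ hcb)]
    · exact absurd (F.eq_q_of_adj_b hy.symm hv hu) (hq i)
  · rw [F.recolor_of_notMem hyv hy'] at hgy
    exact ⟨hy, hyv, hgy⟩

theorem colorable3 [DecidableEq V] (hG : NoC45 G) (hcv : cv ≠ 0) (hcb : cb ≠ 0) (hcvcb : cv ≠ cb)
    (hE : ∀ w, G.Adj v w → w ∉ F.verts → f w ≠ cv)
    (hf : ∀ u, u ≠ v → #{y ∈ G.neighborFinset u | y ≠ v ∧ f y = f u} ≤ ![3, 0, 0] (f u)) :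
    Colorable3 G ![3, 0, 0] := by
  have hf₀ : ∀ u, u ≠ v → f u = 0 → #{y ∈ G.neighborFinset u | y ≠ v ∧ f y = 0} ≤ 3 :=
    fun u hu h0 => by simpa [h0] using hf u hu
  have hf₁ : ∀ u y, u ≠ v → y ≠ v → G.Adj u y → f u ≠ 0 → f y ≠ f u := by
    intro u y hu hy huy h0 hyu
    have : ![3, 0, 0] (f u) = 0 := by generalize f u = c at h0; fin_cases c <;> simp_all
    have := (hf u hu).trans_eq this
    rw [Nat.le_zero, card_eq_zero, filter_eq_empty_iff] at this
    exact this (by simpa using huy) ⟨hy, hyu⟩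
  refine colorable3_of_overloaded_independent _
    (fun u y hy h => F.recolor_adj_ne hG hcv hcb hcvcb hE hf₁ hy h) fun u hu => ?_
  obtain ⟨i, rfl⟩ := F.eq_q_of_overloaded hG hcv hcb hf₀ hu
  refine ⟨F.degree_q_le i, fun y hy hy' => ?_⟩
  obtain ⟨j, rfl⟩ := F.eq_q_of_overloaded hG hcv hcb hf₀ hy'
  exact F.not_adj_q_q hG i j hy

end PoorFan

end

/-- No vertex `v` of `G` of degree `k` lies on `⌊k/2⌋` distinct poor triangles. -/
theorem stmt16 {V : Type*} [Fintype V] (G : SimpleGraph V) [DecidableRel G.Adj]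
    (hG : NoC45 G) (hmin : MinCE G ![3, 0, 0]) :
    ¬ ∃ (v : V) (S : Finset (Set V)),
      (∀ T ∈ S, PoorAt G v T) ∧ S.card = G.degree v / 2 := by
  classical
  rintro ⟨v, S, hS, hcard⟩
  obtain ⟨F⟩ := nonempty_poorFan hS
  have hext := F.subsingleton_adj_notMem_verts hG (by rw [Fintype.card_coe, hcard]; omega)
  have hne : (⊤ : G.Subgraph).deleteVerts {v} ≠ ⊤ := fun h => by
    simpa using congrArg (v ∈ ·.verts) h
  obtain ⟨f, hf⟩ := exists_coloring_of_colorable3_deleteVerts (hmin.2 _ hne)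
  obtain ⟨cv, cb, hcv, hcb, hcvcb, hE⟩ := hext.exists_nonzero_colors f
  exact hmin.1 (F.colorable3 hG hcv hcb hcvcb (fun w hw hw' => hE w ⟨hw, hw'⟩) hf)
end
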